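/- arXiv:2009.07422 — 5 statements merged into one kernel-verified Lean document; each statement's English description precedes it below -/
import Mathlib

section
/- Let m ≥ 1 be an odd integer, a = m²+1, k ≥ 1 an integer, and q = 2ak+m an odd prime power; set n = (q²+1)/a and s = (n−1)/2. Fix an integer α with 1 ≤ α ≤ k. Define T₁ ⊆ Z/nZ as the union of the cyclotomic cosets C_{uq+v} over all odd integers t with −m ≤ t ≤ (2m−1)m, where the integer h attached to t is: h = 1 if −m ≤ t ≤ −1, and h = j+1 if (2j−2)m+1 ≤ t ≤ min(2jm−1, (2m−1)m) for j = 1, ..., m; over all integers v with s+(m+t)k+h+α ≤ v ≤ s+(m+t+2)k+(h−1)−α; and over all integers u with 0 ≤ u ≤ α if v ≤ s+mk, and 0 ≤ u ≤ α−1 otherwise. Then T₁ ∩ (−qT₁) = ∅. -/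
set_option maxHeartbeats 1000000 in
lemma qmds_core2 (m k α H δ r u H' δ' r' u' X Y : ℤ)
    (hm : 1 ≤ m) (hmo : m % 2 = 1) (hk : 1 ≤ k) (hα : 1 ≤ α)
    (hH0 : 0 ≤ H) (hHm : H ≤ m)
    (hδe : δ % 2 = 0) (hδl : 1 - m ≤ δ) (hδu : δ ≤ m - 1)
    (hr1 : α ≤ r) (hr2 : r ≤ 2*k - 1 - α)
    (hu0 : 0 ≤ u) (huα : u ≤ α)
    (hcap : m*k < (2*k*m+1)*H + δ*k + r + 1 → u ≤ α - 1)
    (hH0' : 0 ≤ H') (hHm' : H' ≤ m)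
    (hδe' : δ' % 2 = 0) (hδl' : 1 - m ≤ δ') (hδu' : δ' ≤ m - 1)
    (hr1' : α ≤ r') (hr2' : r' ≤ 2*k - 1 - α)
    (hu0' : 0 ≤ u') (huα' : u' ≤ α)
    (hXo : X % 2 = 1) (hYo : Y % 2 = 1)
    (eqI : (2*k*m+1)*X - 2*k*Y = 2*k*(δ + 2*H') + 2*r - 2*u' + 1)
    (eqII : (2*k*m+1)*Y + 2*k*X = 2*k*(δ' - 2*H) + 2*r' + 2*u + 1) :
    False := by
  have hk2 : 2 ≤ k := by omega
  have hk0 : (0:ℤ) ≤ 2*k := by linarith only [hk]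
  have hkm1 : (1:ℤ) ≤ k*m := by
    have h1 := mul_le_mul_of_nonneg_left hm (by linarith only [hk] : (0:ℤ) ≤ k)
    linarith only [h1, hk]
  have hk2sq : (1:ℤ) ≤ k*k := by
    have h1 := mul_le_mul_of_nonneg_left hk (by linarith only [hk] : (0:ℤ) ≤ k)
    linarith only [h1, hk]
  have hwpos : (0:ℤ) < 2*k*m + 1 := by linarith only [hkm1]
  have p1 : 2*k*δ ≤ 2*k*(m-1) := mul_le_mul_of_nonneg_left hδu hk0
  have p2 : 2*k*(1-m) ≤ 2*k*δ := mul_le_mul_of_nonneg_left hδl hk0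
  have p3 : 2*k*H' ≤ 2*k*m := mul_le_mul_of_nonneg_left hHm' hk0
  have p4 : (0:ℤ) ≤ 2*k*H' := mul_nonneg hk0 hH0'
  have p5 : 2*k*δ' ≤ 2*k*(m-1) := mul_le_mul_of_nonneg_left hδu' hk0
  have p6 : 2*k*(1-m) ≤ 2*k*δ' := mul_le_mul_of_nonneg_left hδl' hk0
  have p7 : 2*k*H ≤ 2*k*m := mul_le_mul_of_nonneg_left hHm hk0
  have p8 : (0:ℤ) ≤ 2*k*H := mul_nonneg hk0 hH0
  have hEu : 2*k*(δ + 2*H') + 2*r - 2*u' + 1 ≤ 6*k*m + 2*k - 3 := by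
    linarith only [p1, p3, hr2, hu0', hα]
  have hEl : 2*k - 2*k*m + 1 ≤ 2*k*(δ + 2*H') + 2*r - 2*u' + 1 := by
    linarith only [p2, p4, hr1, huα']
  have hE'u : 2*k*(δ' - 2*H) + 2*r' + 2*u + 1 ≤ 2*k*m + 2*k - 1 := by
    linarith only [p5, p8, hr2', huα]
  have hE'l : 2*k - 6*k*m + 3 ≤ 2*k*(δ' - 2*H) + 2*r' + 2*u + 1 := by
    linarith only [p6, p7, hr1', hu0, hα]
  have key1 : ((2*k*m+1)^2 + 4*k^2) * X
      = (2*k*m+1)*((2*k*m+1)*X - 2*k*Y) + 2*k*((2*k*m+1)*Y + 2*k*X) := by ring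
  have key2 : ((2*k*m+1)^2 + 4*k^2) * Y
      = (2*k*m+1)*((2*k*m+1)*Y + 2*k*X) - 2*k*((2*k*m+1)*X - 2*k*Y) := by ring
  rw [eqI, eqII] at key1 key2
  have hnpos : (0:ℤ) < (2*k*m+1)^2 + 4*k^2 := by
    have := sq_nonneg (2*k*m+1)
    linarith only [this, hk2sq]
  have hXle : X ≤ 3 := by
    by_contra hc
    push_neg at hc
    have h4 : ((2*k*m+1)^2 + 4*k^2) * 4 ≤ ((2*k*m+1)^2 + 4*k^2) * X :=
      mul_le_mul_of_nonneg_left (by linarith only [hc]) (by linarith only [hnpos])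
    have t1 : (2*k*m+1)*(2*k*(δ + 2*H') + 2*r - 2*u' + 1) ≤ (2*k*m+1)*(6*k*m + 2*k - 3) :=
      mul_le_mul_of_nonneg_left hEu (by linarith only [hwpos])
    have t2 : 2*k*(2*k*(δ' - 2*H) + 2*r' + 2*u + 1) ≤ 2*k*(2*k*m + 2*k - 1) :=
      mul_le_mul_of_nonneg_left hE'u hk0
    linarith only [key1, h4, t1, t2, sq_nonneg (k*(m-1)), hkm1, hk2sq]
  have hXge : -1 ≤ X := by
    by_contra hc
    push_neg at hc
    have h4 : ((2*k*m+1)^2 + 4*k^2) * X ≤ ((2*k*m+1)^2 + 4*k^2) * (-2) :=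
      mul_le_mul_of_nonneg_left (by linarith only [hc]) (by linarith only [hnpos])
    have t1 : (2*k*m+1)*(2*k - 2*k*m + 1) ≤ (2*k*m+1)*(2*k*(δ + 2*H') + 2*r - 2*u' + 1) :=
      mul_le_mul_of_nonneg_left hEl (by linarith only [hwpos])
    have t2 : 2*k*(2*k - 6*k*m + 3) ≤ 2*k*(2*k*(δ' - 2*H) + 2*r' + 2*u + 1) :=
      mul_le_mul_of_nonneg_left hE'l hk0
    linarith only [key1, h4, t1, t2, sq_nonneg (k*(m-1)), hkm1, hk2sq, hk]
  have hYle : Y ≤ 1 := by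
    by_contra hc
    push_neg at hc
    have h4 : ((2*k*m+1)^2 + 4*k^2) * 2 ≤ ((2*k*m+1)^2 + 4*k^2) * Y :=
      mul_le_mul_of_nonneg_left (by linarith only [hc]) (by linarith only [hnpos])
    have t1 : (2*k*m+1)*(2*k*(δ' - 2*H) + 2*r' + 2*u + 1) ≤ (2*k*m+1)*(2*k*m + 2*k - 1) :=
      mul_le_mul_of_nonneg_left hE'u (by linarith only [hwpos])
    have t2 : 2*k*(2*k - 2*k*m + 1) ≤ 2*k*(2*k*(δ + 2*H') + 2*r - 2*u' + 1) :=
      mul_le_mul_of_nonneg_left hEl hk0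
    linarith only [key2, h4, t1, t2, sq_nonneg (k*(m-1)), hkm1, hk2sq]
  have hYge : -3 ≤ Y := by
    by_contra hc
    push_neg at hc
    have h4 : ((2*k*m+1)^2 + 4*k^2) * Y ≤ ((2*k*m+1)^2 + 4*k^2) * (-4) :=
      mul_le_mul_of_nonneg_left (by linarith only [hc]) (by linarith only [hnpos])
    have t1 : (2*k*m+1)*(2*k - 6*k*m + 3) ≤ (2*k*m+1)*(2*k*(δ' - 2*H) + 2*r' + 2*u + 1) :=
      mul_le_mul_of_nonneg_left hE'l (by linarith only [hwpos])
    have t2 : 2*k*(2*k*(δ + 2*H') + 2*r - 2*u' + 1) ≤ 2*k*(6*k*m + 2*k - 3) :=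
      mul_le_mul_of_nonneg_left hEu hk0
    linarith only [key2, h4, t1, t2, sq_nonneg (k*(m-1)), hkm1, hk2sq, hk]
  -- T analysis (equation I)
  obtain ⟨T, hTd⟩ : ∃ T, T = m*X - Y - δ - 2*H' := ⟨_, rfl⟩
  have hT : 2*r - 2*u' + 1 = X + 2*k*T := by rw [hTd]; linear_combination -eqI
  have hTpar : T % 2 = 0 := by
    obtain ⟨mo, hmo2⟩ : ∃ mo, m = 2*mo + 1 := ⟨(m-1)/2, by omega⟩
    obtain ⟨P, hP⟩ : ∃ P, T = X - Y - δ + 2*P := ⟨mo*X - H', by rw [hTd, hmo2]; ring⟩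
    omega
  have hTge : 0 ≤ T := by
    by_contra hc
    push_neg at hc
    have hmul : 2*k*T ≤ 2*k*(-1) := mul_le_mul_of_nonneg_left (by omega) hk0
    linarith only [hmul, hT, hr1, huα', hXle, hk2]
  have hTle : T ≤ 1 := by
    by_contra hc
    push_neg at hc
    have hmul : 2*k*2 ≤ 2*k*T := mul_le_mul_of_nonneg_left (by omega) hk0
    linarith only [hmul, hT, hr2, hu0', hXge, hα]
  have hT0 : T = 0 := by omega
  have hδH' : δ + 2*H' = m*X - Y := by rw [hT0] at hTd; linarith only [hTd]
  have hXval : 2*r - 2*u' + 1 = X := by rw [hT0] at hT; linarith only [hT]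
  -- T' analysis (equation II)
  obtain ⟨T', hT'd⟩ : ∃ T', T' = m*Y + X - δ' + 2*H := ⟨_, rfl⟩
  have hT' : 2*r' + 2*u + 1 = Y + 2*k*T' := by rw [hT'd]; linear_combination -eqII
  have hT'par : T' % 2 = 0 := by
    obtain ⟨mo, hmo2⟩ : ∃ mo, m = 2*mo + 1 := ⟨(m-1)/2, by omega⟩
    obtain ⟨P, hP⟩ : ∃ P, T' = Y + X - δ' + 2*P := ⟨mo*Y + H, by rw [hT'd, hmo2]; ring⟩
    omega
  have hT'ge : 1 ≤ T' := by
    by_contra hc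
    push_neg at hc
    have hmul : 2*k*T' ≤ 2*k*0 := mul_le_mul_of_nonneg_left (by omega) hk0
    linarith only [hmul, hT', hα, hr1', hu0, hYle]
  have hT'le : T' ≤ 2 := by
    by_contra hc
    push_neg at hc
    have hmul : 2*k*3 ≤ 2*k*T' := mul_le_mul_of_nonneg_left (by omega) hk0
    linarith only [hmul, hT', hr2', huα, hYge, hk2]
  have hT'2 : T' = 2 := by omega
  have hYval : 2*r' + 2*u + 1 = Y + 4*k := by rw [hT'2] at hT'; linarith only [hT']
  have hδ'eq : δ' = m*Y + X + 2*H - 2 := by rw [hT'2] at hT'd; linarith only [hT'd]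
  have hX1 : X = 1 ∨ X = 3 := by omega
  have hY1 : Y = -1 ∨ Y = -3 := by omega
  rcases hX1 with hX | hX
  · rcases hY1 with hY | hY
    · subst hX; subst hY
      have hu : u = α := by omega
      have hle : (2*k*m+1)*H + δ*k + r + 1 ≤ m*k := by
        by_contra hc
        push_neg at hc
        have := hcap hc
        omega
      have hH : H = 0 := by
        by_contra hc
        have q1 : (2*k*m+1)*1 ≤ (2*k*m+1)*H :=
          mul_le_mul_of_nonneg_left (by omega) (by linarith only [hwpos])
        have q2 : (1-m)*k ≤ δ*k := mul_le_mul_of_nonneg_right hδl (by linarith only [hk])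
        linarith only [q1, q2, hle, hr1, hα, hk]
      rw [hH] at hδ'eq
      linarith only [hδ'eq, hδl']
    · subst hX; subst hY
      linarith only [hδ'eq, hδl', hHm]
  · rcases hY1 with hY | hY <;> subst hX <;> subst hY <;> linarith only [hδH', hδu, hHm']

abbrev QmdsCond (m k α S t h v u : ℤ) : Prop :=
  Odd t ∧ -m ≤ t ∧ t ≤ (2 * m - 1) * m ∧
    ((-m ≤ t ∧ t ≤ -1 ∧ h = 1) ∨
      (∃ j : ℤ, 1 ≤ j ∧ j ≤ m ∧
        (2 * j - 2) * m + 1 ≤ t ∧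
        t ≤ min (2 * j * m - 1) ((2 * m - 1) * m) ∧
        h = j + 1)) ∧
    (S + (m + t) * k + h + α ≤ v) ∧
    (v ≤ S + (m + t + 2) * k + (h - 1) - α) ∧
    (0 ≤ u) ∧
    (if v ≤ S + m * k then u ≤ α else u ≤ α - 1)

lemma qmds_struct (m k α S t h v u : ℤ) (hm : 1 ≤ m) (hmo : m % 2 = 1)
    (hC : QmdsCond m k α S t h v u) :
    (0 ≤ h - 1 ∧ h - 1 ≤ m) ∧
    ((t + m - 2*m*(h-1)) % 2 = 0 ∧ 1 - m ≤ t + m - 2*m*(h-1) ∧ t + m - 2*m*(h-1) ≤ m - 1) ∧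
    (α ≤ v - S - (m+t)*k - h ∧ v - S - (m+t)*k - h ≤ 2*k - 1 - α) ∧
    (0 ≤ u ∧ u ≤ α) ∧
    (m*k < (2*k*m+1)*(h-1) + (t + m - 2*m*(h-1))*k + (v - S - (m+t)*k - h) + 1 → u ≤ α - 1) := by
  obtain ⟨hto, ht1, ht2, hbr, hv1, hv2, hu0, hif⟩ := hC
  have hto' : t % 2 = 1 := Int.odd_iff.mp hto
  have hr1 : α ≤ v - S - (m+t)*k - h := by linarith only [hv1]
  have hr2 : v - S - (m+t)*k - h ≤ 2*k - 1 - α := by linarith only [hv2]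
  have hid : (2*k*m+1)*(h-1) + (t + m - 2*m*(h-1))*k + (v - S - (m+t)*k - h) + 1 = v - S := by
    ring
  have hcap : m*k < (2*k*m+1)*(h-1) + (t + m - 2*m*(h-1))*k + (v - S - (m+t)*k - h) + 1 →
      u ≤ α - 1 := by
    intro hlt
    rw [hid] at hlt
    rw [if_neg (by linarith only [hlt])] at hif
    exact hif
  have huα : u ≤ α := by
    by_cases hvc : v ≤ S + m * k
    · rw [if_pos hvc] at hif; exact hif
    · rw [if_neg hvc] at hif; linarith only [hif]
  rcases hbr with ⟨hta, htb, hh⟩ | ⟨j, hj1, hj2, hjt1, hjt2, hh⟩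
  · subst hh
    refine ⟨⟨by norm_num, by linarith only [hm]⟩, ⟨?_, ?_, ?_⟩, ⟨hr1, hr2⟩, ⟨hu0, huα⟩, hcap⟩
    · rw [show t + m - 2*m*(1-1) = t + m from by ring]; omega
    · rw [show t + m - 2*m*(1-1) = t + m from by ring]; omega
    · rw [show t + m - 2*m*(1-1) = t + m from by ring]; omega
  · subst hh
    have hjt2' : t ≤ 2*j*m - 1 := le_trans hjt2 (min_le_left _ _)
    refine ⟨⟨by omega, by omega⟩, ⟨?_, ?_, ?_⟩, ⟨hr1, hr2⟩, ⟨hu0, huα⟩, hcap⟩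
    · obtain ⟨P, hP⟩ : ∃ P, t + m - 2*m*(j+1-1) = t + m - 2*P := ⟨m*j, by ring⟩
      rw [hP]; omega
    · have : 2*(j*m) - 2*m + 1 ≤ t := by linarith only [hjt1]
      have hg : t + m - 2*m*(j+1-1) = t + m - 2*(j*m) := by ring
      rw [hg]; linarith only [this]
    · have hg : t + m - 2*m*(j+1-1) = t + m - 2*(j*m) := by ring
      rw [hg]
      have : t ≤ 2*(j*m) - 1 := by linarith only [hjt2']
      linarith only [this]

lemma qmds_coreG (m k α S x y t h v u t' h' v' u' : ℤ)
    (hm : 1 ≤ m) (hmo : m % 2 = 1) (hk : 1 ≤ k) (hα1 : 1 ≤ α)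
    (hC : QmdsCond m k α S t h v u) (hC' : QmdsCond m k α S t' h' v' u')
    (hxo : x % 2 = 1) (hyo : y % 2 = 1)
    (hA : 2*v' + 2*u - (2*S+1) = (2*k*m+1)*y + 2*k*x)
    (hB : 2*v - 2*u' - (2*S+1) = (2*k*m+1)*x - 2*k*y) : False := by
  obtain ⟨⟨hH0, hHm⟩, ⟨hδe, hδl, hδu⟩, ⟨hr1, hr2⟩, ⟨hu0, huα⟩, hcap⟩ :=
    qmds_struct m k α S t h v u hm hmo hC
  obtain ⟨⟨hH0', hHm'⟩, ⟨hδe', hδl', hδu'⟩, ⟨hr1', hr2'⟩, ⟨hu0', huα'⟩, hcap'⟩ :=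
    qmds_struct m k α S t' h' v' u' hm hmo hC'
  have hXo : (x - 2*(h-1)) % 2 = 1 := by omega
  have hYo : (y - 2*(h'-1)) % 2 = 1 := by omega
  refine qmds_core2 m k α (h-1) (t + m - 2*m*(h-1)) (v - S - (m+t)*k - h) u
      (h'-1) (t' + m - 2*m*(h'-1)) (v' - S - (m+t')*k - h') u'
      (x - 2*(h-1)) (y - 2*(h'-1))
      hm hmo hk hα1 hH0 hHm hδe hδl hδu hr1 hr2 hu0 huα hcap
      hH0' hHm' hδe' hδl' hδu' hr1' hr2' hu0' huα' hXo hYo ?_ ?_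
  · linear_combination -hB
  · linear_combination -hA

lemma qmds_extract (m k q n : ℤ) (hq : q = 2*(m^2+1)*k + m)
    (hn : n = 4*(m^2+1)*k^2 + 4*k*m + 1)
    (A B : ℤ) (hdvd : n ∣ A*q + B) :
    ∃ x y, A = (2*k*m+1)*y + 2*k*x ∧ B = (2*k*m+1)*x - 2*k*y := by
  obtain ⟨c, hc⟩ := hdvd
  subst hq; subst hn
  exact ⟨(2*k*m+1)*c - m*A, A - 2*k*c, by ring, by linear_combination hc⟩

lemma qmds_divToCore (m k α S q n : ℤ)
    (hm : 1 ≤ m) (hmo : m % 2 = 1) (hk : 1 ≤ k) (hα1 : 1 ≤ α)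
    (hq : q = 2*(m^2+1)*k + m) (hn : n = 4*(m^2+1)*k^2 + 4*k*m + 1) (hnS : n = 2*S + 1)
    (t h v u t' h' v' u' : ℤ)
    (hC : QmdsCond m k α S t h v u) (hC' : QmdsCond m k α S t' h' v' u')
    (hz : n ∣ (u + v') * q + (v - u')) : False := by
  obtain ⟨d, hd⟩ := hz
  have hdvd : n ∣ (2*v' + 2*u - n)*q + (2*v - 2*u' - n) :=
    ⟨2*d - q - 1, by linear_combination 2*hd⟩
  obtain ⟨x, y, hAx, hBx⟩ := qmds_extract m k q n hq hn _ _ hdvd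
  have hyo : y % 2 = 1 := by
    obtain ⟨e, he⟩ : ∃ e, y = (2*v' + 2*u - n) - 2*e := ⟨k*m*y + k*x, by linear_combination -hAx⟩
    omega
  have hxo : x % 2 = 1 := by
    obtain ⟨e, he⟩ : ∃ e, x = (2*v - 2*u' - n) - 2*e := ⟨k*m*x - k*y, by linear_combination -hBx⟩
    omega
  exact qmds_coreG m k α S x y t h v u t' h' v' u' hm hmo hk hα1 hC hC' hxo hyo
    (by linear_combination hAx + hnS) (by linear_combination hBx + hnS)

lemma qmds_divToCoreNeg (m k α S q n : ℤ)
    (hm : 1 ≤ m) (hmo : m % 2 = 1) (hk : 1 ≤ k) (hα1 : 1 ≤ α)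
    (hq : q = 2*(m^2+1)*k + m) (hn : n = 4*(m^2+1)*k^2 + 4*k*m + 1) (hnS : n = 2*S + 1)
    (t h v u t' h' v' u' : ℤ)
    (hC : QmdsCond m k α S t h v u) (hC' : QmdsCond m k α S t' h' v' u')
    (hz : n ∣ (u - v') * q + (v + u')) : False := by
  obtain ⟨d, hd⟩ := hz
  have hdvd : n ∣ (2*u - 2*v' + n)*q + (2*v + 2*u' - n) :=
    ⟨2*d + q - 1, by linear_combination 2*hd⟩
  obtain ⟨x, y, hAx, hBx⟩ := qmds_extract m k q n hq hn _ _ hdvd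
  have hyo : y % 2 = 1 := by
    obtain ⟨e, he⟩ : ∃ e, y = (2*u - 2*v' + n) - 2*e := ⟨k*m*y + k*x, by linear_combination -hAx⟩
    omega
  have hxo : x % 2 = 1 := by
    obtain ⟨e, he⟩ : ∃ e, x = (2*v + 2*u' - n) - 2*e := ⟨k*m*x - k*y, by linear_combination -hBx⟩
    omega
  have hnyo : (-y) % 2 = 1 := by omega
  exact qmds_coreG m k α S (-y) x t' h' v' u' t h v u hm hmo hk hα1 hC' hC hnyo hxo
    (by linear_combination hBx + hnS) (by linear_combination -hAx + hnS)
/-- Lemma 3.3, Case I `q = 2ak+m`: `T₁ ∩ (−q·T₁) = ∅`. -/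
theorem T1_inter_neg_q_T1_empty_case_I
    (m a k q n s α : ℕ)
    (hm1 : 1 ≤ m) (hmodd : Odd m)
    (ha : a = m ^ 2 + 1)
    (hk : 1 ≤ k)
    (hq : q = 2 * a * k + m)
    (hqodd : Odd q) (hqpp : IsPrimePow q)
    (hn : n = (q ^ 2 + 1) / a)
    (hs : s = (n - 1) / 2)
    (hα1 : 1 ≤ α) (hαk : α ≤ k)
    (T₁ : Set (ZMod n))
    (hT₁ : T₁ = {x : ZMod n | ∃ t h v u : ℤ,
      Odd t ∧ -(m : ℤ) ≤ t ∧ t ≤ (2 * (m : ℤ) - 1) * (m : ℤ) ∧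
      ((-(m : ℤ) ≤ t ∧ t ≤ -1 ∧ h = 1) ∨
        (∃ j : ℤ, 1 ≤ j ∧ j ≤ (m : ℤ) ∧
          (2 * j - 2) * (m : ℤ) + 1 ≤ t ∧
          t ≤ min (2 * j * (m : ℤ) - 1) ((2 * (m : ℤ) - 1) * (m : ℤ)) ∧
          h = j + 1)) ∧
      ((s : ℤ) + ((m : ℤ) + t) * (k : ℤ) + h + (α : ℤ) ≤ v) ∧
      (v ≤ (s : ℤ) + ((m : ℤ) + t + 2) * (k : ℤ) + (h - 1) - (α : ℤ)) ∧
      (0 ≤ u) ∧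
      (if v ≤ (s : ℤ) + (m : ℤ) * (k : ℤ) then u ≤ (α : ℤ) else u ≤ (α : ℤ) - 1) ∧
      (x = ((u * (q : ℤ) + v : ℤ) : ZMod n) ∨ x = -((u * (q : ℤ) + v : ℤ) : ZMod n))}) :
    T₁ ∩ ((fun x : ZMod n => -(q : ZMod n) * x) '' T₁) = ∅ := by
  have hapos : 0 < a := by rw [ha]; positivity
  have hN : q ^ 2 + 1 = a * (4*a*k^2 + 4*k*m + 1) := by rw [hq, ha]; ring
  have hnval : n = 4*a*k^2 + 4*k*m + 1 := by
    rw [hn, hN, Nat.mul_div_cancel_left _ hapos]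
  obtain ⟨w1, hw1⟩ : ∃ w1, n = 2*w1 + 1 := ⟨2*a*k^2 + 2*k*m, by rw [hnval]; ring⟩
  have hn1 : 2*s + 1 = n := by omega
  haveI : NeZero n := ⟨by omega⟩
  have hq2 : (q : ZMod n)^2 + 1 = 0 := by
    have h0 : ((q ^ 2 + 1 : ℕ) : ZMod n) = 0 := by
      rw [hN, ← hnval]
      simp [ZMod.natCast_self]
    push_cast at h0
    linear_combination h0
  have hmZ : 1 ≤ (m:ℤ) := by exact_mod_cast hm1
  have hkZ : 1 ≤ (k:ℤ) := by exact_mod_cast hk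
  have hα1Z : 1 ≤ (α:ℤ) := by exact_mod_cast hα1
  have hmoZ : (m:ℤ) % 2 = 1 := by
    obtain ⟨r, hr⟩ := hmodd
    have : (m:ℤ) = 2*(r:ℤ) + 1 := by exact_mod_cast hr
    omega
  have hqZ : (q:ℤ) = 2*((m:ℤ)^2+1)*(k:ℤ) + (m:ℤ) := by
    rw [hq, ha]; push_cast; ring
  have hnZ : (n:ℤ) = 4*((m:ℤ)^2+1)*(k:ℤ)^2 + 4*(k:ℤ)*(m:ℤ) + 1 := by
    rw [hnval, ha]; push_cast; ring
  have hnSZ : (n:ℤ) = 2*(s:ℤ) + 1 := by exact_mod_cast hn1.symm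
  have master : ∀ uu vv uu' vv' : ℤ,
      (((uu * (q:ℤ) + vv : ℤ)) : ZMod n) = -(q : ZMod n) * (((uu' * (q:ℤ) + vv' : ℤ)) : ZMod n) →
      (n:ℤ) ∣ (uu + vv') * (q:ℤ) + (vv - uu') := by
    intro uu vv uu' vv' hE
    rw [← ZMod.intCast_zmod_eq_zero_iff_dvd]
    push_cast at hE ⊢
    linear_combination hE - (uu' : ZMod n) * hq2
  rw [Set.eq_empty_iff_forall_notMem]
  rintro x ⟨hx1, hx2⟩
  obtain ⟨x₂, hx₂mem, hfx⟩ := hx2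
  rw [hT₁, Set.mem_setOf_eq] at hx1 hx₂mem
  obtain ⟨t, h, v, u, hto, ht1, ht2, hbr, hv1, hv2, hu0, hif, hsign⟩ := hx1
  obtain ⟨t', h', v', u', hto', ht1', ht2', hbr', hv1', hv2', hu0', hif', hsign'⟩ := hx₂mem
  have hCond : QmdsCond (m:ℤ) (k:ℤ) (α:ℤ) (s:ℤ) t h v u :=
    ⟨hto, ht1, ht2, hbr, hv1, hv2, hu0, hif⟩
  have hCond' : QmdsCond (m:ℤ) (k:ℤ) (α:ℤ) (s:ℤ) t' h' v' u' :=
    ⟨hto', ht1', ht2', hbr', hv1', hv2', hu0', hif'⟩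
  have hfx' : -(q : ZMod n) * x₂ = x := hfx
  rcases hsign with hs1 | hs1 <;> rcases hsign' with hs2 | hs2
  · exact qmds_divToCore (m:ℤ) (k:ℤ) (α:ℤ) (s:ℤ) (q:ℤ) (n:ℤ)
      hmZ hmoZ hkZ hα1Z hqZ hnZ hnSZ t h v u t' h' v' u' hCond hCond'
      (master u v u' v' (by rw [← hs1, ← hs2]; exact hfx'.symm))
  · -- x = cast, x₂ = -cast
    rw [hs1, hs2] at hfx'
    have hE : (((u * (q:ℤ) + v : ℤ)) : ZMod n)
        = -(q : ZMod n) * ((((-u') * (q:ℤ) + (-v') : ℤ)) : ZMod n) := by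
      push_cast at hfx' ⊢
      linear_combination -hfx'
    have hz := master u v (-u') (-v') hE
    have hz' : (n:ℤ) ∣ (u - v') * (q:ℤ) + (v + u') := by
      obtain ⟨d, hd⟩ := hz; exact ⟨d, by linear_combination hd⟩
    exact qmds_divToCoreNeg (m:ℤ) (k:ℤ) (α:ℤ) (s:ℤ) (q:ℤ) (n:ℤ)
      hmZ hmoZ hkZ hα1Z hqZ hnZ hnSZ t h v u t' h' v' u' hCond hCond' hz'
  · -- x = -cast, x₂ = cast
    rw [hs1, hs2] at hfx'
    have hE : (((u * (q:ℤ) + v : ℤ)) : ZMod n)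
        = -(q : ZMod n) * ((((-u') * (q:ℤ) + (-v') : ℤ)) : ZMod n) := by
      push_cast at hfx' ⊢
      linear_combination hfx'
    have hz := master u v (-u') (-v') hE
    have hz' : (n:ℤ) ∣ (u - v') * (q:ℤ) + (v + u') := by
      obtain ⟨d, hd⟩ := hz; exact ⟨d, by linear_combination hd⟩
    exact qmds_divToCoreNeg (m:ℤ) (k:ℤ) (α:ℤ) (s:ℤ) (q:ℤ) (n:ℤ)
      hmZ hmoZ hkZ hα1Z hqZ hnZ hnSZ t h v u t' h' v' u' hCond hCond' hz'
  · -- x = -cast, x₂ = -cast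
    rw [hs1, hs2] at hfx'
    have hE : (((u * (q:ℤ) + v : ℤ)) : ZMod n)
        = -(q : ZMod n) * (((u' * (q:ℤ) + v' : ℤ)) : ZMod n) := by
      push_cast at hfx' ⊢
      linear_combination hfx'
    exact qmds_divToCore (m:ℤ) (k:ℤ) (α:ℤ) (s:ℤ) (q:ℤ) (n:ℤ)
      hmZ hmoZ hkZ hα1Z hqZ hnZ hnSZ t h v u t' h' v' u' hCond hCond'
      (master u v u' v' hE)
end

section
/- Let m ≥ 1 be an odd integer, a = m²+1, k ≥ 1 an integer, and q = 2ak+m an odd prime power; set n = (q²+1)/a and s = (n−1)/2. Fix an integer α with 1 ≤ α ≤ k, and let Z = C_{s+1} ∪ C_{s+2} ∪ ... ∪ C_{s+(αq+mk)} ⊆ Z/nZ. Then the cardinality of Z₁ := Z ∩ (−qZ) equals 4α(aα+m). -/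
/-!
Put `h = 2mk + 1`, so that `n = 2kq + h`, `an = q² + 1` and `ah = mq + 1`. The set `Z` is the
image in `ZMod n` of the integer interval `I = [(k-α)q + 1, (k+α)q + h - 1]`, and as `q² = -1`
the set `-qZ` is `{x | qx ∈ Z}`. So `Z₁` is in bijection with the pairs `(j, c)` with `j ∈ I` and
`qj - cn ∈ I`, and a size estimate shows that these are exactly the pairs with
`c ∈ [a(k-α), a(k+α)+m-1]` and `qj - cn ∈ I`.

After the substitution `j = M + 2kc + k - α` the condition `qj - cn ∈ I` reads
`0 < qM - ch ≤ 2αq + h - 1`, which has `2α` solutions `M` plus one more exactly when some `M`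
satisfies `0 < qM - ch < h`. Counting these extra pairs `(c, M)` by `M` instead of `c`, they are
the `M ∈ [m(k-α)+1, m(k+α)]`, each with exactly one `c` because `h` is prime to `q` and does not
divide `M`. Hence `|Z₁| = 2α(2aα + m) + 2αm`.
-/

open Finset

noncomputable def mulPreimageIoc (q x y : ℤ) : Finset ℤ := Icc (x / q + 1) (y / q)

section MulPreimageIoc

variable {q x y : ℤ}

theorem mem_mulPreimageIoc (hq : 0 < q) {M : ℤ} :
    M ∈ mulPreimageIoc q x y ↔ x < q * M ∧ q * M ≤ y := by
  rw [mulPreimageIoc, mem_Icc, Int.add_one_le_iff, Int.ediv_lt_iff_lt_mul hq,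
    Int.le_ediv_iff_mul_le hq, mul_comm M]

theorem card_mulPreimageIoc_add_mul (hq : 0 < q) (hxy : x ≤ y) (e : ℤ) {d : ℤ} (hd : 0 ≤ d) :
    (#(mulPreimageIoc q (x + e * q) (y + (e + d) * q)) : ℤ) = #(mulPreimageIoc q x y) + d := by
  have hmono : x / q ≤ y / q := Int.ediv_le_ediv hq hxy
  simp only [mulPreimageIoc, Int.card_Icc, Int.add_mul_ediv_right _ _ hq.ne']
  omega

theorem card_mulPreimageIoc_sub (hq : 0 < q) (hy : ¬ q ∣ y) :
    #(mulPreimageIoc q (y - q) (y - 1)) = 1 := by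
  have hr : 0 < y % q := lt_of_le_of_ne (Int.emod_nonneg _ hq.ne') fun h =>
    hy (Int.dvd_of_emod_eq_zero h.symm)
  have h1 : (y - 1) / q = y / q :=
    ((Int.ediv_emod_unique (r := y % q - 1) hq).mpr
      ⟨by linarith [Int.mul_ediv_add_emod y q], by omega, by linarith [Int.emod_lt_of_pos y hq]⟩).1
  have h2 : (y - q) / q = y / q - 1 := by
    rw [sub_eq_add_neg, ← neg_one_mul, Int.add_mul_ediv_right _ _ hq.ne']; ring
  rw [mulPreimageIoc, Int.card_Icc, h1, h2]
  omega

end MulPreimageIoc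

theorem ZMod.intCast_injOn_Icc {n : ℕ} {A B : ℤ} (hAB : B - A < n) :
    Set.InjOn (Int.cast : ℤ → ZMod n) (Set.Icc A B) := by
  intro x hx y hy hxy
  rw [ZMod.intCast_eq_intCast_iff_dvd_sub] at hxy
  have := Int.eq_zero_of_abs_lt_dvd hxy
    (abs_lt.mpr ⟨by linarith [hx.2, hy.1], by linarith [hx.1, hy.2]⟩)
  linarith

theorem ncard_image_Icc_inter_preimage_mul_eq_sum {n : ℕ} {q A B : ℤ} (hq : 0 < q)
    (hAB : B - A < n) (C : Finset ℤ)
    (hC : ∀ j c : ℤ, q * j - c * n ∈ Set.Icc A B → (j ∈ Set.Icc A B ↔ c ∈ C)) :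
    ((Int.cast '' Set.Icc A B : Set (ZMod n)) ∩
        (fun x => (q : ZMod n) * x) ⁻¹' (Int.cast '' Set.Icc A B)).ncard
      = ∑ c ∈ C, #(mulPreimageIoc q (c * n + A - 1) (c * n + B)) := by
  classical
  set S : ℤ → Finset ℤ := fun c => mulPreimageIoc q (c * n + A - 1) (c * n + B)
  have hS : ∀ c j, j ∈ S c ↔ q * j - c * n ∈ Set.Icc A B := fun c j => by
    simp only [S, mem_mulPreimageIoc hq, Set.mem_Icc]; omega
  have hsub : ↑(C.biUnion S) ⊆ Set.Icc A B := fun j hj => by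
    obtain ⟨c, hc, hj⟩ := mem_biUnion.1 hj
    exact (hC j c ((hS c j).1 hj)).2 hc
  have hset : (Int.cast '' Set.Icc A B : Set (ZMod n)) ∩
      (fun x => (q : ZMod n) * x) ⁻¹' (Int.cast '' Set.Icc A B)
        = Int.cast '' ↑(C.biUnion S) := by
    ext x
    simp only [Set.mem_inter_iff, Set.mem_preimage, Set.mem_image, coe_biUnion, Set.mem_iUnion,
      mem_coe, exists_prop]
    constructor
    · rintro ⟨⟨j, hj, rfl⟩, j', hj', hj'q⟩
      rw [← Int.cast_mul, ZMod.intCast_eq_intCast_iff_dvd_sub] at hj'q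
      obtain ⟨c, hc⟩ := hj'q
      have hr : q * j - c * n ∈ Set.Icc A B := by convert hj' using 1; linarith
      exact ⟨j, ⟨c, (hC j c hr).1 hj, (hS c j).2 hr⟩, rfl⟩
    · rintro ⟨j, ⟨c, hc, hj⟩, rfl⟩
      refine ⟨⟨j, hsub (mem_biUnion.2 ⟨c, hc, hj⟩), rfl⟩, q * j - c * n, (hS c j).1 hj, ?_⟩
      push_cast
      rw [ZMod.natCast_self]; ring
  have hdisj : (C : Set ℤ).PairwiseDisjoint S := by
    intro c _ c' _ hne
    refine disjoint_left.2 fun j hj hj' => hne ?_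
    have h1 := (hS c j).1 hj
    have h2 := (hS c' j).1 hj'
    have hcast := ZMod.intCast_injOn_Icc hAB h1 h2 (by push_cast; rw [ZMod.natCast_self]; ring)
    have hn : (0 : ℤ) < n := by linarith [h1.1, h1.2]
    exact mul_right_cancel₀ hn.ne' (by linarith)
  rw [hset, ((ZMod.intCast_injOn_Icc hAB).mono hsub).ncard_image, Set.ncard_coe_finset,
    card_biUnion hdisj]

theorem image_neg_mul_eq_preimage_mul {R : Type*} [Ring R] {u : R} (hu : u ^ 2 = -1)
    (Z : Set R) :
    (fun x => -u * x) '' Z = (fun x => u * x) ⁻¹' Z := by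
  have hinv : ∀ x, u * (-u * x) = x := fun x => by
    rw [← mul_assoc, mul_neg, ← sq, hu, neg_neg, one_mul]
  have hinv' : ∀ x, -u * (u * x) = x := fun x => by
    rw [← mul_assoc, neg_mul, ← sq, hu, neg_neg, one_mul]
  exact congrFun (Set.image_eq_preimage_of_inverse hinv hinv') Z

theorem setOf_eq_natCast_or_neg_eq_image_Icc {n s N : ℕ} (hn : n = 2 * s + 1) :
    {x : ZMod n | ∃ i : ℕ, 1 ≤ i ∧ i ≤ N ∧
        (x = ((s + i : ℕ) : ZMod n) ∨ x = -((s + i : ℕ) : ZMod n))}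
      = (Int.cast : ℤ → ZMod n) '' Set.Icc ((s : ℤ) + 1 - N) (s + N) := by
  have hn0 : (2 * s + 1 : ZMod n) = 0 := by
    simpa [hn] using ZMod.natCast_self n
  ext x
  simp only [Set.mem_ofPred_eq, Set.mem_image, Set.mem_Icc]
  constructor
  · rintro ⟨i, hi1, hiN, rfl | rfl⟩
    · exact ⟨s + i, ⟨by omega, by omega⟩, by push_cast; rfl⟩
    · refine ⟨s + 1 - i, ⟨by omega, by omega⟩, ?_⟩
      push_cast
      linear_combination hn0
  · rintro ⟨j, ⟨hj1, hj2⟩, rfl⟩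
    rcases le_or_gt j s with hjs | hjs
    · refine ⟨(s + 1 - j).toNat, by omega, by omega, Or.inr ?_⟩
      have hj : ((s + 1 - j).toNat : ℤ) = s + 1 - j := by omega
      rw [← Int.cast_natCast, Nat.cast_add, hj]
      push_cast
      linear_combination hn0
    · refine ⟨(j - s).toNat, by omega, by omega, Or.inl ?_⟩
      rw [← Int.cast_natCast]; congr 1; push_cast; omega

section Parameters

variable {m k α a q h : ℤ}

theorem mem_Icc_iff_mem_Icc_of_mul_sub_mul_mem_Icc {n : ℤ} (hαk : α ≤ k) (hq0 : 0 < q)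
    (ha : a = m ^ 2 + 1) (hq : q = 2 * a * k + m) (hh : h = 2 * m * k + 1) (hn : n = 2 * k * q + h)
    {j c : ℤ} (hr : q * j - c * n ∈ Set.Icc ((k - α) * q + 1) ((k + α) * q + h - 1)) :
    j ∈ Set.Icc ((k - α) * q + 1) ((k + α) * q + h - 1) ↔
      c ∈ Finset.Icc (a * (k - α)) (a * (k + α) + m - 1) := by
  obtain ⟨hr1, hr2⟩ := hr
  have han : a * n = q ^ 2 + 1 := by subst hn hh hq ha; ring
  have hn0 : 0 < n := by nlinarith
  have hkq : 0 ≤ (k - α) * q := mul_nonneg (by linarith) hq0.le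
  rw [Set.mem_Icc, Finset.mem_Icc]
  constructor
  · rintro ⟨hj1, hj2⟩
    constructor
    · by_contra! hc
      have : c * n ≤ (a * (k - α) - 1) * n := mul_le_mul_of_nonneg_right (by omega) hn0.le
      nlinarith
    · by_contra! hc
      have : (a * (k + α) + m) * n ≤ c * n := mul_le_mul_of_nonneg_right (by omega) hn0.le
      nlinarith
  · rintro ⟨hc1, hc2⟩
    constructor
    · by_contra! hj
      have : q * j ≤ q * ((k - α) * q) := mul_le_mul_of_nonneg_left (by omega) hq0.le
      have : a * (k - α) * n ≤ c * n := mul_le_mul_of_nonneg_right hc1 hn0.le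
      nlinarith
    · by_contra! hj
      have : q * ((k + α) * q + h) ≤ q * j := mul_le_mul_of_nonneg_left (by omega) hq0.le
      have : c * n ≤ (a * (k + α) + m - 1) * n := mul_le_mul_of_nonneg_right hc2 hn0.le
      nlinarith

theorem mem_Icc_iff_mem_Icc_of_mul_sub_mul_mem_Ioo (hm : 0 ≤ m) (hαk : α ≤ k) (hq0 : 0 < q)
    (ha : a = m ^ 2 + 1) (hq : q = 2 * a * k + m) (hh : h = 2 * m * k + 1)
    {c M : ℤ} (hr : q * M - c * h ∈ Set.Ioo 0 h) :
    c ∈ Finset.Icc (a * (k - α)) (a * (k + α) + m - 1) ↔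
      M ∈ Finset.Icc (m * (k - α) + 1) (m * (k + α)) := by
  obtain ⟨hr1, hr2⟩ := hr
  have hah : a * h = m * q + 1 := by subst hh hq ha; ring
  have hh0 : 0 < h := by nlinarith
  rw [Finset.mem_Icc, Finset.mem_Icc]
  constructor
  · rintro ⟨hc1, hc2⟩
    constructor
    · by_contra! hM
      have : q * M ≤ q * (m * (k - α)) := mul_le_mul_of_nonneg_left (by omega) hq0.le
      have : a * (k - α) * h ≤ c * h := mul_le_mul_of_nonneg_right hc1 hh0.le
      nlinarith
    · by_contra! hM
      have : q * (m * (k + α) + 1) ≤ q * M := mul_le_mul_of_nonneg_left (by omega) hq0.le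
      have : c * h ≤ (a * (k + α) + m - 1) * h := mul_le_mul_of_nonneg_right hc2 hh0.le
      nlinarith
  · rintro ⟨hM1, hM2⟩
    constructor
    · by_contra! hc
      have : q * (m * (k - α) + 1) ≤ q * M := mul_le_mul_of_nonneg_left hM1 hq0.le
      have : c * h ≤ (a * (k - α) - 1) * h := mul_le_mul_of_nonneg_right (by omega) hh0.le
      nlinarith
    · by_contra! hc
      have : q * M ≤ q * (m * (k + α)) := mul_le_mul_of_nonneg_left hM2 hq0.le
      have : (a * (k + α) + m) * h ≤ c * h := mul_le_mul_of_nonneg_right (by omega) hh0.le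
      nlinarith

theorem sum_card_mulPreimageIoc (hm : 0 ≤ m) (hα : 0 ≤ α) (hαk : α ≤ k) (hq0 : 0 < q)
    (ha : a = m ^ 2 + 1) (hq : q = 2 * a * k + m) (hh : h = 2 * m * k + 1) :
    ∑ c ∈ Icc (a * (k - α)) (a * (k + α) + m - 1),
        (#(mulPreimageIoc q (c * h) (c * h + h - 1)) : ℤ) = 2 * α * m := by
  have hah : a * h = m * q + 1 := by subst hh hq ha; ring
  have hh0 : 0 < h := by nlinarith
  have hcop : IsCoprime h q := ⟨a, -m, by linarith⟩
  have hndvd : ∀ M ∈ Icc (m * (k - α) + 1) (m * (k + α)), ¬ h ∣ q * M := fun M hM hdvd => by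
    rw [mem_Icc] at hM
    have := Int.le_of_dvd (by nlinarith) (hcop.dvd_of_dvd_mul_left hdvd)
    nlinarith
  calc ∑ c ∈ Icc (a * (k - α)) (a * (k + α) + m - 1),
        (#(mulPreimageIoc q (c * h) (c * h + h - 1)) : ℤ)
      = ∑ M ∈ Icc (m * (k - α) + 1) (m * (k + α)),
        (#(mulPreimageIoc h (q * M - h) (q * M - 1)) : ℤ) := by
        simp only [card_eq_sum_ones, Nat.cast_sum, Nat.cast_one]
        refine sum_comm' fun c M => ?_
        have hiff :=
          mem_Icc_iff_mem_Icc_of_mul_sub_mul_mem_Ioo (c := c) (M := M) hm hαk hq0 ha hq hh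
        rw [mem_mulPreimageIoc hq0, mem_mulPreimageIoc hh0]
        constructor
        · rintro ⟨hc, h1, h2⟩
          exact ⟨⟨by linarith, by linarith⟩, (hiff ⟨by linarith, by linarith⟩).1 hc⟩
        · rintro ⟨⟨h1, h2⟩, hM⟩
          exact ⟨(hiff ⟨by linarith, by linarith⟩).2 hM, by linarith, by linarith⟩
    _ = ∑ M ∈ Icc (m * (k - α) + 1) (m * (k + α)), 1 :=
        sum_congr rfl fun M hM => by rw [card_mulPreimageIoc_sub hh0 (hndvd M hM), Nat.cast_one]
    _ = 2 * α * m := by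
        rw [sum_const, Int.card_Icc, nsmul_eq_mul, mul_one]
        have : m * (k + α) + 1 - (m * (k - α) + 1) = 2 * α * m := by ring
        rw [this, Int.toNat_of_nonneg (by positivity)]

theorem ncard_image_Icc_inter_preimage_mul_eq (hm : 0 ≤ m) (hα : 0 ≤ α) (hαk : α ≤ k)
    (hq0 : 0 < q) (ha : a = m ^ 2 + 1) (hq : q = 2 * a * k + m) (hh : h = 2 * m * k + 1) {n : ℕ}
    (hn : (n : ℤ) = 2 * k * q + h) :
    ((((Int.cast '' Set.Icc ((k - α) * q + 1) ((k + α) * q + h - 1)) : Set (ZMod n)) ∩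
        (fun x => (q : ZMod n) * x) ⁻¹'
          (Int.cast '' Set.Icc ((k - α) * q + 1) ((k + α) * q + h - 1))).ncard : ℤ)
      = 4 * α * (a * α + m) := by
  have hh0 : 0 < h := by nlinarith
  rw [ncard_image_Icc_inter_preimage_mul_eq_sum hq0 (by nlinarith) _
    fun j c hr => mem_Icc_iff_mem_Icc_of_mul_sub_mul_mem_Icc hαk hq0 ha hq hh hn hr]
  have hslice : ∀ c : ℤ,
      (#(mulPreimageIoc q (c * n + ((k - α) * q + 1) - 1) (c * n + ((k + α) * q + h - 1))) : ℤ)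
        = #(mulPreimageIoc q (c * h) (c * h + h - 1)) + 2 * α := fun c => by
    rw [← card_mulPreimageIoc_add_mul hq0 (by linarith) (2 * k * c + k - α)
      (by linarith : (0 : ℤ) ≤ 2 * α)]
    congr 3 <;> rw [hn] <;> ring
  push_cast
  simp only [hslice, sum_add_distrib, sum_const, Int.card_Icc, nsmul_eq_mul,
    sum_card_mulPreimageIoc hm hα hαk hq0 ha hq hh]
  have : a * (k + α) + m - 1 + 1 - a * (k - α) = 2 * a * α + m := by ring
  rw [this, Int.toNat_of_nonneg (by subst ha; positivity)]
  ring

end Parameters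

theorem card_Z1_case_I_general
    (m a k q n s α : ℕ)
    (ha : a = m ^ 2 + 1)
    (hk : 1 ≤ k)
    (hq : q = 2 * a * k + m)
    (hn : n = (q ^ 2 + 1) / a)
    (hs : s = (n - 1) / 2)
    (hαk : α ≤ k)
    (Z : Set (ZMod n))
    (hZ : Z = {x : ZMod n | ∃ i : ℕ, 1 ≤ i ∧ i ≤ α * q + m * k ∧
      (x = ((s + i : ℕ) : ZMod n) ∨ x = -((s + i : ℕ) : ZMod n))}) :
    (Z ∩ ((fun x : ZMod n => -(q : ZMod n) * x) '' Z)).ncard = 4 * α * (a * α + m) := by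
  have hfac : q ^ 2 + 1 = a * (2 * k * q + (2 * m * k + 1)) := by subst hq ha; ring
  have hn' : n = 2 * k * q + (2 * m * k + 1) := by
    rw [hn, hfac, Nat.mul_div_cancel_left _ (by omega)]
  have hs' : s = k * q + m * k := by
    rw [hs, hn', show 2 * k * q + (2 * m * k + 1) - 1 = 2 * (k * q + m * k) by
      rw [← add_assoc, Nat.add_sub_cancel]; ring, Nat.mul_div_cancel_left _ two_pos]
  have hq0 : 0 < q := by rw [hq]; have : 0 < 2 * a * k := Nat.mul_pos (by omega) hk; omega
  have hq2 : (q : ZMod n) ^ 2 = -1 := by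
    have : ((q ^ 2 + 1 : ℕ) : ZMod n) = 0 := by
      rw [hfac, ← hn', Nat.cast_mul, ZMod.natCast_self, mul_zero]
    push_cast at this
    linear_combination this
  have hZ' :
      Z = Int.cast '' Set.Icc (((k : ℤ) - α) * q + 1) ((k + α) * q + (2 * m * k + 1) - 1) := by
    rw [hZ, setOf_eq_natCast_or_neg_eq_image_Icc (by rw [hn', hs']; ring)]
    congr 2 <;> rw [hs'] <;> push_cast <;> ring
  rw [hZ', image_neg_mul_eq_preimage_mul hq2]
  have hcount := ncard_image_Icc_inter_preimage_mul_eq (m := m) (k := k) (α := α) (a := a)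
    (q := q) (n := n) (by positivity) (by positivity) (by exact_mod_cast hαk)
    (by exact_mod_cast hq0) (by exact_mod_cast ha) (by exact_mod_cast hq) rfl
    (by exact_mod_cast hn')
  rw [Int.cast_natCast] at hcount
  exact_mod_cast hcount

/-- Theorem 3.4: with `Z = C_{s+1} ∪ ⋯ ∪ C_{s+(αq+mk)}`,
`|Z ∩ (−qZ)| = 4α(aα+m)`. -/
theorem card_Z1_case_I
    (m a k q n s α : ℕ)
    (hm1 : 1 ≤ m) (hmodd : Odd m)
    (ha : a = m ^ 2 + 1)
    (hk : 1 ≤ k)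
    (hq : q = 2 * a * k + m)
    (hqodd : Odd q) (hqpp : IsPrimePow q)
    (hn : n = (q ^ 2 + 1) / a)
    (hs : s = (n - 1) / 2)
    (hα1 : 1 ≤ α) (hαk : α ≤ k)
    (Z : Set (ZMod n))
    (hZ : Z = {x : ZMod n | ∃ i : ℕ, 1 ≤ i ∧ i ≤ α * q + m * k ∧
      (x = ((s + i : ℕ) : ZMod n) ∨ x = -((s + i : ℕ) : ZMod n))}) :
    (Z ∩ ((fun x : ZMod n => -(q : ZMod n) * x) '' Z)).ncard = 4 * α * (a * α + m) :=
  card_Z1_case_I_general m a k q n s α ha hk hq hn hs hαk Z hZ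
end

section
/- Let m ≥ 1 be an odd integer, a = m²+1, k ≥ 1 an integer, and q = 2ak+m an odd prime power; set n = (q²+1)/a and s = (n−1)/2. Fix an integer α with 1 ≤ α ≤ k, and let Z = C_{s+1} ∪ C_{s+2} ∪ ... ∪ C_{s+(αq+mk)} ⊆ Z/nZ. Let T₁ be the union of the cosets C_{uq+v} over all odd t with −m ≤ t ≤ (2m−1)m (with h = 1 if −m ≤ t ≤ −1 and h = j+1 if (2j−2)m+1 ≤ t ≤ min(2jm−1,(2m−1)m) for j = 1,...,m), all v with s+(m+t)k+h+α ≤ v ≤ s+(m+t+2)k+(h−1)−α, and all u with 0 ≤ u ≤ α if v ≤ s+mk and 0 ≤ u ≤ α−1 otherwise. Let T₁' be the union of the cosets C_{uq+v} over: (i) s+1 ≤ v ≤ s+α, 0 ≤ u ≤ α; (ii) s+2tk+1−α ≤ v ≤ s+2tk+α for 1 ≤ t ≤ (m−1)/2, 0 ≤ u ≤ α; (iii) s+2tk+(f+3)/2−α ≤ v ≤ s+2tk+(f+1)/2+α for odd f, 1 ≤ f ≤ 2m−1, (fm+3)/2 ≤ t ≤ ((f+2)m−1)/2, 0 ≤ u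 ≤ α−1; (iv) s+2tk+m+1−α ≤ v ≤ s+2tk+m+α for ((2m−1)m+3)/2 ≤ t ≤ m², 0 ≤ u ≤ α−1; (v) s+2ak+m+1−α ≤ v ≤ s+q, 0 ≤ u ≤ α−1; (vi) s+(gm+1)k+(g+1)/2−α ≤ v ≤ s+(gm+1)k+(g+1)/2+α for odd g, 1 ≤ g ≤ 2m−1, 0 ≤ u ≤ α−1. Then Z = T₁ ∪ T₁', and consequently Z ∩ (−qZ) = T₁'. -/
set_option maxHeartbeats 4000000
set_option linter.unusedVariables false

private lemma cast_eq_of_dvd {n : ℕ} {X Y : ℤ} (h : (n:ℤ) ∣ X - Y) :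
    ((X : ℤ) : ZMod n) = ((Y : ℤ) : ZMod n) :=
  (ZMod.intCast_eq_intCast_iff X Y n).mpr (Int.ModEq.symm (Int.modEq_iff_dvd.mpr h))

private lemma dvd_of_cast_eq {n : ℕ} {X Y : ℤ} (h : ((X:ℤ):ZMod n) = ((Y:ℤ):ZMod n)) :
    (n:ℤ) ∣ X - Y :=
  Int.modEq_iff_dvd.mp ((ZMod.intCast_eq_intCast_iff X Y n).mp h).symm

/-- Covering lemma: every `d ∈ [1, q]` (with `q = 2((2m'+1)^2+1)k + (2m'+1)`)
lies in one of the windows. `a` plays the role of `α`. -/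
private lemma cover_lemma (m' k a d : ℤ) (hm' : 0 ≤ m') (hk : 1 ≤ k) (ha1 : 1 ≤ a)
    (hak : a ≤ k) (hd1 : 1 ≤ d)
    (hd2 : d ≤ 2*((2*m'+1)^2+1)*k+(2*m'+1)) :
    (∃ t h : ℤ, Odd t ∧ -(2*m'+1) ≤ t ∧ t ≤ (2*(2*m'+1)-1)*(2*m'+1) ∧
      ((-(2*m'+1) ≤ t ∧ t ≤ -1 ∧ h = 1) ∨
        (∃ j : ℤ, 1 ≤ j ∧ j ≤ 2*m'+1 ∧ (2*j-2)*(2*m'+1)+1 ≤ t ∧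
          t ≤ min (2*j*(2*m'+1)-1) ((2*(2*m'+1)-1)*(2*m'+1)) ∧ h = j+1)) ∧
      ((2*m'+1)+t)*k+h+a ≤ d ∧ d ≤ ((2*m'+1)+t+2)*k+(h-1)-a)
    ∨ (1 ≤ d ∧ d ≤ a)
    ∨ (∃ t : ℤ, 1 ≤ t ∧ t ≤ m' ∧ 2*t*k+1-a ≤ d ∧ d ≤ 2*t*k+a)
    ∨ (∃ F t : ℤ, 0 ≤ F ∧ F ≤ 2*m' ∧ 2*F*m'+F+m'+2 ≤ t ∧ t ≤ 2*F*m'+F+3*m'+1 ∧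
        2*t*k+(F+2)-a ≤ d ∧ d ≤ 2*t*k+(F+1)+a)
    ∨ (2*((2*m'+1)^2+1)*k+(2*m'+1)+1-a ≤ d)
    ∨ (∃ G : ℤ, 0 ≤ G ∧ G ≤ 2*m' ∧
        ((2*G+1)*(2*m'+1)+1)*k+(G+1)-a ≤ d ∧ d ≤ ((2*G+1)*(2*m'+1)+1)*k+(G+1)+a) := by
  set m : ℤ := 2*m'+1 with hm
  have hm1 : 1 ≤ m := by omega
  have h2k : (0:ℤ) < 2*k := by omega
  by_cases hA : d ≤ (m+1)*k - a
  · -- block 0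
    set c : ℤ := (d-1+a) / (2*k) with hc
    set r : ℤ := (d-1+a) % (2*k) with hr
    have heq : 2*k*c + r = d-1+a := Int.mul_ediv_add_emod _ _
    have hr0 : 0 ≤ r := Int.emod_nonneg _ (by omega)
    have hr1 : r < 2*k := Int.emod_lt_of_pos _ h2k
    have hc0 : 0 ≤ c := Int.ediv_nonneg (by omega) (by omega)
    have hcm : c ≤ m' := by
      by_contra hcon
      push_neg at hcon
      have h1 : m'+1 ≤ c := by omega
      have h2 : 2*k*(m'+1) ≤ 2*k*c := by
        exact mul_le_mul_of_nonneg_left h1 (by omega)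
      have h3 : 2*k*c ≤ (m+1)*k - 1 - r + a - a := by omega
      nlinarith
    by_cases hrs : r ≤ 2*a-1
    · by_cases hc1 : c = 0
      · right; left
        constructor
        · exact hd1
        · have : 2*k*c = 0 := by rw [hc1]; ring
          omega
      · right; right; left
        refine ⟨c, by omega, hcm, ?_, ?_⟩
        · have : 2*c*k = 2*k*c := by ring
          omega
        · have : 2*c*k = 2*k*c := by ring
          omega
    · -- T₁ window, t = 2c - m, h = 1
      left
      refine ⟨2*c - m, 1, ⟨c-m'-1, by omega⟩, by omega, by nlinarith, Or.inl ⟨by omega, by omega, rfl⟩, ?_, ?_⟩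
      · have : (m+(2*c-m))*k = 2*k*c := by ring
        omega
      · have : (m+(2*c-m)+2)*k = 2*k*c + 2*k := by ring
        omega
  · by_cases hC : 2*((2*m'+1)^2+1)*k+(2*m'+1)+1-a ≤ d
    · right; right; right; right; left; exact hC
    · -- middle blocks
      push_neg at hA hC
      have hB : (m+1)*k - a + 1 ≤ d := by omega
      have hq' : d ≤ 2*(m^2+1)*k + m - a := by
        have : 2*((2*m'+1)^2+1)*k = 2*(m^2+1)*k := by rw [hm]
        omega
      set D : ℤ := d + (m-1)*k + a with hD
      set P : ℤ := 2*m*k+1 with hP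
      have hPpos : 0 < P := by nlinarith
      set j : ℤ := D / P with hj
      set R : ℤ := D % P with hR
      have heq : P*j + R = D := Int.mul_ediv_add_emod _ _
      have hR0 : 0 ≤ R := Int.emod_nonneg _ (by omega)
      have hR1 : R < P := Int.emod_lt_of_pos _ hPpos
      have hDge : P ≤ D := by nlinarith
      have hj1 : 1 ≤ j := by
        by_contra hcon
        push_neg at hcon
        have : j ≤ 0 := by omega
        have : P*j ≤ 0 := mul_nonpos_of_nonneg_of_nonpos (by omega) this
        omega
      have hjm : j ≤ m := by
        by_contra hcon
        push_neg at hcon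
        have h1 : m+1 ≤ j := by omega
        have h2 : P*(m+1) ≤ P*j := mul_le_mul_of_nonneg_left h1 (by omega)
        nlinarith
      -- key: d - B_j = R where B_j = ((2j-1)m+1)k + j - a
      have hdB : d = ((2*j-1)*m+1)*k + j - a + R := by linear_combination -heq
      have hRm : j = m → R ≤ (m+1)*k := by
        intro hjem
        rw [hjem] at hdB
        nlinarith [hdB]
      by_cases hR2a : R ≤ 2*a
      · -- case (vi), G = j-1
        right; right; right; right; right
        refine ⟨j-1, by omega, by omega, ?_, ?_⟩
        · have : (2*(j-1)+1)*(2*m'+1)+1 = (2*j-1)*m+1 := by rw [hm]; ring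
          rw [this]; omega
        · have : (2*(j-1)+1)*(2*m'+1)+1 = (2*j-1)*m+1 := by rw [hm]; ring
          rw [this]; omega
      · by_cases hR2k : R ≤ 2*k
        · -- T₁ window at block start: t = (2j-2)m+1, h = j+1
          left
          refine ⟨(2*j-2)*m+1, j+1, ⟨(j-1)*m, by ring⟩, by nlinarith, by nlinarith,
            Or.inr ⟨j, hj1, hjm, le_refl _, le_min (by nlinarith) (by nlinarith), rfl⟩, ?_, ?_⟩
          · have : (m+((2*j-2)*m+1))*k = ((2*j-1)*m+1)*k := by ring
            omega
          · have : (m+((2*j-2)*m+1)+2)*k = ((2*j-1)*m+1)*k + 2*k := by ring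
            omega
        · -- deeper in block: e ≥ 1
          push_neg at hR2k
          set e : ℤ := (R-1) / (2*k) with he
          set r2 : ℤ := (R-1) % (2*k) with hr2
          have heq2 : 2*k*e + r2 = R-1 := Int.mul_ediv_add_emod _ _
          have hr20 : 0 ≤ r2 := Int.emod_nonneg _ (by omega)
          have hr21 : r2 < 2*k := Int.emod_lt_of_pos _ h2k
          have he1 : 1 ≤ e := by
            by_contra hcon
            push_neg at hcon
            have h1 : e ≤ 0 := by omega
            have : 2*k*e ≤ 0 := mul_nonpos_of_nonneg_of_nonpos (by omega) h1
            omega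
          have he2 : e ≤ 2*m' := by
            by_contra hcon
            push_neg at hcon
            have h1 : 2*m'+1 ≤ e := by omega
            have h2 : 2*k*(2*m'+1) ≤ 2*k*e := mul_le_mul_of_nonneg_left h1 (by omega)
            have h3 : R ≤ P - 1 := by omega
            nlinarith
          have hem : j = m → 2*e ≤ m - 1 := by
            intro hjem
            have hRb := hRm hjem
            by_contra hcon
            push_neg at hcon
            have h1 : m+1 ≤ 2*e := by omega
            have h2 : k*(m+1) ≤ k*(2*e) := mul_le_mul_of_nonneg_left h1 (by omega)
            nlinarith
          by_cases hr2s : r2 ≤ 2*a-1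
          · -- case (iii): F = j-1, t = T_j + e = 2jm'+j-m'+e
            right; right; right; left
            have hid1 : 2*(j-1)*m'+(j-1)+m'+2 = 2*j*m'+j-m'+1 := by ring
            have hid2 : 2*(j-1)*m'+(j-1)+3*m'+1 = 2*j*m'+j-m'+2*m' := by ring
            refine ⟨j-1, 2*j*m'+j-m'+e, by omega, by omega, by omega, by omega, ?_, ?_⟩
            · have h5 : 2*(2*j*m'+j-m'+e)*k = ((2*j-1)*m+1)*k + 2*k*e := by rw [hm]; ring
              omega
            · have h5 : 2*(2*j*m'+j-m'+e)*k = ((2*j-1)*m+1)*k + 2*k*e := by rw [hm]; ring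
              omega
          · -- T₁ window: t = (2j-2)m+1+2e, h = j+1
            left
            have hid4 : (2*j-2)*m + 2*m = 2*j*m := by ring
            have hprod : 0 ≤ (2*j-2)*m := mul_nonneg (by omega) (by omega)
            have htm : (2*j-2)*m+1+2*e ≤ (2*m-1)*m := by
              by_cases hjem : j = m
              · have := hem hjem
                rw [hjem]
                nlinarith
              · have hj2 : j ≤ m - 1 := by omega
                nlinarith [mul_nonneg (show (0:ℤ) ≤ m-1-j by omega) (show (0:ℤ) ≤ m by omega)]
            refine ⟨(2*j-2)*m+1+2*e, j+1, ⟨(j-1)*m+e, by ring⟩, by omega, htm,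
              Or.inr ⟨j, hj1, hjm, by omega, le_min (by omega) htm, rfl⟩, ?_, ?_⟩
            · have : (m+((2*j-2)*m+1+2*e))*k = ((2*j-1)*m+1)*k + 2*k*e := by ring
              omega
            · have : (m+((2*j-2)*m+1+2*e)+2)*k = ((2*j-1)*m+1)*k + 2*k*e + 2*k := by ring
              omega

/-- Case I `q = 2ak+m`: `Z = T₁ ∪ T₁'` and consequently
`Z ∩ (−qZ) = T₁'`. -/
theorem Z_eq_T1_union_T1'_case_I
    (m a k q n s α : ℕ)
    (hm1 : 1 ≤ m) (hmodd : Odd m)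
    (ha : a = m ^ 2 + 1)
    (hk : 1 ≤ k)
    (hq : q = 2 * a * k + m)
    (hqodd : Odd q) (hqpp : IsPrimePow q)
    (hn : n = (q ^ 2 + 1) / a)
    (hs : s = (n - 1) / 2)
    (hα1 : 1 ≤ α) (hαk : α ≤ k)
    (Z : Set (ZMod n))
    (hZ : Z = {x : ZMod n | ∃ i : ℕ, 1 ≤ i ∧ i ≤ α * q + m * k ∧
      (x = ((s + i : ℕ) : ZMod n) ∨ x = -((s + i : ℕ) : ZMod n))})
    (T₁ : Set (ZMod n))
    (hT₁ : T₁ = {x : ZMod n | ∃ t h v u : ℤ,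
      Odd t ∧ -(m : ℤ) ≤ t ∧ t ≤ (2 * (m : ℤ) - 1) * (m : ℤ) ∧
      ((-(m : ℤ) ≤ t ∧ t ≤ -1 ∧ h = 1) ∨
        (∃ j : ℤ, 1 ≤ j ∧ j ≤ (m : ℤ) ∧
          (2 * j - 2) * (m : ℤ) + 1 ≤ t ∧
          t ≤ min (2 * j * (m : ℤ) - 1) ((2 * (m : ℤ) - 1) * (m : ℤ)) ∧
          h = j + 1)) ∧
      ((s : ℤ) + ((m : ℤ) + t) * (k : ℤ) + h + (α : ℤ) ≤ v) ∧
      (v ≤ (s : ℤ) + ((m : ℤ) + t + 2) * (k : ℤ) + (h - 1) - (α : ℤ)) ∧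
      (0 ≤ u) ∧
      (if v ≤ (s : ℤ) + (m : ℤ) * (k : ℤ) then u ≤ (α : ℤ) else u ≤ (α : ℤ) - 1) ∧
      (x = ((u * (q : ℤ) + v : ℤ) : ZMod n) ∨ x = -((u * (q : ℤ) + v : ℤ) : ZMod n))})
    (T₁' : Set (ZMod n))
    (hT₁' : T₁' = {x : ZMod n | ∃ u v : ℤ, 0 ≤ u ∧
      ((u ≤ (α : ℤ) ∧ (s : ℤ) + 1 ≤ v ∧ v ≤ (s : ℤ) + (α : ℤ)) ∨
       (u ≤ (α : ℤ) ∧ ∃ t : ℤ, 1 ≤ t ∧ t ≤ ((m : ℤ) - 1) / 2 ∧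
         (s : ℤ) + 2 * t * (k : ℤ) + 1 - (α : ℤ) ≤ v ∧
         v ≤ (s : ℤ) + 2 * t * (k : ℤ) + (α : ℤ)) ∨
       (u ≤ (α : ℤ) - 1 ∧ ∃ f t : ℤ, Odd f ∧ 1 ≤ f ∧ f ≤ 2 * (m : ℤ) - 1 ∧
         (f * (m : ℤ) + 3) / 2 ≤ t ∧ t ≤ ((f + 2) * (m : ℤ) - 1) / 2 ∧
         (s : ℤ) + 2 * t * (k : ℤ) + (f + 3) / 2 - (α : ℤ) ≤ v ∧
         v ≤ (s : ℤ) + 2 * t * (k : ℤ) + (f + 1) / 2 + (α : ℤ)) ∨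
       (u ≤ (α : ℤ) - 1 ∧ ∃ t : ℤ, ((2 * (m : ℤ) - 1) * (m : ℤ) + 3) / 2 ≤ t ∧
         t ≤ (m : ℤ) ^ 2 ∧
         (s : ℤ) + 2 * t * (k : ℤ) + (m : ℤ) + 1 - (α : ℤ) ≤ v ∧
         v ≤ (s : ℤ) + 2 * t * (k : ℤ) + (m : ℤ) + (α : ℤ)) ∨
       (u ≤ (α : ℤ) - 1 ∧ (s : ℤ) + 2 * (a : ℤ) * (k : ℤ) + (m : ℤ) + 1 - (α : ℤ) ≤ v ∧
         v ≤ (s : ℤ) + (q : ℤ)) ∨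
       (u ≤ (α : ℤ) - 1 ∧ ∃ g : ℤ, Odd g ∧ 1 ≤ g ∧ g ≤ 2 * (m : ℤ) - 1 ∧
         (s : ℤ) + (g * (m : ℤ) + 1) * (k : ℤ) + (g + 1) / 2 - (α : ℤ) ≤ v ∧
         v ≤ (s : ℤ) + (g * (m : ℤ) + 1) * (k : ℤ) + (g + 1) / 2 + (α : ℤ))) ∧
      (x = ((u * (q : ℤ) + v : ℤ) : ZMod n) ∨ x = -((u * (q : ℤ) + v : ℤ) : ZMod n))}) :
    Z = T₁ ∪ T₁' ∧
      Z ∩ ((fun x : ZMod n => -(q : ZMod n) * x) '' Z) = T₁' := by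
  obtain ⟨m', hm'⟩ := hmodd
  have hn2 : n = 4*a*k^2+4*k*m+1 := by
    have h0 : q^2+1 = a*(4*a*k^2+4*k*m+1) := by subst hq ha; ring
    rw [hn, h0, Nat.mul_div_cancel_left _ (by omega)]
  have hs2 : s = 2*a*k^2+2*k*m := by
    have h1 : n = 2*(2*a*k^2+2*k*m)+1 := by rw [hn2]; ring
    rw [hs, h1, Nat.add_sub_cancel, Nat.mul_div_cancel_left _ (by norm_num : 0 < 2)]
  have zm : (m:ℤ) = 2*(m':ℤ)+1 := by rw [hm']; push_cast; ring
  have za : (a:ℤ) = (m:ℤ)^2+1 := by rw [ha]; push_cast; ring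
  have zq : (q:ℤ) = 2*(a:ℤ)*(k:ℤ)+(m:ℤ) := by rw [hq]; push_cast; ring
  have zn : (n:ℤ) = 4*(a:ℤ)*(k:ℤ)^2+4*(k:ℤ)*(m:ℤ)+1 := by rw [hn2]; push_cast; ring
  have zs : (s:ℤ) = 2*(a:ℤ)*(k:ℤ)^2+2*(k:ℤ)*(m:ℤ) := by rw [hs2]; push_cast; ring
  have hk1 : (1:ℤ) ≤ (k:ℤ) := by exact_mod_cast hk
  have hα1' : (1:ℤ) ≤ (α:ℤ) := by exact_mod_cast hα1
  have hαk' : (α:ℤ) ≤ (k:ℤ) := by exact_mod_cast hαk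
  have hm'0 : (0:ℤ) ≤ (m':ℤ) := by positivity
  have hk0 : (0:ℤ) ≤ (k:ℤ) := by linarith only [hk1]
  have hmk2 : (0:ℤ) ≤ (m':ℤ)*(k:ℤ) := mul_nonneg hm'0 hk0
  have hm2k : (0:ℤ) ≤ (m':ℤ)*(m':ℤ)*(k:ℤ) := mul_nonneg (mul_nonneg hm'0 hm'0) hk0
  have hq0 : (0:ℤ) < (q:ℤ) := by
    rw [zq, za, zm]; linarith only [hm2k, hmk2, hk1, hm'0]
  have hqmk : (m:ℤ)*(k:ℤ) + (α:ℤ) ≤ (q:ℤ) := by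
    rw [zq, za, zm]; linarith only [hαk', hm2k, hmk2, hm'0, hk1]
  have hm0' : (0:ℤ) ≤ (m:ℤ) := by rw [zm]; linarith only [hm'0]
  have hm1' : (1:ℤ) ≤ (m:ℤ) := by rw [zm]; linarith only [hm'0]
  have ha1' : (1:ℤ) ≤ (a:ℤ) := by rw [za]; linarith only [sq_nonneg ((m:ℤ))]
  have hak0 : (0:ℤ) ≤ (a:ℤ)*(k:ℤ) := mul_nonneg (by linarith only [ha1']) hk0
  have hka : (k:ℤ) ≤ (a:ℤ)*(k:ℤ) := by
    have hx := mul_le_mul_of_nonneg_right ha1' hk0; linarith only [hx]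
  have hmk0 : (0:ℤ) ≤ (m:ℤ)*(k:ℤ) := mul_nonneg hm0' hk0
  have hmk1 : (k:ℤ) ≤ (m:ℤ)*(k:ℤ) := by
    have hx := mul_le_mul_of_nonneg_right hm1' hk0; linarith only [hx]
  have hM1 : (1:ℤ) ≤ (α:ℤ)*(q:ℤ)+(m:ℤ)*(k:ℤ) := by
    have hx := mul_le_mul_of_nonneg_right hα1' (le_of_lt hq0)
    linarith only [hx, hq0, hmk0]
  have hqform : (q:ℤ) = 2*((2*(m':ℤ)+1)^2+1)*(k:ℤ)+(2*(m':ℤ)+1) := by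
    rw [zq, za, zm]
  have hzmk : (m:ℤ)*(k:ℤ) = 2*(m':ℤ)*(k:ℤ)+(k:ℤ) := by rw [zm]; ring
  have hqk : (q:ℤ) = 8*(m':ℤ)^2*(k:ℤ)+8*(m':ℤ)*(k:ℤ)+4*(k:ℤ)+2*(m':ℤ)+1 := by
    rw [zq, za, zm]; ring
  have h2km : (0:ℤ) ≤ 2*(k:ℤ)*(m:ℤ)+1 := by linarith only [hmk0]
  obtain ⟨Mn, hMn⟩ : ∃ Mn : ℕ, Mn = α*q+m*k := ⟨_, rfl⟩
  rw [← hMn] at hZ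
  have hMZ : ((Mn:ℕ):ℤ) = (α:ℤ)*(q:ℤ)+(m:ℤ)*(k:ℤ) := by rw [hMn]; push_cast; ring
  have hZneg : ∀ y : ZMod n, y ∈ Z → -y ∈ Z := by
    intro y hy; rw [hZ] at hy ⊢; obtain ⟨i, h1, h2, h3⟩ := hy
    exact ⟨i, h1, h2, by rcases h3 with h|h <;> simp [h]⟩
  have himg_mem : ∀ (J i : ℤ), 1 ≤ i → i ≤ ((Mn:ℕ):ℤ) →
      ((n:ℤ) ∣ J + (q:ℤ)*((s:ℤ)+i) ∨ (n:ℤ) ∣ J - (q:ℤ)*((s:ℤ)+i)) →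
      ((J : ℤ) : ZMod n) ∈ (fun x : ZMod n => -(q:ZMod n)*x) '' Z := by
    intro J i hi1 hi2 hdvd
    have hi0 : (0:ℤ) ≤ i := by omega
    have hmem : ((s + i.toNat : ℕ) : ZMod n) ∈ Z := by
      rw [hZ]
      exact ⟨i.toNat, by omega, by omega, Or.inl rfl⟩
    have hys : (((s:ℤ) + i : ℤ) : ZMod n) = ((s + i.toNat : ℕ) : ZMod n) := by
      have h9 : ((s + i.toNat : ℕ) : ℤ) = (s:ℤ) + i := by
        push_cast [Int.toNat_of_nonneg hi0]; ring
      rw [← h9]; push_cast; ring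
    rcases hdvd with hd | hd
    · refine ⟨((s + i.toNat : ℕ) : ZMod n), hmem, ?_⟩
      show -(q:ZMod n) * _ = _
      rw [← hys]
      have h1 : -(q:ZMod n) * (((s:ℤ) + i : ℤ) : ZMod n)
          = ((-((q:ℤ)*((s:ℤ)+i)) : ℤ) : ZMod n) := by push_cast; ring
      rw [h1]
      refine cast_eq_of_dvd ?_
      have h2 : -((q:ℤ)*((s:ℤ)+i)) - J = -(J + (q:ℤ)*((s:ℤ)+i)) := by ring
      rw [h2]; exact dvd_neg.mpr hd
    · refine ⟨-((s + i.toNat : ℕ) : ZMod n), hZneg _ hmem, ?_⟩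
      show -(q:ZMod n) * _ = _
      rw [← hys]
      have h1 : -(q:ZMod n) * -(((s:ℤ) + i : ℤ) : ZMod n)
          = (((q:ℤ)*((s:ℤ)+i) : ℤ) : ZMod n) := by push_cast; ring
      rw [h1]
      refine cast_eq_of_dvd ?_
      have h2 : (q:ℤ)*((s:ℤ)+i) - J = -(J - (q:ℤ)*((s:ℤ)+i)) := by ring
      rw [h2]; exact dvd_neg.mpr hd
  have hcase_mem : ∀ (J E C : ℤ), 1 - ((Mn:ℕ):ℤ) ≤ E → E ≤ ((Mn:ℕ):ℤ) →
      (J + (q:ℤ)*((s:ℤ)+E) = (n:ℤ)*C) →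
      ((J : ℤ) : ZMod n) ∈ (fun x : ZMod n => -(q:ZMod n)*x) '' Z := by
    intro J E C h1 h2 hC
    by_cases hE : 1 ≤ E
    · exact himg_mem J E hE h2 (Or.inl ⟨C, hC⟩)
    · refine himg_mem J (1-E) (by omega) (by omega) (Or.inr ⟨C - q, ?_⟩)
      have h2s : 2*(s:ℤ)+1 = (n:ℤ) := by rw [zs, zn]; ring
      push_cast
      linear_combination hC - (q:ℤ)*h2s
  have himg_neg : ∀ x : ZMod n, x ∈ (fun x : ZMod n => -(q:ZMod n)*x) '' Z →
      -x ∈ (fun x : ZMod n => -(q:ZMod n)*x) '' Z := by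
    rintro x ⟨y, hy, hxy⟩
    refine ⟨-y, hZneg y hy, ?_⟩
    have hxy' : -(q:ZMod n) * y = x := hxy
    show -(q:ZMod n) * -y = -x
    rw [← hxy']; ring
  have hmemZ : ∀ (x : ZMod n) (u v : ℤ), 1 ≤ u*(q:ℤ)+v-(s:ℤ) → u*(q:ℤ)+v-(s:ℤ) ≤ ((Mn:ℕ):ℤ) →
      (x = ((u*(q:ℤ)+v : ℤ) : ZMod n) ∨ x = -((u*(q:ℤ)+v : ℤ) : ZMod n)) → x ∈ Z := by
    intro x u v h1 h2 hx
    obtain ⟨I, hI⟩ : ∃ I : ℤ, I = u*(q:ℤ)+v-(s:ℤ) := ⟨_, rfl⟩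
    rw [← hI] at h1 h2
    have hJI : u*(q:ℤ)+v = (s:ℤ)+I := by rw [hI]; ring
    rw [hZ]
    refine ⟨I.toNat, by omega, by omega, ?_⟩
    have hser : ((s + I.toNat : ℕ) : ℤ) = u*(q:ℤ)+v := by
      push_cast [Int.toNat_of_nonneg (by omega : (0:ℤ) ≤ I)]
      linarith only [hJI]
    have hser2 : ((s + I.toNat : ℕ) : ZMod n) = ((u*(q:ℤ)+v : ℤ) : ZMod n) := by
      rw [← hser]; push_cast; ring
    rcases hx with h | h
    · exact Or.inl (by rw [h, hser2])
    · exact Or.inr (by rw [h, hser2])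
  have hT1sub : T₁ ⊆ Z := by
    rw [hT₁]
    rintro x ⟨t, h, v, u, hodd, htl, hth, hbr, hv1, hv2, hu0, hif, hx⟩
    have huq0 : (0:ℤ) ≤ u*(q:ℤ) := mul_nonneg hu0 (le_of_lt hq0)
    have hh1 : 1 ≤ h ∧ h ≤ (m:ℤ)+1 := by
      rcases hbr with ⟨_, _, hh⟩ | ⟨j, hj1, hjm, _, _, hh⟩ <;> subst hh
      · exact ⟨le_refl _, by linarith only [hm0']⟩
      · exact ⟨by linarith only [hj1], by linarith only [hjm]⟩
    have hδ1 : 1 ≤ v - (s:ℤ) := by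
      have h1 : (0:ℤ) ≤ ((m:ℤ)+t)*k := mul_nonneg (by linarith only [htl]) hk0
      linarith only [h1, hv1, hh1.1, hα1']
    have hi1 : 1 ≤ u*(q:ℤ)+v-(s:ℤ) := by linarith only [hδ1, huq0]
    have hi2 : u*(q:ℤ)+v-(s:ℤ) ≤ ((Mn:ℕ):ℤ) := by
      rw [hMZ]
      by_cases hc : v ≤ (s:ℤ)+(m:ℤ)*k
      · rw [if_pos hc] at hif
        have h3 : u*(q:ℤ) ≤ (α:ℤ)*q := mul_le_mul_of_nonneg_right hif (le_of_lt hq0)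
        linarith only [h3, hc]
      · rw [if_neg hc] at hif
        have h3 : u*(q:ℤ) ≤ ((α:ℤ)-1)*q := mul_le_mul_of_nonneg_right hif (le_of_lt hq0)
        have h4 : ((m:ℤ)+t+2)*k ≤ (2*(m:ℤ)^2+2)*k := by
          apply mul_le_mul_of_nonneg_right _ hk0
          linarith only [hth]
        have h5 : v - (s:ℤ) ≤ (q:ℤ) - (α:ℤ) := by
          rw [zq, za]; linarith only [hv2, h4, hh1.2]
        linarith only [h3, h5, hmk0]
    exact hmemZ x u v hi1 hi2 hx
  have hT1'sub : T₁' ⊆ Z := by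
    rw [hT₁']
    rintro x ⟨u, v, hu0, hcase, hx⟩
    have huq0 : (0:ℤ) ≤ u*(q:ℤ) := mul_nonneg hu0 (le_of_lt hq0)
    have hbounds : 1 ≤ u*(q:ℤ)+v-(s:ℤ) ∧ u*(q:ℤ)+v-(s:ℤ) ≤ ((Mn:ℕ):ℤ) := by
      rw [hMZ]
      rcases hcase with ⟨huα, h1, h2⟩ | ⟨huα, t, ht1, ht2, h1, h2⟩ |
        ⟨huα, f, t, hfo, hf1, hf2, ht1, ht2, h1, h2⟩ | ⟨huα, t, ht1, ht2, h1, h2⟩ |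
        ⟨huα, h1, h2⟩ | ⟨huα, g, hgo, hg1, hg2, h1, h2⟩
      · -- (i)
        have h3 : u*(q:ℤ) ≤ (α:ℤ)*q := mul_le_mul_of_nonneg_right huα (le_of_lt hq0)
        exact ⟨by linarith only [huq0, h1], by linarith only [h3, h2, hαk', hmk1]⟩
      · -- (ii)
        have hdiv2 : ((m:ℤ)-1)/2 = (m':ℤ) := by rw [zm]; omega
        rw [hdiv2] at ht2
        have h3 : u*(q:ℤ) ≤ (α:ℤ)*q := mul_le_mul_of_nonneg_right huα (le_of_lt hq0)
        have h4 : t*(k:ℤ) ≤ (m':ℤ)*k := mul_le_mul_of_nonneg_right ht2 hk0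
        have h5 : 1*(k:ℤ) ≤ t*k := mul_le_mul_of_nonneg_right ht1 hk0
        constructor
        · linarith only [huq0, h1, h5, hαk', hk1]
        · linarith only [h3, h2, h4, hαk', hzmk]
      · -- (iii)
        obtain ⟨F, hf⟩ := hfo
        have hF0 : (0:ℤ) ≤ F := by omega
        have hF2 : F ≤ 2*(m':ℤ) := by rw [zm] at hf2; omega
        have hnum1 : f*(m:ℤ)+3 = 2*(2*F*(m':ℤ)+F+(m':ℤ)+2) := by rw [hf, zm]; ring
        have hnum2 : (f+2)*(m:ℤ)-1 = 2*(2*F*(m':ℤ)+F+3*(m':ℤ)+1) := by rw [hf, zm]; ring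
        have ht1' : 2*F*(m':ℤ)+F+(m':ℤ)+2 ≤ t := by
          rw [hnum1, Int.mul_ediv_cancel_left _ (by norm_num : (2:ℤ) ≠ 0)] at ht1
          exact ht1
        have ht2' : t ≤ 2*F*(m':ℤ)+F+3*(m':ℤ)+1 := by
          rw [hnum2, Int.mul_ediv_cancel_left _ (by norm_num : (2:ℤ) ≠ 0)] at ht2
          exact ht2
        rw [show (f+3)/2 = F+2 from by omega] at h1
        rw [show (f+1)/2 = F+1 from by omega] at h2
        have hFm' : (0:ℤ) ≤ F*(m':ℤ) := mul_nonneg hF0 hm'0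
        have htk1 : (2*F*(m':ℤ)+F+(m':ℤ)+2)*(k:ℤ) ≤ t*k := mul_le_mul_of_nonneg_right ht1' hk0
        have htk2 : t*(k:ℤ) ≤ (2*F*(m':ℤ)+F+3*(m':ℤ)+1)*k := mul_le_mul_of_nonneg_right ht2' hk0
        have hFk : F*(k:ℤ) ≤ 2*(m':ℤ)*(k:ℤ) := mul_le_mul_of_nonneg_right hF2 hk0
        have hFk0 : (0:ℤ) ≤ F*(k:ℤ) := mul_nonneg hF0 hk0
        have hFm'k : F*((m':ℤ)*(k:ℤ)) ≤ 2*(m':ℤ)*((m':ℤ)*(k:ℤ)) :=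
          mul_le_mul_of_nonneg_right hF2 hmk2
        have hFm'k0 : (0:ℤ) ≤ F*((m':ℤ)*(k:ℤ)) := mul_nonneg hF0 hmk2
        have h3 : u*(q:ℤ) ≤ ((α:ℤ)-1)*q := mul_le_mul_of_nonneg_right huα (le_of_lt hq0)
        constructor
        · linarith only [huq0, h1, htk1, hFm'k0, hFk0, hmk2, hαk', hk1, hF0]
        · linarith only [h3, h2, htk2, hFk, hFm'k, hqk, hzmk, hαk', hk1, hF2, hm'0]
      · -- (iv)
        have hnum1 : (2*(m:ℤ)-1)*(m:ℤ)+3 = 2*(4*(m':ℤ)^2+3*m'+2) := by rw [zm]; ring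
        have ht1' : 4*(m':ℤ)^2+3*m'+2 ≤ t := by
          rw [hnum1, Int.mul_ediv_cancel_left _ (by norm_num : (2:ℤ) ≠ 0)] at ht1
          exact ht1
        have hm2 : (m:ℤ)^2 = 4*(m':ℤ)^2+4*m'+1 := by rw [zm]; ring
        have ht2' : t ≤ 4*(m':ℤ)^2+4*m'+1 := by rw [hm2] at ht2; exact ht2
        have htk1 : (4*(m':ℤ)^2+3*m'+2)*(k:ℤ) ≤ t*k := mul_le_mul_of_nonneg_right ht1' hk0
        have htk2 : t*(k:ℤ) ≤ (4*(m':ℤ)^2+4*m'+1)*(k:ℤ) := mul_le_mul_of_nonneg_right ht2' hk0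
        have h3 : u*(q:ℤ) ≤ ((α:ℤ)-1)*q := mul_le_mul_of_nonneg_right huα (le_of_lt hq0)
        have hsq : (0:ℤ) ≤ (m':ℤ)^2*(k:ℤ) := mul_nonneg (sq_nonneg _) hk0
        constructor
        · linarith only [huq0, h1, htk1, hsq, hmk2, hαk', hk1, hm0']
        · linarith only [h3, h2, htk2, hqk, hzmk, zm, hαk', hk1, hmk0]
      · -- (v)
        have h3 : u*(q:ℤ) ≤ ((α:ℤ)-1)*q := mul_le_mul_of_nonneg_right huα (le_of_lt hq0)
        constructor
        · linarith only [huq0, h1, zq, hqmk, hmk0, hα1']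
        · linarith only [h3, h2, hmk0]
      · -- (vi)
        obtain ⟨G, hg⟩ := hgo
        have hG0 : (0:ℤ) ≤ G := by omega
        have hG2 : G ≤ 2*(m':ℤ) := by rw [zm] at hg2; omega
        rw [show (g+1)/2 = G+1 from by omega] at h1 h2
        have hgm1 : (1:ℤ) ≤ g*(m:ℤ) := by
          have hp := mul_nonneg (by linarith only [hg1] : (0:ℤ) ≤ g-1)
            (by linarith only [hm1'] : (0:ℤ) ≤ (m:ℤ)-1)
          linarith only [hp, hg1, hm1']
        have hgk1 : 2*(k:ℤ) ≤ (g*(m:ℤ)+1)*k :=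
          mul_le_mul_of_nonneg_right (by linarith only [hgm1]) hk0
        have hgk2 : (g*(m:ℤ)+1)*(k:ℤ) ≤ ((4*(m':ℤ)+1)*(m:ℤ)+1)*k := by
          apply mul_le_mul_of_nonneg_right _ hk0
          have hg4 : g ≤ 4*(m':ℤ)+1 := by rw [zm] at hg2; omega
          have hp2 := mul_nonneg (by linarith only [hg4] : (0:ℤ) ≤ 4*(m':ℤ)+1-g) hm0'
          linarith only [hp2]
        have hexp : ((4*(m':ℤ)+1)*(m:ℤ)+1)*(k:ℤ) = 8*(m':ℤ)^2*(k:ℤ)+6*(m':ℤ)*(k:ℤ)+2*(k:ℤ) := by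
          rw [zm]; ring
        rw [hexp] at hgk2
        have h3 : u*(q:ℤ) ≤ ((α:ℤ)-1)*q := mul_le_mul_of_nonneg_right huα (le_of_lt hq0)
        constructor
        · linarith only [huq0, h1, hgk1, hG0, hαk', hk1]
        · linarith only [h3, h2, hgk2, hqk, hzmk, hG2, hαk', hk1, hmk2]
    exact hmemZ x u v hbounds.1 hbounds.2 hx
  have hZsub : Z ⊆ T₁ ∪ T₁' := by
    rw [hZ, hT₁, hT₁']
    rintro x ⟨i, hi1, hi2, hx⟩
    have hI1 : 1 ≤ (i:ℤ) := by exact_mod_cast hi1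
    have hI2 : (i:ℤ) ≤ ((Mn:ℕ):ℤ) := by exact_mod_cast hi2
    have hI2' : (i:ℤ) ≤ (α:ℤ)*(q:ℤ)+(m:ℤ)*(k:ℤ) := by rw [← hMZ]; exact hI2
    obtain ⟨u, hu⟩ : ∃ u : ℤ, u = ((i:ℤ)-1)/(q:ℤ) := ⟨_, rfl⟩
    obtain ⟨r, hr9⟩ : ∃ r : ℤ, r = ((i:ℤ)-1)%(q:ℤ) := ⟨_, rfl⟩
    have heq : (q:ℤ)*u + r = (i:ℤ)-1 := by rw [hu, hr9]; exact Int.mul_ediv_add_emod _ _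
    have hr0 : 0 ≤ r := by rw [hr9]; exact Int.emod_nonneg _ (ne_of_gt hq0)
    have hr1 : r < (q:ℤ) := by rw [hr9]; exact Int.emod_lt_of_pos _ hq0
    have hu0 : 0 ≤ u := by rw [hu]; exact Int.ediv_nonneg (by omega) (by omega)
    have huα : u ≤ (α:ℤ) := by
      by_contra hcon
      push_neg at hcon
      have h1 : (α:ℤ)+1 ≤ u := by omega
      have h2 : (q:ℤ)*((α:ℤ)+1) ≤ (q:ℤ)*u := mul_le_mul_of_nonneg_left h1 (le_of_lt hq0)
      linarith only [h2, heq, hI2', hqmk, hr0]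
    have huαmk : u = (α:ℤ) → r + 1 ≤ (m:ℤ)*(k:ℤ) := by
      intro hueq
      rw [hueq] at heq
      linarith only [heq, hI2']
    have hδ1 : (1:ℤ) ≤ r+1 := by omega
    have hδq : r+1 ≤ (q:ℤ) := by omega
    have hcov := cover_lemma (m':ℤ) (k:ℤ) (α:ℤ) (r+1) hm'0 hk1 hα1' hαk' hδ1
      (by rw [← hqform]; exact hδq)
    have hJ : ((u*(q:ℤ)+((s:ℤ)+(r+1)) : ℤ) : ZMod n) = ((s+i : ℕ) : ZMod n) := by
      have h9 : u*(q:ℤ)+((s:ℤ)+(r+1)) = ((s+i:ℕ):ℤ) := by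
        push_cast
        linear_combination heq
      rw [h9]; push_cast; ring
    have hx' : x = ((u*(q:ℤ)+((s:ℤ)+(r+1)) : ℤ) : ZMod n) ∨
        x = -((u*(q:ℤ)+((s:ℤ)+(r+1)) : ℤ) : ZMod n) := by
      rcases hx with hh | hh
      · exact Or.inl (by rw [hh, hJ])
      · exact Or.inr (by rw [hh, hJ])
    have humk : ¬ ((s:ℤ)+(r+1) ≤ (s:ℤ)+(m:ℤ)*(k:ℤ)) → u ≤ (α:ℤ)-1 := by
      intro hc
      rcases eq_or_lt_of_le huα with he | hl
      · exact absurd (by linarith only [huαmk he] : (s:ℤ)+(r+1) ≤ (s:ℤ)+(m:ℤ)*(k:ℤ)) hc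
      · omega
    rcases hcov with ⟨t, h, hodd, hc1, hc2, hbr, hw1, hw2⟩ | ⟨h1, h2⟩ | ⟨t, ht1, ht2, h1, h2⟩ |
        ⟨F, t, hF0, hF2, ht1, ht2, h1, h2⟩ | h1 | ⟨G, hG0, hG2, h1, h2⟩
    · -- T₁
      left
      refine ⟨t, h, (s:ℤ)+(r+1), u, hodd, ?_, ?_, ?_, ?_, ?_, hu0, ?_, hx'⟩
      · rw [zm]; exact hc1
      · rw [zm]; exact hc2
      · rw [zm]; exact hbr
      · rw [zm]; linarith only [hw1]
      · rw [zm]; linarith only [hw2]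
      · by_cases hc : (s:ℤ)+(r+1) ≤ (s:ℤ)+(m:ℤ)*(k:ℤ)
        · rw [if_pos hc]; exact huα
        · rw [if_neg hc]; exact humk hc
    · -- (i)
      right
      exact ⟨u, (s:ℤ)+(r+1), hu0, Or.inl ⟨huα, by linarith only [h1], by linarith only [h2]⟩, hx'⟩
    · -- (ii)
      right
      refine ⟨u, (s:ℤ)+(r+1), hu0, Or.inr (Or.inl ⟨huα, t, ht1, ?_,
        by linarith only [h1], by linarith only [h2]⟩), hx'⟩
      have hdiv2 : ((m:ℤ)-1)/2 = (m':ℤ) := by rw [zm]; omega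
      rw [hdiv2]; exact ht2
    · -- (iii)
      right
      have htk : (2*F*(m':ℤ)+F+(m':ℤ)+2)*(k:ℤ) ≤ t*(k:ℤ) := mul_le_mul_of_nonneg_right ht1 hk0
      have hFm'k : (0:ℤ) ≤ F*((m':ℤ)*(k:ℤ)) := mul_nonneg hF0 hmk2
      have hFk : (0:ℤ) ≤ F*(k:ℤ) := mul_nonneg hF0 hk0
      have hu1 : u ≤ (α:ℤ)-1 := by
        apply humk
        intro hc
        have : False := by linarith only [hc, h1, htk, hFm'k, hFk, hzmk, hαk', hk1, hmk2, hF0]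
        exact this.elim
      refine ⟨u, (s:ℤ)+(r+1), hu0, Or.inr (Or.inr (Or.inl
        ⟨hu1, 2*F+1, t, ⟨F, by ring⟩, by omega, ?_, ?_, ?_, ?_, ?_⟩)), hx'⟩
      · rw [zm]; omega
      · have hnum1 : (2*F+1)*(m:ℤ)+3 = 2*(2*F*(m':ℤ)+F+(m':ℤ)+2) := by rw [zm]; ring
        rw [hnum1, Int.mul_ediv_cancel_left _ (by norm_num : (2:ℤ) ≠ 0)]
        exact ht1
      · have hnum2 : ((2*F+1)+2)*(m:ℤ)-1 = 2*(2*F*(m':ℤ)+F+3*(m':ℤ)+1) := by rw [zm]; ring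
        rw [hnum2, Int.mul_ediv_cancel_left _ (by norm_num : (2:ℤ) ≠ 0)]
        exact ht2
      · rw [show ((2*F+1:ℤ)+3)/2 = F+2 from by omega]; linarith only [h1]
      · rw [show ((2*F+1:ℤ)+1)/2 = F+1 from by omega]; linarith only [h2]
    · -- (v)
      right
      have hu1 : u ≤ (α:ℤ)-1 := by
        apply humk
        intro hc
        have : False := by linarith only [hc, h1, hzmk, hαk', hk1, hmk2, hm2k]
        exact this.elim
      have hqa : 2*(a:ℤ)*(k:ℤ)+(m:ℤ) = 2*((2*(m':ℤ)+1)^2+1)*(k:ℤ)+(2*(m':ℤ)+1) := by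
        rw [za, zm]
      refine ⟨u, (s:ℤ)+(r+1), hu0, Or.inr (Or.inr (Or.inr (Or.inr (Or.inl
        ⟨hu1, by linarith only [h1, hqa], by linarith only [hδq]⟩)))), hx'⟩
    · -- (vi)
      right
      have hGk : (0:ℤ) ≤ G*(k:ℤ) := mul_nonneg hG0 hk0
      have hGm'k : (0:ℤ) ≤ G*((m':ℤ)*(k:ℤ)) := mul_nonneg hG0 hmk2
      have hu1 : u ≤ (α:ℤ)-1 := by
        apply humk
        intro hc
        have : False := by linarith only [hc, h1, hGk, hGm'k, hzmk, hαk', hG0, hk1, hmk2]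
        exact this.elim
      refine ⟨u, (s:ℤ)+(r+1), hu0, Or.inr (Or.inr (Or.inr (Or.inr (Or.inr
        ⟨hu1, 2*G+1, ⟨G, by ring⟩, by omega, ?_, ?_, ?_⟩)))), hx'⟩
      · rw [zm]; omega
      · rw [show ((2*G+1:ℤ)+1)/2 = G+1 from by omega, zm]; linarith only [h1]
      · rw [show ((2*G+1:ℤ)+1)/2 = G+1 from by omega, zm]; linarith only [h2]
  have hpart1 : Z = T₁ ∪ T₁' := Set.Subset.antisymm hZsub (Set.union_subset hT1sub hT1'sub)
  have hβ0 : (0:ℤ) ≤ (a:ℤ)*(k:ℤ)+(m':ℤ) := by linarith [hak0]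
  have hαq0 : (0:ℤ) ≤ (α:ℤ)*(q:ℤ) := mul_nonneg (by linarith) (le_of_lt hq0)
  have ham : (a:ℤ)*(k:ℤ) = 4*(m':ℤ)^2*(k:ℤ)+4*(m':ℤ)*(k:ℤ)+2*(k:ℤ) := by rw [za, zm]; ring
  have hcoef : (0:ℤ) ≤ (4*(m':ℤ)+2)*(k:ℤ)+1 := by
    have hx := mul_nonneg (by linarith only [hm'0] : (0:ℤ) ≤ 4*(m':ℤ)+2) hk0
    linarith only [hx]
  have hT1'img : T₁' ⊆ (fun x : ZMod n => -(q:ZMod n)*x) '' Z := by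
    rw [hT₁']
    rintro x ⟨u, v, hu0, hcase, hx⟩
    suffices hJm : ((u*(q:ℤ)+v : ℤ) : ZMod n) ∈ (fun x : ZMod n => -(q:ZMod n)*x) '' Z by
      rcases hx with hh | hh
      · rw [hh]; exact hJm
      · rw [hh]; exact himg_neg _ hJm
    rcases hcase with ⟨huα, h1, h2⟩ | ⟨huα, t, ht1, ht2, h1, h2⟩ |
      ⟨huα, f, t, hfo, hf1, hf2, ht1, ht2, h1, h2⟩ | ⟨huα, t, ht1, ht2, h1, h2⟩ |
      ⟨huα, h1, h2⟩ | ⟨huα, g, hgo, hg1, hg2, h1, h2⟩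
    · -- (i)
      refine hcase_mem _ ((q:ℤ)*(v-(s:ℤ))-u-((a:ℤ)*(k:ℤ)+(m':ℤ)))
        ((a:ℤ)*(v-(s:ℤ))+(a:ℤ)*(k:ℤ)-(m:ℤ)*(m':ℤ)) ?_ ?_ ?_
      · rw [hMZ]
        have hq1 : (q:ℤ)*1 ≤ (q:ℤ)*(v-(s:ℤ)) :=
          mul_le_mul_of_nonneg_left (by linarith) (le_of_lt hq0)
        linarith only [hq1, huα, hqk, ham, hαq0, hmk0, hαk', hm2k, hmk2, hk1, hm'0]
      · rw [hMZ]
        have hq2 : (q:ℤ)*(v-(s:ℤ)) ≤ (q:ℤ)*(α:ℤ) :=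
          mul_le_mul_of_nonneg_left (by linarith) (le_of_lt hq0)
        linarith only [hq2, hu0, hβ0, hmk0]
      · rw [zq, zs, zn, za, zm]; ring
    · -- (ii)
      have hdiv2 : ((m:ℤ)-1)/2 = (m':ℤ) := by rw [zm]; omega
      rw [hdiv2] at ht2
      have hqwl : (q:ℤ)*(1-(α:ℤ)) ≤ (q:ℤ)*(v-(s:ℤ)-2*t*(k:ℤ)) :=
        mul_le_mul_of_nonneg_left (by linarith) (le_of_lt hq0)
      have hqwu : (q:ℤ)*(v-(s:ℤ)-2*t*(k:ℤ)) ≤ (q:ℤ)*(α:ℤ) :=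
        mul_le_mul_of_nonneg_left (by linarith) (le_of_lt hq0)
      have htl : ((4*(m':ℤ)+2)*(k:ℤ)+1)*1 ≤ ((4*(m':ℤ)+2)*(k:ℤ)+1)*t :=
        mul_le_mul_of_nonneg_left ht1 hcoef
      have htu : ((4*(m':ℤ)+2)*(k:ℤ)+1)*t ≤ ((4*(m':ℤ)+2)*(k:ℤ)+1)*(m':ℤ) :=
        mul_le_mul_of_nonneg_left ht2 hcoef
      have hred : (q:ℤ)*(v-(s:ℤ))-u-((a:ℤ)*(k:ℤ)+(m':ℤ))-(n:ℤ)*t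
          = (q:ℤ)*(v-(s:ℤ)-2*t*(k:ℤ)) - ((4*(m':ℤ)+2)*(k:ℤ)+1)*t - u
            - ((4*(m':ℤ)^2+4*(m':ℤ)+2)*(k:ℤ)+(m':ℤ)) := by
        rw [zq, zs, zn, za, zm]; ring
      refine hcase_mem _ ((q:ℤ)*(v-(s:ℤ))-u-((a:ℤ)*(k:ℤ)+(m':ℤ))-(n:ℤ)*t)
        ((a:ℤ)*(v-(s:ℤ))+(a:ℤ)*(k:ℤ)-(m:ℤ)*(m':ℤ)-(q:ℤ)*t) ?_ ?_ ?_
      · rw [hMZ, hred]; linarith only [hqwl, htu, huα, hqk, hzmk, hm2k, hmk2, hαk', hk1, hm'0]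
      · rw [hMZ, hred]; linarith only [hqwu, htl, hu0, hzmk, hmk2, hm2k, hk1, hm'0]
      · rw [zq, zs, zn, za, zm]; ring
    · -- (iii)
      obtain ⟨F, hf⟩ := hfo
      subst hf
      have hF0 : (0:ℤ) ≤ F := by omega
      have hF2 : F ≤ 2*(m':ℤ) := by rw [zm] at hf2; omega
      have hnum1 : (2*F+1)*(m:ℤ)+3 = 2*(2*F*(m':ℤ)+F+(m':ℤ)+2) := by rw [zm]; ring
      have hnum2 : ((2*F+1)+2)*(m:ℤ)-1 = 2*(2*F*(m':ℤ)+F+3*(m':ℤ)+1) := by rw [zm]; ring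
      rw [hnum1, Int.mul_ediv_cancel_left _ (by norm_num : (2:ℤ) ≠ 0)] at ht1
      rw [hnum2, Int.mul_ediv_cancel_left _ (by norm_num : (2:ℤ) ≠ 0)] at ht2
      rw [show ((2*F+1:ℤ)+3)/2 = F+2 from by omega] at h1
      rw [show ((2*F+1:ℤ)+1)/2 = F+1 from by omega] at h2
      have hqwl : (q:ℤ)*(1-(α:ℤ)) ≤ (q:ℤ)*(v-(s:ℤ)-2*t*(k:ℤ)-(F+1)) :=
        mul_le_mul_of_nonneg_left (by linarith) (le_of_lt hq0)
      have hqwu : (q:ℤ)*(v-(s:ℤ)-2*t*(k:ℤ)-(F+1)) ≤ (q:ℤ)*(α:ℤ) :=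
        mul_le_mul_of_nonneg_left (by linarith) (le_of_lt hq0)
      have htl : ((4*(m':ℤ)+2)*(k:ℤ)+1)*(2*F*(m':ℤ)+F+(m':ℤ)+2) ≤ ((4*(m':ℤ)+2)*(k:ℤ)+1)*t :=
        mul_le_mul_of_nonneg_left ht1 hcoef
      have htu : ((4*(m':ℤ)+2)*(k:ℤ)+1)*t ≤ ((4*(m':ℤ)+2)*(k:ℤ)+1)*(2*F*(m':ℤ)+F+3*(m':ℤ)+1) :=
        mul_le_mul_of_nonneg_left ht2 hcoef
      have hqF : (q:ℤ)*F = 8*(m':ℤ)^2*(k:ℤ)*F+8*(m':ℤ)*(k:ℤ)*F+4*(k:ℤ)*F+2*(m':ℤ)*F+F := by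
        rw [hqk]; ring
      have hFk0 : (0:ℤ) ≤ F*(k:ℤ) := mul_nonneg hF0 hk0
      have hFk2 : F*(k:ℤ) ≤ 2*(m':ℤ)*(k:ℤ) := mul_le_mul_of_nonneg_right hF2 hk0
      have hred : (q:ℤ)*(v-(s:ℤ))-u-((a:ℤ)*(k:ℤ)+(m':ℤ))-(n:ℤ)*t
          = (q:ℤ)*F + (q:ℤ) - ((4*(m':ℤ)+2)*(k:ℤ)+1)*t - u
            - ((4*(m':ℤ)^2+4*(m':ℤ)+2)*(k:ℤ)+(m':ℤ))
            + (q:ℤ)*(v-(s:ℤ)-2*t*(k:ℤ)-(F+1)) := by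
        rw [zq, zs, zn, za, zm]; ring
      refine hcase_mem _ ((q:ℤ)*(v-(s:ℤ))-u-((a:ℤ)*(k:ℤ)+(m':ℤ))-(n:ℤ)*t)
        ((a:ℤ)*(v-(s:ℤ))+(a:ℤ)*(k:ℤ)-(m:ℤ)*(m':ℤ)-(q:ℤ)*t) ?_ ?_ ?_
      · rw [hMZ, hred]; linarith only [hqF, htu, hqwl, huα, hqk, hzmk, hFk0, hαk', hk1, hm'0, hmk2, hm2k]
      · rw [hMZ, hred]; linarith only [hqF, htl, hqwu, hu0, hqk, hzmk, hFk2, hFk0, hαk', hk1, hm'0, hmk2, hm2k, hF2]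
      · rw [zq, zs, zn, za, zm]; ring
    · -- (iv)
      have hnum1 : (2*(m:ℤ)-1)*(m:ℤ)+3 = 2*(4*(m':ℤ)^2+3*(m':ℤ)+2) := by rw [zm]; ring
      rw [hnum1, Int.mul_ediv_cancel_left _ (by norm_num : (2:ℤ) ≠ 0)] at ht1
      rw [show (m:ℤ)^2 = 4*(m':ℤ)^2+4*(m':ℤ)+1 from by rw [zm]; ring] at ht2
      have hqwl : (q:ℤ)*(1-(α:ℤ)) ≤ (q:ℤ)*(v-(s:ℤ)-2*t*(k:ℤ)-(m:ℤ)) :=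
        mul_le_mul_of_nonneg_left (by linarith) (le_of_lt hq0)
      have hqwu : (q:ℤ)*(v-(s:ℤ)-2*t*(k:ℤ)-(m:ℤ)) ≤ (q:ℤ)*(α:ℤ) :=
        mul_le_mul_of_nonneg_left (by linarith) (le_of_lt hq0)
      have htl : ((4*(m':ℤ)+2)*(k:ℤ)+1)*(4*(m':ℤ)^2+3*(m':ℤ)+2) ≤ ((4*(m':ℤ)+2)*(k:ℤ)+1)*t :=
        mul_le_mul_of_nonneg_left ht1 hcoef
      have htu : ((4*(m':ℤ)+2)*(k:ℤ)+1)*t ≤ ((4*(m':ℤ)+2)*(k:ℤ)+1)*(4*(m':ℤ)^2+4*(m':ℤ)+1) :=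
        mul_le_mul_of_nonneg_left ht2 hcoef
      have hred : (q:ℤ)*(v-(s:ℤ))-u-((a:ℤ)*(k:ℤ)+(m':ℤ))-(n:ℤ)*t
          = (q:ℤ)*(2*(m':ℤ)+1) - ((4*(m':ℤ)+2)*(k:ℤ)+1)*t - u
            - ((4*(m':ℤ)^2+4*(m':ℤ)+2)*(k:ℤ)+(m':ℤ))
            + (q:ℤ)*(v-(s:ℤ)-2*t*(k:ℤ)-(m:ℤ)) := by
        rw [zq, zs, zn, za, zm]; ring
      have hqm' : (q:ℤ)*(2*(m':ℤ)+1) = 16*(m':ℤ)^3*(k:ℤ)+24*(m':ℤ)^2*(k:ℤ)+16*(m':ℤ)*(k:ℤ)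
          +4*(k:ℤ)+4*(m':ℤ)^2+4*(m':ℤ)+1 := by rw [hqk]; ring
      refine hcase_mem _ ((q:ℤ)*(v-(s:ℤ))-u-((a:ℤ)*(k:ℤ)+(m':ℤ))-(n:ℤ)*t)
        ((a:ℤ)*(v-(s:ℤ))+(a:ℤ)*(k:ℤ)-(m:ℤ)*(m':ℤ)-(q:ℤ)*t) ?_ ?_ ?_
      · rw [hMZ, hred]; linarith only [hqm', htu, hqwl, huα, hqk, hzmk, hαk', hk1, hm'0, hmk2, hm2k]
      · rw [hMZ, hred]; linarith only [hqm', htl, hqwu, hu0, hqk, hzmk, hαk', hk1, hm'0, hmk2, hm2k]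
      · rw [zq, zs, zn, za, zm]; ring
    · -- (v)
      have hzq2 : (s:ℤ)+2*(a:ℤ)*(k:ℤ)+(m:ℤ) = (s:ℤ)+(q:ℤ) := by rw [zq]; ring
      rw [show (s:ℤ)+2*(a:ℤ)*(k:ℤ)+(m:ℤ)+1-(α:ℤ) = (s:ℤ)+2*(a:ℤ)*(k:ℤ)+(m:ℤ)+(1-(α:ℤ)) from by ring,
        hzq2] at h1
      have hqwl : (q:ℤ)*(1-(α:ℤ)) ≤ (q:ℤ)*(v-(s:ℤ)-(q:ℤ)) :=
        mul_le_mul_of_nonneg_left (by linarith) (le_of_lt hq0)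
      have hqwu : (q:ℤ)*(v-(s:ℤ)-(q:ℤ)) ≤ (q:ℤ)*0 :=
        mul_le_mul_of_nonneg_left (by linarith) (le_of_lt hq0)
      have hred : (q:ℤ)*(v-(s:ℤ))-u-((a:ℤ)*(k:ℤ)+(m':ℤ))-(n:ℤ)*(a:ℤ)
          = (q:ℤ)*(v-(s:ℤ)-(q:ℤ)) - u - ((a:ℤ)*(k:ℤ)+(m':ℤ)) - 1 := by
        rw [zq, zs, zn, za, zm]; ring
      refine hcase_mem _ ((q:ℤ)*(v-(s:ℤ))-u-((a:ℤ)*(k:ℤ)+(m':ℤ))-(n:ℤ)*(a:ℤ))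
        ((a:ℤ)*(v-(s:ℤ))+(a:ℤ)*(k:ℤ)-(m:ℤ)*(m':ℤ)-(q:ℤ)*(a:ℤ)) ?_ ?_ ?_
      · rw [hMZ, hred]; linarith only [hqwl, huα, hqk, ham, hzmk, hαk', hk1, hm'0, hmk2, hm2k]
      · rw [hMZ, hred]; linarith only [hqwu, hu0, hβ0, hαq0, hmk0]
      · rw [zq, zs, zn, za, zm]; ring
    · -- (vi)
      obtain ⟨G, hg⟩ := hgo
      subst hg
      have hG0 : (0:ℤ) ≤ G := by omega
      have hG2 : G ≤ 2*(m':ℤ) := by rw [zm] at hg2; omega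
      rw [show ((2*G+1:ℤ)+1)/2 = G+1 from by omega] at h1 h2
      have hqwl : (q:ℤ)*(-(α:ℤ)) ≤ (q:ℤ)*(v-(s:ℤ)-(((2*G+1)*(m:ℤ)+1)*(k:ℤ)+(G+1))) :=
        mul_le_mul_of_nonneg_left (by linarith) (le_of_lt hq0)
      have hqwu : (q:ℤ)*(v-(s:ℤ)-(((2*G+1)*(m:ℤ)+1)*(k:ℤ)+(G+1))) ≤ (q:ℤ)*(α:ℤ) :=
        mul_le_mul_of_nonneg_left (by linarith) (le_of_lt hq0)
      have hGk0 : (0:ℤ) ≤ G*(k:ℤ) := mul_nonneg hG0 hk0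
      have hGk2 : G*(k:ℤ) ≤ 2*(m':ℤ)*(k:ℤ) := mul_le_mul_of_nonneg_right hG2 hk0
      have hred : (q:ℤ)*(v-(s:ℤ))-u-((a:ℤ)*(k:ℤ)+(m':ℤ))-(n:ℤ)*(G*(m:ℤ)+(m':ℤ)+1)
          = 2*G*(k:ℤ) - 2*(m':ℤ)*(k:ℤ) - u
            + (q:ℤ)*(v-(s:ℤ)-(((2*G+1)*(m:ℤ)+1)*(k:ℤ)+(G+1))) := by
        rw [zq, zs, zn, za, zm]; ring
      refine hcase_mem _ ((q:ℤ)*(v-(s:ℤ))-u-((a:ℤ)*(k:ℤ)+(m':ℤ))-(n:ℤ)*(G*(m:ℤ)+(m':ℤ)+1))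
        ((a:ℤ)*(v-(s:ℤ))+(a:ℤ)*(k:ℤ)-(m:ℤ)*(m':ℤ)-(q:ℤ)*(G*(m:ℤ)+(m':ℤ)+1)) ?_ ?_ ?_
      · rw [hMZ, hred]; linarith only [hGk0, hqwl, huα, hzmk, hαk', hαq0]
      · rw [hMZ, hred]; linarith only [hGk2, hqwu, hu0, hzmk, hk1]
      · rw [zq, zs, zn, za, zm]; ring
  have hforbid : ∀ x ∈ T₁, x ∈ (fun x : ZMod n => -(q:ZMod n)*x) '' Z → x ∈ T₁' := by
    intro x hxT hxI
    exfalso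
    rw [hT₁] at hxT
    obtain ⟨t, h, v, u, hodd, htl, hth, hbr, hv1, hv2, hu0, hif, hx⟩ := hxT
    obtain ⟨y, hyZ, hyx⟩ := hxI
    rw [hZ] at hyZ
    obtain ⟨i, hi1, hi2, hy⟩ := hyZ
    obtain ⟨t', ht'⟩ := hodd
    obtain ⟨τ, hτ⟩ : ∃ τ : ℤ, τ = t'+(m':ℤ)+1 := ⟨_, rfl⟩
    have ht2 : t = 2*τ-(m:ℤ) := by rw [hτ, zm]; omega
    have huα : u ≤ (α:ℤ) := by
      by_cases hc : v ≤ (s:ℤ)+(m:ℤ)*(k:ℤ)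
      · rw [if_pos hc] at hif; exact hif
      · rw [if_neg hc] at hif; linarith only [hif, hα1']
    have hρ1 : 2*τ*(k:ℤ)+h+(α:ℤ) ≤ v-(s:ℤ) := by
      have hh : ((m:ℤ)+t)*(k:ℤ) = 2*τ*(k:ℤ) := by rw [ht2]; ring
      linarith only [hh, hv1]
    have hρ2 : v-(s:ℤ) ≤ 2*τ*(k:ℤ)+h+2*(k:ℤ)-1-(α:ℤ) := by
      have hh : ((m:ℤ)+t+2)*(k:ℤ) = 2*τ*(k:ℤ)+2*(k:ℤ) := by rw [ht2]; ring
      linarith only [hh, hv2]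
    obtain ⟨P, hPdef⟩ : ∃ P : ℤ,
        P = (q:ℤ)*(v-(s:ℤ)-2*τ*(k:ℤ))-(2*(k:ℤ)*(m:ℤ)+1)*τ-u-((a:ℤ)*(k:ℤ)+(m':ℤ)) := ⟨_, rfl⟩
    have hPl : (α:ℤ)*(q:ℤ)+(m:ℤ)*(k:ℤ)+1 ≤ P := by
      rcases hbr with ⟨_, htneg, hh1⟩ | ⟨j, hj1, hjm, hjt1, hjt2, hh1⟩
      · subst hh1
        have hτm : 2*τ ≤ 2*(m':ℤ) := by rw [ht2, zm] at htneg; omega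
        have hdec : P - ((α:ℤ)*(q:ℤ)+(m:ℤ)*(k:ℤ)+1)
            = (q:ℤ)*((v-(s:ℤ)-2*τ*(k:ℤ))-(1+(α:ℤ))) + (2*(k:ℤ)*(m:ℤ)+1)*((m':ℤ)-τ)
              + ((α:ℤ)-u) + ((k:ℤ)-(α:ℤ)) := by
          rw [hPdef, zq, za, zm]; ring
        have h1' : (0:ℤ) ≤ (q:ℤ)*((v-(s:ℤ)-2*τ*(k:ℤ))-(1+(α:ℤ))) :=
          mul_nonneg (le_of_lt hq0) (by linarith only [hρ1])
        have h2' : (0:ℤ) ≤ (2*(k:ℤ)*(m:ℤ)+1)*((m':ℤ)-τ) :=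
          mul_nonneg h2km (by linarith only [hτm])
        linarith only [hdec, h1', h2', huα, hu0, hαk']
      · subst hh1
        have hjt2' : t ≤ 2*j*(m:ℤ)-1 := le_trans hjt2 (min_le_left _ _)
        have hτ2 : 2*τ ≤ 2*(j*(m:ℤ)+(m':ℤ)) := by
          have hxx : 2*j*(m:ℤ)-1+(m:ℤ) = 2*(j*(m:ℤ)+(m':ℤ)) := by rw [zm]; ring
          rw [ht2] at hjt2'; linarith only [hjt2', hxx]
        have hdec : P - ((α:ℤ)*(q:ℤ)+(m:ℤ)*(k:ℤ)+1)
            = (q:ℤ)*((v-(s:ℤ)-2*τ*(k:ℤ))-(j+1+(α:ℤ))) + (2*(k:ℤ)*(m:ℤ)+1)*((j*(m:ℤ)+(m':ℤ))-τ)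
              + ((α:ℤ)-u) + ((2*j+1)*(k:ℤ)-(α:ℤ)) := by
          rw [hPdef, zq, za, zm]; ring
        have h1' : (0:ℤ) ≤ (q:ℤ)*((v-(s:ℤ)-2*τ*(k:ℤ))-(j+1+(α:ℤ))) :=
          mul_nonneg (le_of_lt hq0) (by linarith only [hρ1])
        have h2' : (0:ℤ) ≤ (2*(k:ℤ)*(m:ℤ)+1)*((j*(m:ℤ)+(m':ℤ))-τ) :=
          mul_nonneg h2km (by linarith only [hτ2])
        have h3' : 3*(k:ℤ) ≤ (2*j+1)*(k:ℤ) :=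
          mul_le_mul_of_nonneg_right (by linarith only [hj1]) hk0
        linarith only [hdec, h1', h2', huα, hu0, h3', hαk', hk1]
    have hPu : P ≤ (n:ℤ) - ((α:ℤ)*(q:ℤ)+(m:ℤ)*(k:ℤ)) := by
      rcases hbr with ⟨_, htneg, hh1⟩ | ⟨j, hj1, hjm, hjt1, hjt2, hh1⟩
      · subst hh1
        have hτ0 : 0 ≤ τ := by rw [ht2, zm] at htl; omega
        have hdec : P - ((n:ℤ) - ((α:ℤ)*(q:ℤ)+(m:ℤ)*(k:ℤ)))
            = (q:ℤ)*((v-(s:ℤ)-2*τ*(k:ℤ))-(2*(k:ℤ)-(α:ℤ))) - (2*(k:ℤ)*(m:ℤ)+1)*τ - u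
              - ((k:ℤ)*(m:ℤ)+1+(a:ℤ)*(k:ℤ)+(m':ℤ)) := by
          rw [hPdef, zq, zn, za, zm]; ring
        have h1' : (q:ℤ)*((v-(s:ℤ)-2*τ*(k:ℤ))-(2*(k:ℤ)-(α:ℤ))) ≤ 0 :=
          mul_nonpos_of_nonneg_of_nonpos (le_of_lt hq0) (by linarith only [hρ2])
        have h2' : (0:ℤ) ≤ (2*(k:ℤ)*(m:ℤ)+1)*τ := mul_nonneg h2km hτ0
        linarith only [hdec, h1', h2', hu0, hmk0, hak0, hm'0, hk1]
      · subst hh1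
        have hτ1 : 2*(2*j*(m':ℤ)+j-(m':ℤ)) ≤ 2*τ := by
          have hxx : (2*j-1)*(m:ℤ)+1 = 2*(2*j*(m':ℤ)+j-(m':ℤ)) := by rw [zm]; ring
          rw [ht2] at hjt1; linarith only [hjt1, hxx]
        have hdec : P - ((n:ℤ) - ((α:ℤ)*(q:ℤ)+(m:ℤ)*(k:ℤ)))
            = (q:ℤ)*((v-(s:ℤ)-2*τ*(k:ℤ))-(j+2*(k:ℤ)-(α:ℤ)))
              - (2*(k:ℤ)*(m:ℤ)+1)*(τ-(2*j*(m':ℤ)+j-(m':ℤ))) - u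
              + (2*j*(k:ℤ)-2*(k:ℤ)*(m:ℤ)-(k:ℤ)-1) := by
          rw [hPdef, zq, zn, za, zm]; ring
        have h1' : (q:ℤ)*((v-(s:ℤ)-2*τ*(k:ℤ))-(j+2*(k:ℤ)-(α:ℤ))) ≤ 0 :=
          mul_nonpos_of_nonneg_of_nonpos (le_of_lt hq0) (by linarith only [hρ2])
        have h2' : (0:ℤ) ≤ (2*(k:ℤ)*(m:ℤ)+1)*(τ-(2*j*(m':ℤ)+j-(m':ℤ))) :=
          mul_nonneg h2km (by linarith only [hτ1])
        have h3' : j*(k:ℤ) ≤ (m:ℤ)*(k:ℤ) := mul_le_mul_of_nonneg_right hjm hk0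
        linarith only [hdec, h1', h2', hu0, h3', hk1]
    have hiZ1 : (1:ℤ) ≤ (i:ℤ) := by exact_mod_cast hi1
    have hiZ2 : (i:ℤ) ≤ (α:ℤ)*(q:ℤ)+(m:ℤ)*(k:ℤ) := by
      rw [← hMZ]; exact_mod_cast hi2
    have hys : (((s:ℤ)+(i:ℤ) : ℤ) : ZMod n) = ((s+i : ℕ) : ZMod n) := by push_cast; ring
    have hyx' : -(q:ZMod n) * y = x := hyx
    have hJy : (n:ℤ) ∣ (u*(q:ℤ)+v) + (q:ℤ)*((s:ℤ)+(i:ℤ)) ∨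
        (n:ℤ) ∣ (u*(q:ℤ)+v) - (q:ℤ)*((s:ℤ)+(i:ℤ)) := by
      rcases hx with hx1 | hx1 <;> rcases hy with hy1 | hy1
      · left
        have hcc : ((u*(q:ℤ)+v : ℤ) : ZMod n) = ((-((q:ℤ)*((s:ℤ)+(i:ℤ))) : ℤ) : ZMod n) :=
          calc ((u*(q:ℤ)+v : ℤ) : ZMod n) = x := hx1.symm
            _ = -(q:ZMod n)*y := hyx'.symm
            _ = -(q:ZMod n)*((s+i : ℕ) : ZMod n) := by rw [hy1]
            _ = ((-((q:ℤ)*((s:ℤ)+(i:ℤ))) : ℤ) : ZMod n) := by rw [← hys]; push_cast; ring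
        have h9 := dvd_of_cast_eq hcc
        have h8 : u*(q:ℤ)+v - -((q:ℤ)*((s:ℤ)+(i:ℤ)))
            = (u*(q:ℤ)+v) + (q:ℤ)*((s:ℤ)+(i:ℤ)) := by ring
        rwa [h8] at h9
      · right
        have hcc : ((u*(q:ℤ)+v : ℤ) : ZMod n) = (((q:ℤ)*((s:ℤ)+(i:ℤ)) : ℤ) : ZMod n) :=
          calc ((u*(q:ℤ)+v : ℤ) : ZMod n) = x := hx1.symm
            _ = -(q:ZMod n)*y := hyx'.symm
            _ = -(q:ZMod n)*(-((s+i : ℕ) : ZMod n)) := by rw [hy1]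
            _ = (((q:ℤ)*((s:ℤ)+(i:ℤ)) : ℤ) : ZMod n) := by rw [← hys]; push_cast; ring
        exact dvd_of_cast_eq hcc
      · right
        have hcc : ((u*(q:ℤ)+v : ℤ) : ZMod n) = (((q:ℤ)*((s:ℤ)+(i:ℤ)) : ℤ) : ZMod n) :=
          calc ((u*(q:ℤ)+v : ℤ) : ZMod n) = -x := by rw [hx1]; ring
            _ = -(-(q:ZMod n)*y) := by rw [hyx']
            _ = (q:ZMod n)*((s+i : ℕ) : ZMod n) := by rw [hy1]; ring
            _ = (((q:ℤ)*((s:ℤ)+(i:ℤ)) : ℤ) : ZMod n) := by rw [← hys]; push_cast; ring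
        exact dvd_of_cast_eq hcc
      · left
        have hcc : ((u*(q:ℤ)+v : ℤ) : ZMod n) = ((-((q:ℤ)*((s:ℤ)+(i:ℤ))) : ℤ) : ZMod n) :=
          calc ((u*(q:ℤ)+v : ℤ) : ZMod n) = -x := by rw [hx1]; ring
            _ = -(-(q:ZMod n)*y) := by rw [hyx']
            _ = (q:ZMod n)*(-((s+i : ℕ) : ZMod n)) := by rw [hy1]; ring
            _ = ((-((q:ℤ)*((s:ℤ)+(i:ℤ))) : ℤ) : ZMod n) := by rw [← hys]; push_cast; ring
        have h9 := dvd_of_cast_eq hcc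
        have h8 : u*(q:ℤ)+v - -((q:ℤ)*((s:ℤ)+(i:ℤ)))
            = (u*(q:ℤ)+v) + (q:ℤ)*((s:ℤ)+(i:ℤ)) := by ring
        rwa [h8] at h9
    rcases hJy with hd | hd
    · have hident : P - (i:ℤ) = (q:ℤ)*((u*(q:ℤ)+v) + (q:ℤ)*((s:ℤ)+(i:ℤ)))
          - (n:ℤ)*((a:ℤ)*u+(a:ℤ)*(k:ℤ)+(m':ℤ)+τ) - (n:ℤ)*((a:ℤ)*((s:ℤ)+(i:ℤ))) := by
        rw [hPdef, zq, zs, zn, za, zm]; ring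
      have hd3 : (n:ℤ) ∣ P - (i:ℤ) := by
        rw [hident]
        exact dvd_sub (dvd_sub (Dvd.dvd.mul_left hd (q:ℤ)) (dvd_mul_right _ _)) (dvd_mul_right _ _)
      have hpos : 0 < P - (i:ℤ) := by linarith only [hPl, hiZ2]
      have hle := Int.le_of_dvd hpos hd3
      linarith only [hle, hPu, hiZ1, hM1]
    · have hident : P + (i:ℤ) - 1 = (q:ℤ)*((u*(q:ℤ)+v) - (q:ℤ)*((s:ℤ)+(i:ℤ)))
          - (n:ℤ)*((a:ℤ)*u+(a:ℤ)*(k:ℤ)+(m':ℤ)+τ) + (n:ℤ)*((a:ℤ)*((s:ℤ)+(i:ℤ))-1) := by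
        rw [hPdef, zq, zs, zn, za, zm]; ring
      have hd3 : (n:ℤ) ∣ P + (i:ℤ) - 1 := by
        rw [hident]
        exact dvd_add (dvd_sub (Dvd.dvd.mul_left hd (q:ℤ)) (dvd_mul_right _ _)) (dvd_mul_right _ _)
      have hpos : 0 < P + (i:ℤ) - 1 := by linarith only [hPl, hiZ1, hM1, hq0, hmk0]
      have hle := Int.le_of_dvd hpos hd3
      linarith only [hle, hPu, hiZ2]
  refine ⟨hpart1, Set.Subset.antisymm ?_ ?_⟩
  · rintro x ⟨hxZ, hxI⟩
    rcases (hpart1 ▸ hxZ : x ∈ T₁ ∪ T₁') with hcase | hcase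
    · exact hforbid x hcase hxI
    · exact hcase
  · intro x hx
    exact ⟨hT1'sub hx, hT1'img hx⟩
end

section
/- Let m ≥ 1 be an odd integer, a = m²+1, k ≥ 1 an integer, and q = 2ak+a+m an odd prime power; set n = (q²+1)/a and s = (n−1)/2. Fix an integer α with 1 ≤ α ≤ k. Define T₁ ⊆ Z/nZ as the union of the cyclotomic cosets C_{uq+v} over all integers h with 1 ≤ h ≤ m and all integers t with (h−1)m+γ₁ ≤ t ≤ hm−γ₂, where (γ₁,γ₂) = (0,1) if 1 ≤ h ≤ (m−1)/2, (γ₁,γ₂) = (0,0) if h = (m+1)/2, and (γ₁,γ₂) = (1,0) if (m+1)/2+1 ≤ h ≤ m; over all integers v with s+t(2k+1)+(h+1)+α ≤ v ≤ s+(t+1)(2k+1)+(h−1)−α; and over all integers u with 0 ≤ u ≤ α if v ≤ s+(a+m)k+(a+2m)/2, and 0 ≤ u ≤ α−1 otherwise. Then T₁ ∩ (−qT₁) = ∅. -/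
set_option maxHeartbeats 1600000 in
/-- Core arithmetic lemma. -/
theorem key_lemma (μ k α a A2 B m q n s : ℤ)
    (hμ : 0 ≤ μ) (hk : 1 ≤ k) (hα1 : 1 ≤ α)
    (hm : m = 2*μ+1) (hA2 : A2 = 2*μ^2+2*μ+1) (ha : a = 2*A2) (hB : B = 2*k+1)
    (hq : q = a*B+m) (hn : n = a*B^2+2*m*B+1) (hs : s = A2*B^2+m*B)
    (h t v u h' t' v' u' : ℤ)
    (hh1 : 1 ≤ h) (hh2 : h ≤ m) (ht1 : (h-1)*m ≤ t) (ht2 : t ≤ h*m)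
    (ht3 : μ+2 ≤ h → (h-1)*m+1 ≤ t)
    (hv1 : s + t*B + (h+1) + α ≤ v) (hv2 : v ≤ s + (t+1)*B + (h-1) - α)
    (hu0 : 0 ≤ u) (huα : u ≤ α) (huthr : u = α → v ≤ s + (a+m)*k + A2 + m)
    (hh1' : 1 ≤ h') (hh2' : h' ≤ m) (ht1' : (h'-1)*m ≤ t') (ht2' : t' ≤ h'*m)
    (ht3' : μ+2 ≤ h' → (h'-1)*m+1 ≤ t')
    (hv1' : s + t'*B + (h'+1) + α ≤ v') (hv2' : v' ≤ s + (t'+1)*B + (h'-1) - α)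
    (hu0' : 0 ≤ u') (huα' : u' ≤ α) (huthr' : u' = α → v' ≤ s + (a+m)*k + A2 + m) :
    ¬ (n ∣ (u+v')*q + (v-u')) := by
  intro hdvd
  -- derived quantities
  have hm1 : 1 ≤ m := by omega
  have hmnn : (0:ℤ) ≤ m := by omega
  have hA2pos : (1:ℤ) ≤ A2 := by nlinarith only [hA2, hμ]
  have hann : (0:ℤ) ≤ a := by omega
  have hBpos : (3:ℤ) ≤ B := by omega
  obtain ⟨j, hjdef⟩ : ∃ j : ℤ, v = s + t*B + h + j := ⟨v - s - t*B - h, by ring⟩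
  obtain ⟨j', hjdef'⟩ : ∃ j' : ℤ, v' = s + t'*B + h' + j' := ⟨v' - s - t'*B - h', by ring⟩
  obtain ⟨ε, hεdef⟩ : ∃ ε : ℤ, t = (h-1)*m + ε := ⟨t - (h-1)*m, by ring⟩
  obtain ⟨δ, hδdef⟩ : ∃ δ : ℤ, t' = h'*m - δ := ⟨h'*m - t', by ring⟩
  have hj1 : α + 1 ≤ j := by linarith only [hv1, hjdef]
  have hj2 : j ≤ B - 1 - α := by linarith only [hv2, hjdef]
  have hj1' : α + 1 ≤ j' := by linarith only [hv1', hjdef']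
  have hj2' : j' ≤ B - 1 - α := by linarith only [hv2', hjdef']
  have hε1 : 0 ≤ ε := by linarith only [ht1, hεdef]
  have hε2 : ε ≤ m := by nlinarith only [ht2, hεdef, hmnn, hh1, hh2]
  have hδ1 : 0 ≤ δ := by nlinarith only [ht2', hδdef, hmnn, hh1', hh2']
  have hδ2 : δ ≤ m := by nlinarith only [ht1', hδdef, hmnn, hh1', hh2']
  set W : ℤ := u + j' with hWdef
  have hW1 : α + 1 ≤ W := by simp only [hWdef]; linarith only [hu0, hj1']
  have hW2 : W ≤ B - 1 := by simp only [hWdef]; linarith only [huα, hj2']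
  have hB2α : 2*α + 3 ≤ B := by omega
  set R : ℤ := W*a + m*(δ+h-1) + h' + ε - A2 with hRdef
  set S : ℤ := W*m + δ + h + j - u' - (μ+1) with hSdef
  -- Step 1: n ∣ B*R + S
  obtain ⟨c, hc⟩ := hdvd
  have hc2 : B*R + S = n * (c - (A2*B + μ + 1 + t')) := by
    simp only [hRdef, hSdef, hWdef]
    subst hjdef hjdef' hεdef hδdef hm hA2 ha hB hq hn hs
    linear_combination hc
  -- bounds on R and S
  have hRlb : 3*A2 + 1 ≤ R := by
    simp only [hRdef]
    nlinarith only [mul_nonneg (by linarith only [hW1, hα1] : (0:ℤ) ≤ W - 2) hann,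
      mul_nonneg hmnn (by linarith only [hδ1, hh1] : (0:ℤ) ≤ δ + h - 1), ha, hA2pos, hh1', hε1]
  have hSlb : 1 ≤ S := by
    simp only [hSdef]
    nlinarith only [mul_nonneg (by linarith only [hW1, hα1] : (0:ℤ) ≤ W - 2) hmnn,
      hδ1, hh1, hj1, huα', hα1, hμ, hm]
  have hRub : R ≤ (B+1)*a + m - 2 - A2 := by
    simp only [hRdef]
    nlinarith only [mul_nonneg (by linarith only [hW2] : (0:ℤ) ≤ B - 1 - W) hann,
      mul_nonneg hmnn (by linarith only [hδ2, hh2] : (0:ℤ) ≤ 2*m - δ - h),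
      hh2', hε2, hm, hA2, hμ, ha]
  have hSub : S ≤ B*m + B + m - 2 - α - μ := by
    simp only [hSdef]
    nlinarith only [mul_nonneg (by linarith only [hW2] : (0:ℤ) ≤ B - 1 - W) hmnn,
      hδ2, hh2, hj2, hu0', hm, hμ]
  have hnpos : 0 < n := by nlinarith only [hn, hA2pos, ha, hBpos, hmnn]
  -- Step 2: B*R + S = n
  have hBRS : B*R + S = n := by
    have hlb : 0 < B*R + S := by
      nlinarith only [mul_pos (by linarith only [hBpos] : (0:ℤ) < B)
        (by linarith only [hRlb, hA2pos] : (0:ℤ) < R), hSlb]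
    have hub : B*R + S < 2*n := by
      nlinarith only [mul_le_mul_of_nonneg_left hRub (by linarith only [hBpos] : (0:ℤ) ≤ B),
        mul_nonneg (mul_nonneg (by linarith only [hBpos] : (0:ℤ) ≤ B - 1) hann)
          (by linarith only [hBpos] : (0:ℤ) ≤ B),
        hSub, hn, hA2pos, ha, hBpos, hmnn, hμ, hα1, hm]
    have h1 : 1 ≤ c - (A2*B + μ + 1 + t') := by
      rcases le_or_gt 1 (c - (A2*B + μ + 1 + t')) with hgood | hbad
      · exact hgood
      · exfalso
        have hle : c - (A2*B + μ + 1 + t') ≤ 0 := by omega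
        nlinarith only [mul_nonpos_of_nonneg_of_nonpos (by linarith only [hnpos] : (0:ℤ) ≤ n) hle,
          hc2, hlb]
    have h2 : c - (A2*B + μ + 1 + t') < 2 := by
      rcases lt_or_ge (c - (A2*B + μ + 1 + t')) 2 with hgood | hbad
      · exact hgood
      · exfalso
        nlinarith only [mul_le_mul_of_nonneg_left hbad (by linarith only [hnpos] : (0:ℤ) ≤ n),
          hc2, hub]
    have heq : c - (A2*B + μ + 1 + t') = 1 := by omega
    rw [heq, mul_one] at hc2
    exact hc2
  clear hc hc2
  -- Step 3: pinch W = B - 1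
  have hW : W = B - 1 := by
    rcases eq_or_lt_of_le hW2 with hgood | hbad
    · exact hgood
    · exfalso
      have hWle : W ≤ B - 2 := by omega
      set σ : ℤ := a*B + 2*m - R with hσdef
      have hSσ : S = B*σ + 1 := by
        linear_combination hBRS + hn + B*hσdef
      have haBW : a*(B-W) = σ + m*(δ+h-1) + h' + ε - A2 - 2*m := by
        simp only [hσdef, hRdef]; ring
      have hσlb : m + A2 + 2 ≤ σ := by
        nlinarith only [haBW, mul_nonneg (by linarith only [hWle] : (0:ℤ) ≤ B - W - 2) hann,
          mul_nonneg hmnn (by linarith only [hδ2, hh2] : (0:ℤ) ≤ 2*m - δ - h),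
          hh2', hε2, ha, hm, hμ, hA2]
      have hBσub : B*σ ≤ B*m + B - α - μ - 3 := by
        have hSub2 : S ≤ (B-2)*m + 2*m + (B-1-α) - μ - 1 := by
          simp only [hSdef]
          nlinarith only [mul_nonneg (by linarith only [hWle] : (0:ℤ) ≤ B - 2 - W) hmnn,
            hδ2, hh2, hj2, hu0']
        linarith only [hSσ, hSub2, hm, hμ]
      nlinarith only [mul_le_mul_of_nonneg_left hσlb (by linarith only [hBpos] : (0:ℤ) ≤ B),
        hBσub, hBpos, hA2pos, hα1, hμ]
  have huu : u = α := by
    have : u + j' = B - 1 := by rw [← hWdef, hW]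
    omega
  have hj'eq : j' = B - 1 - α := by
    have : u + j' = B - 1 := by rw [← hWdef, hW]
    omega
  -- Step 4: M, N
  set X : ℤ := δ + h with hXdef
  set Y : ℤ := h' + ε with hYdef
  set Z : ℤ := j - u' with hZdef
  set M : ℤ := m*X + Y - (3*A2 + 2*m) with hMdef
  set N : ℤ := X + Z - (3*μ + 3) with hNdef
  have hMN : B*M + N = 0 := by
    have expand : B*M + N = B*R + S - n + (a*B+m)*(B-1-W) := by
      simp only [hMdef, hNdef, hXdef, hYdef, hZdef, hRdef, hSdef]
      subst hm hA2 ha hB hq hn hs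
      ring
    rw [expand, hBRS, hW]
    ring
  have hX1 : 1 ≤ X := by simp only [hXdef]; linarith only [hδ1, hh1]
  have hX2 : X ≤ 2*m := by simp only [hXdef]; linarith only [hδ2, hh2]
  have hY1 : 1 ≤ Y := by simp only [hYdef]; linarith only [hh1', hε1]
  have hY2 : Y ≤ 2*m := by simp only [hYdef]; linarith only [hh2', hε2]
  have hZ1 : 1 ≤ Z := by simp only [hZdef]; linarith only [hj1, huα']
  have hZ2 : Z ≤ B - 1 - α := by simp only [hZdef]; linarith only [hj2, hu0']
  -- Step 5: M = 0, N = 0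
  have hM0 : M = 0 := by
    rcases lt_trichotomy M 0 with hMneg | h0 | hMpos
    · exfalso
      have hNB : B ≤ N := by
        nlinarith only [mul_le_mul_of_nonneg_left (by linarith only [hMneg] : M ≤ -1)
          (by linarith only [hBpos] : (0:ℤ) ≤ B), hMN]
      have hXub : X ≤ 3*μ + 3 := by
        rcases le_or_gt X (3*μ+3) with hgood | hbad
        · exact hgood
        · exfalso
          nlinarith only [mul_nonneg (by linarith only [hbad] : (0:ℤ) ≤ X - (3*μ+4)) hmnn,
            hMdef, hMneg, hY1, hm, hA2, hμ]
      have hNZ : N ≤ Z := by simp only [hNdef]; linarith only [hXub]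
      linarith only [hNB, hNZ, hZ2, hα1]
    · exact h0
    · exfalso
      have hNB : N ≤ -B := by
        nlinarith only [mul_le_mul_of_nonneg_left (by linarith only [hMpos] : 1 ≤ M)
          (by linarith only [hBpos] : (0:ℤ) ≤ B), hMN]
      have hXlb : 3*μ + 2 ≤ X := by
        rcases le_or_gt (3*μ+2) X with hgood | hbad
        · exact hgood
        · exfalso
          nlinarith only [mul_nonneg (by linarith only [hbad] : (0:ℤ) ≤ 3*μ+1 - X) hmnn,
            hMdef, hMpos, hY2, hm, hA2, hμ]
      have hN0 : 0 ≤ N := by simp only [hNdef]; linarith only [hXlb, hZ1]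
      linarith only [hNB, hN0, hBpos]
  have hN0 : N = 0 := by rw [hM0] at hMN; linarith only [hMN]
  -- Step 6: pin X, Z, Y
  have hmy : m*X + Y = 3*A2 + 2*m := by linarith only [hMdef, hM0]
  have hXlb : 3*μ + 2 ≤ X := by
    rcases le_or_gt (3*μ+2) X with hgood | hbad
    · exact hgood
    · exfalso
      nlinarith only [mul_nonneg (by linarith only [hbad] : (0:ℤ) ≤ 3*μ+1 - X) hmnn,
        hmy, hY2, hm, hA2, hμ]
  have hXZ : X + Z = 3*μ + 3 := by linarith only [hNdef, hN0]
  have hXeq : X = 3*μ + 2 := by omega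
  have hZeq : Z = 1 := by omega
  have hYeq : Y = 3*μ + 3 := by
    rw [hXeq, hA2] at hmy
    have hexp : m*(3*μ+2) = 6*μ^2+7*μ+2 := by rw [hm]; ring
    linarith only [hmy, hexp, hm]
  -- Step 7: u' = α, j = α + 1
  have hu'eq : u' = α := by
    have : j - u' = 1 := by rw [← hZdef, hZeq]
    omega
  have hjeq : j = α + 1 := by
    have : j - u' = 1 := by rw [← hZdef, hZeq]
    omega
  -- Step 8: h' ≥ μ+2, δ ≤ m-1, h ≥ μ+2
  have hεeq : ε = 3*μ + 3 - h' := by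
    have : h' + ε = 3*μ+3 := by rw [← hYdef, hYeq]
    omega
  have hδeq : δ = 3*μ + 2 - h := by
    have : δ + h = 3*μ+2 := by rw [← hXdef, hXeq]
    omega
  have hh'lb : μ + 2 ≤ h' := by omega
  have hδub : δ ≤ m - 1 := by
    have hstrict := ht3' hh'lb
    nlinarith only [hstrict, hδdef, hmnn, hh1', hh2']
  have hhlb : μ + 2 ≤ h := by omega
  -- Step 9: thresholds
  have hT1 : t*B + h + (α+1) ≤ (a+m)*k + A2 + m := by
    have hτ := huthr huu
    rw [hjdef, hjeq] at hτ
    linarith only [hτ]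
  have hT2 : t'*B + h' + (B-1-α) ≤ (a+m)*k + A2 + m := by
    have hτ := huthr' hu'eq
    rw [hjdef', hj'eq] at hτ
    linarith only [hτ]
  -- Step 10: final contradiction
  have htt : t + t' = m*(h+h'-1) + (h - h') + 1 := by
    rw [hεdef, hδdef, hεeq, hδeq, hm]; ring
  have hβpos : 0 < m*(h+h') + (h-h') - m^2 - 2*m + 1 := by
    nlinarith only [mul_nonneg hmnn
      (by linarith only [hhlb, hh'lb, hm] : (0:ℤ) ≤ h + h' - (m+3)), hhlb, hh2', hm, hμ]
  have hsum : (t+t')*B + (h+h') + B ≤ (a+m)*(B-1) + 2*A2 + 2*m := by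
    have hBk : (a+m)*(B-1) = (a+m)*k + (a+m)*k := by rw [hB]; ring
    linarith only [hT1, hT2, hBk]
  rw [htt] at hsum
  have ham : a = m^2 + 1 := by rw [ha, hA2, hm]; ring
  have haB : a*B = m^2*B + B := by rw [ham]; ring
  have hfinal : B*(m*(h+h') + (h-h') - m^2 - 2*m + 1) ≤ m - (h+h') := by
    linarith only [hsum, haB, ha]
  nlinarith only [mul_pos (by linarith only [hBpos] : (0:ℤ) < B) hβpos, hfinal,
    hhlb, hh'lb, hm, hμ]


/-- digest the γ case split -/
theorem digest_gamma (μ m h t γ₁ γ₂ : ℤ) (hmz : m = 2*μ+1)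
    (hcases : (1 ≤ h ∧ h ≤ (m-1)/2 ∧ γ₁ = 0 ∧ γ₂ = 1) ∨
      (h = (m+1)/2 ∧ γ₁ = 0 ∧ γ₂ = 0) ∨
      ((m+1)/2 + 1 ≤ h ∧ h ≤ m ∧ γ₁ = 1 ∧ γ₂ = 0))
    (h1 : (h-1)*m + γ₁ ≤ t) (h2 : t ≤ h*m - γ₂) :
    (h-1)*m ≤ t ∧ t ≤ h*m ∧ (μ+2 ≤ h → (h-1)*m+1 ≤ t) := by
  rcases hcases with ⟨ha1, ha2, hg1, hg2⟩ | ⟨ha1, hg1, hg2⟩ | ⟨ha1, ha2, hg1, hg2⟩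
  · subst hg1 hg2
    refine ⟨by linarith only [h1], by linarith only [h2], fun hc => absurd ha2 (by omega)⟩
  · subst hg1 hg2
    refine ⟨by linarith only [h1], by linarith only [h2], fun hc => absurd ha1 (by omega)⟩
  · subst hg1 hg2
    refine ⟨by linarith only [h1], by linarith only [h2], fun _ => by linarith only [h1]⟩



/-- Lemma 3.6, Case II `q = 2ak+a+m`: `T₁ ∩ (−q·T₁) = ∅`. -/
theorem T1_inter_neg_q_T1_empty_case_II
    (m a k q n s α : ℕ)
    (hm1 : 1 ≤ m) (hmodd : Odd m)
    (ha : a = m ^ 2 + 1)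
    (hk : 1 ≤ k)
    (hq : q = 2 * a * k + a + m)
    (hqodd : Odd q) (hqpp : IsPrimePow q)
    (hn : n = (q ^ 2 + 1) / a)
    (hs : s = (n - 1) / 2)
    (hα1 : 1 ≤ α) (hαk : α ≤ k)
    (T₁ : Set (ZMod n))
    (hT₁ : T₁ = {x : ZMod n | ∃ h t v u : ℤ,
      1 ≤ h ∧ h ≤ (m : ℤ) ∧
      (∃ γ₁ γ₂ : ℤ,
        ((1 ≤ h ∧ h ≤ ((m : ℤ) - 1) / 2 ∧ γ₁ = 0 ∧ γ₂ = 1) ∨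
         (h = ((m : ℤ) + 1) / 2 ∧ γ₁ = 0 ∧ γ₂ = 0) ∨
         (((m : ℤ) + 1) / 2 + 1 ≤ h ∧ h ≤ (m : ℤ) ∧ γ₁ = 1 ∧ γ₂ = 0)) ∧
        (h - 1) * (m : ℤ) + γ₁ ≤ t ∧ t ≤ h * (m : ℤ) - γ₂) ∧
      ((s : ℤ) + t * (2 * (k : ℤ) + 1) + (h + 1) + (α : ℤ) ≤ v) ∧
      (v ≤ (s : ℤ) + (t + 1) * (2 * (k : ℤ) + 1) + (h - 1) - (α : ℤ)) ∧
      (0 ≤ u) ∧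
      (if v ≤ (s : ℤ) + ((a : ℤ) + (m : ℤ)) * (k : ℤ) + ((a : ℤ) + 2 * (m : ℤ)) / 2
        then u ≤ (α : ℤ) else u ≤ (α : ℤ) - 1) ∧
      (x = ((u * (q : ℤ) + v : ℤ) : ZMod n) ∨ x = -((u * (q : ℤ) + v : ℤ) : ZMod n))}) :
    T₁ ∩ ((fun x : ZMod n => -(q : ZMod n) * x) '' T₁) = ∅ := by
  -- set up integer parameters
  obtain ⟨μ, hμ⟩ := hmodd
  have hμ' : m = 2*μ + 1 := by omega
  -- ℕ-level computations
  have haμ : a = 2*(2*μ^2+2*μ+1) := by rw [ha, hμ']; ring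
  have hapos : 0 < a := by omega
  have hqB : q = a*(2*k+1) + m := by rw [hq]; ring
  have hqn : q^2 + 1 = a*(a*(2*k+1)^2 + 2*m*(2*k+1) + 1) := by
    rw [hqB, ha]; ring
  have hn' : n = a*(2*k+1)^2 + 2*m*(2*k+1) + 1 := by
    rw [hn, hqn, Nat.mul_div_cancel_left _ hapos]
  have hq2n : q^2 + 1 = a*n := by rw [hn']; exact hqn
  have hs' : s = (2*μ^2+2*μ+1)*(2*k+1)^2 + m*(2*k+1) := by
    have hn2 : n = 2*((2*μ^2+2*μ+1)*(2*k+1)^2 + m*(2*k+1)) + 1 := by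
      rw [hn', haμ]; ring
    set E := (2*μ^2+2*μ+1)*(2*k+1)^2 + m*(2*k+1) with hE
    omega
  -- ℤ casts
  have hmz : (m:ℤ) = 2*(μ:ℤ)+1 := by exact_mod_cast hμ'
  have haz : (a:ℤ) = 2*(2*(μ:ℤ)^2+2*(μ:ℤ)+1) := by exact_mod_cast haμ
  have hqz : (q:ℤ) = (a:ℤ)*(2*(k:ℤ)+1) + (m:ℤ) := by exact_mod_cast hqB
  have hnz : (n:ℤ) = (a:ℤ)*(2*(k:ℤ)+1)^2 + 2*(m:ℤ)*(2*(k:ℤ)+1) + 1 := by exact_mod_cast hn'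
  have hsz : (s:ℤ) = (2*(μ:ℤ)^2+2*(μ:ℤ)+1)*(2*(k:ℤ)+1)^2 + (m:ℤ)*(2*(k:ℤ)+1) := by
    exact_mod_cast hs'
  have hq2z : (q:ℤ)^2 + 1 = (a:ℤ)*(n:ℤ) := by exact_mod_cast hq2n
  have hτeq : ((a:ℤ) + 2*(m:ℤ))/2 = (2*(μ:ℤ)^2+2*(μ:ℤ)+1) + (m:ℤ) := by omega
  have hkz : (1:ℤ) ≤ (k:ℤ) := by exact_mod_cast hk
  have hαz : (1:ℤ) ≤ (α:ℤ) := by exact_mod_cast hα1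
  -- main argument
  rw [Set.eq_empty_iff_forall_notMem]
  rintro x ⟨hx1, y, hy1, hxy⟩
  simp only at hxy
  rw [hT₁, Set.mem_setOf_eq] at hx1 hy1
  obtain ⟨h1, t1, v1, u1, hh11, hh12, ⟨γ₁, γ₂, hγc1, hγt11, hγt12⟩, hv11, hv12, hu10,
    hu1ite, hsx⟩ := hx1
  obtain ⟨h2, t2, v2, u2, hh21, hh22, ⟨γ₁', γ₂', hγc2, hγt21, hγt22⟩, hv21, hv22, hu20,
    hu2ite, hsy⟩ := hy1
  obtain ⟨ht11, ht12, ht13⟩ := digest_gamma (μ:ℤ) (m:ℤ) h1 t1 γ₁ γ₂ hmz hγc1 hγt11 hγt12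
  obtain ⟨ht21, ht22, ht23⟩ := digest_gamma (μ:ℤ) (m:ℤ) h2 t2 γ₁' γ₂' hmz hγc2 hγt21 hγt22
  -- digest thresholds
  have hu1d : u1 ≤ (α:ℤ) ∧ (u1 = (α:ℤ) →
      v1 ≤ (s:ℤ) + ((a:ℤ)+(m:ℤ))*(k:ℤ) + (2*(μ:ℤ)^2+2*(μ:ℤ)+1) + (m:ℤ)) := by
    split_ifs at hu1ite with hcv
    · exact ⟨hu1ite, fun _ => by linarith only [hcv, hτeq]⟩
    · exact ⟨by linarith only [hu1ite], fun hEq => by omega⟩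
  have hu2d : u2 ≤ (α:ℤ) ∧ (u2 = (α:ℤ) →
      v2 ≤ (s:ℤ) + ((a:ℤ)+(m:ℤ))*(k:ℤ) + (2*(μ:ℤ)^2+2*(μ:ℤ)+1) + (m:ℤ)) := by
    split_ifs at hu2ite with hcv
    · exact ⟨hu2ite, fun _ => by linarith only [hcv, hτeq]⟩
    · exact ⟨by linarith only [hu2ite], fun hEq => by omega⟩
  -- ZMod equation
  have e3 : x + (q : ZMod n) * y = 0 := by rw [← hxy]; ring
  have hqc : (((q:ℕ):ℤ) : ZMod n) = (q : ZMod n) := by push_cast; rfl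
  -- two divisibility forms
  have hforms : ((n:ℤ) ∣ (u1*(q:ℤ)+v1) + (q:ℤ)*(u2*(q:ℤ)+v2)) ∨
      ((n:ℤ) ∣ (u1*(q:ℤ)+v1) - (q:ℤ)*(u2*(q:ℤ)+v2)) := by
    rcases hsx with hsx | hsx <;> rcases hsy with hsy | hsy
    · left
      have h0 : (((u1*(q:ℤ)+v1) + (q:ℤ)*(u2*(q:ℤ)+v2) : ℤ) : ZMod n) = 0 := by
        push_cast
        rw [← hqc] at e3
        push_cast at e3
        rw [hsx, hsy] at e3
        push_cast at e3
        linear_combination e3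
      exact (ZMod.intCast_zmod_eq_zero_iff_dvd _ n).mp h0
    · right
      have h0 : (((u1*(q:ℤ)+v1) - (q:ℤ)*(u2*(q:ℤ)+v2) : ℤ) : ZMod n) = 0 := by
        push_cast
        rw [← hqc] at e3
        push_cast at e3
        rw [hsx, hsy] at e3
        push_cast at e3
        linear_combination e3
      exact (ZMod.intCast_zmod_eq_zero_iff_dvd _ n).mp h0
    · right
      have h0 : (((u1*(q:ℤ)+v1) - (q:ℤ)*(u2*(q:ℤ)+v2) : ℤ) : ZMod n) = 0 := by
        push_cast
        rw [← hqc] at e3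
        push_cast at e3
        rw [hsx, hsy] at e3
        push_cast at e3
        linear_combination -e3
      exact (ZMod.intCast_zmod_eq_zero_iff_dvd _ n).mp h0
    · left
      have h0 : (((u1*(q:ℤ)+v1) + (q:ℤ)*(u2*(q:ℤ)+v2) : ℤ) : ZMod n) = 0 := by
        push_cast
        rw [← hqc] at e3
        push_cast at e3
        rw [hsx, hsy] at e3
        push_cast at e3
        linear_combination -e3
      exact (ZMod.intCast_zmod_eq_zero_iff_dvd _ n).mp h0
  rcases hforms with hP | hM
  · -- form + : n ∣ (u1+v2)*q + (v1-u2)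
    have hKey : (n:ℤ) ∣ (u1+v2)*(q:ℤ) + (v1-u2) := by
      obtain ⟨c, hc⟩ := hP
      exact ⟨c - u2*(a:ℤ), by linear_combination hc - u2*hq2z⟩
    exact key_lemma (μ:ℤ) (k:ℤ) (α:ℤ) (a:ℤ) (2*(μ:ℤ)^2+2*(μ:ℤ)+1) (2*(k:ℤ)+1) (m:ℤ)
      (q:ℤ) (n:ℤ) (s:ℤ) (Int.natCast_nonneg μ) hkz hαz hmz rfl haz rfl hqz hnz hsz
      h1 t1 v1 u1 h2 t2 v2 u2
      hh11 hh12 ht11 ht12 ht13 hv11 hv12 hu10 hu1d.1 hu1d.2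
      hh21 hh22 ht21 ht22 ht23 hv21 hv22 hu20 hu2d.1 hu2d.2 hKey
  · -- form − : n ∣ (u2+v1)*q + (v2-u1)
    have hKey : (n:ℤ) ∣ (u2+v1)*(q:ℤ) + (v2-u1) := by
      obtain ⟨c, hc⟩ := hM
      exact ⟨(q:ℤ)*c - (a:ℤ)*(u1 - u2*(q:ℤ) - v2),
        by linear_combination (q:ℤ)*hc - (u1 - u2*(q:ℤ) - v2)*hq2z⟩
    exact key_lemma (μ:ℤ) (k:ℤ) (α:ℤ) (a:ℤ) (2*(μ:ℤ)^2+2*(μ:ℤ)+1) (2*(k:ℤ)+1) (m:ℤ)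
      (q:ℤ) (n:ℤ) (s:ℤ) (Int.natCast_nonneg μ) hkz hαz hmz rfl haz rfl hqz hnz hsz
      h2 t2 v2 u2 h1 t1 v1 u1
      hh21 hh22 ht21 ht22 ht23 hv21 hv22 hu20 hu2d.1 hu2d.2
      hh11 hh12 ht11 ht12 ht13 hv11 hv12 hu10 hu1d.1 hu1d.2 hKey
end

section
/- Let m ≥ 1 be an odd integer, a = m²+1, k ≥ 1 an integer, and q = 2ak+a+m an odd prime power; set n = (q²+1)/a and s = (n−1)/2. Fix an integer α with 1 ≤ α ≤ k, and let Z = C_{s+1} ∪ C_{s+2} ∪ ... ∪ C_{s+δ} ⊆ Z/nZ where δ = αq+(a+m)k+(a+2m)/2. Then the cardinality of Z₁ := Z ∩ (−qZ) equals 4α(aα+a+m)+a+2m. -/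
set_option maxHeartbeats 1000000 in
theorem core_count (M K AL A Q Nn D B : ℤ) (m' : ℤ)
    (hm' : M = 2*m'+1) (hM : 1 ≤ M)
    (hA : A = M^2+1) (hAL : 1 ≤ AL) (hK : AL ≤ K)
    (hQ : Q = 2*A*K+A+M) (hAN : A*Nn = Q^2+1)
    (hB : B = 2*A*AL+A+M) (hD : A*(2*D+1) = Q*B+1) :
    ∃ T : Finset ℤ,
      (∀ j : ℤ, j ∈ T ↔ (1 ≤ j ∧ j ≤ D ∧ ∃ u : ℤ,
         -(2*D-1) ≤ Q*(2*j-1) - 2*u*Nn ∧ Q*(2*j-1) - 2*u*Nn ≤ 2*D-1)) ∧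
      2 * (T.card : ℤ) = 4*AL*(A*AL+A+M)+A+2*M := by
  -- basic facts
  have hA2 : 2 ≤ A := by nlinarith
  have hApos : (0:ℤ) < 2*A := by linarith
  have hQB : Q - B = 2*A*(K-AL) := by rw [hQ, hB]; ring
  have hBQ : B ≤ Q := by nlinarith
  have hQ3A : 3*A + M ≤ Q := by nlinarith
  have hAB : A + 1 ≤ B := by nlinarith
  have hU0 : ∃ U0 : ℤ, B = 2*U0+1 ∧ 0 ≤ U0 := by
    refine ⟨A*AL + 2*m'^2+3*m'+1, by rw [hB, hA, hm']; ring, by nlinarith⟩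
  obtain ⟨U0, hU, hU0nn⟩ := hU0
  have hDpos : 1 ≤ D := by nlinarith
  have hND : 2*D+1 ≤ Nn := by nlinarith
  have hNpos : 0 < Nn := by linarith
  -- odd-emod facts
  have hg : ∀ x : ℤ, Odd x → (1 ≤ x % (2*A) ∧ x % (2*A) ≤ 2*A - 1 ∧ Odd (x % (2*A))) := by
    intro x hx
    have h0 : 0 ≤ x % (2*A) := Int.emod_nonneg x (by linarith)
    have h1 : x % (2*A) < 2*A := Int.emod_lt_of_pos x hApos
    have h2 : x % (2*A) = x - 2*A*(x/(2*A)) := by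
      have := Int.mul_ediv_add_emod x (2*A); linarith
    have hodd : Odd (x % (2*A)) := by
      rw [h2]; exact hx.sub_even ⟨A*(x/(2*A)), by ring⟩
    obtain ⟨c, hc⟩ := hodd
    exact ⟨by omega, by omega, by rw [hc]; exact ⟨c, hc ▸ rfl⟩ ⟩
  -- the g functions
  set gp : ℕ → ℤ := fun u => (M*(2*(u:ℤ)+1)) % (2*A) with hgp
  set gm : ℕ → ℤ := fun u => (M*(2*(u:ℤ)-1)) % (2*A) with hgm
  have hgpodd : ∀ u : ℕ, Odd (M*(2*(u:ℤ)+1)) := by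
    intro u; exact ⟨M*u + m', by rw [hm']; ring⟩
  have hgmodd : ∀ u : ℕ, Odd (M*(2*(u:ℤ)-1)) := by
    intro u; exact ⟨M*u - m' - 1, by rw [hm']; ring⟩
  have hgpb : ∀ u : ℕ, 1 ≤ gp u ∧ gp u ≤ 2*A-1 ∧ Odd (gp u) := fun u => hg _ (hgpodd u)
  have hgmb : ∀ u : ℕ, 1 ≤ gm u ∧ gm u ≤ 2*A-1 ∧ Odd (gm u) := fun u => hg _ (hgmodd u)
  -- F and G
  set F : ℕ → ℤ := fun u => (2*(u:ℤ)*Q + B + A - gp u) / (2*A) with hFdef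
  set G : ℕ → ℤ := fun u => (2*(u:ℤ)*Q - B + A - gm u) / (2*A) with hGdef
  have hdvd_sub_emod : ∀ x : ℤ, 2*A ∣ x - x % (2*A) :=
    fun x => ⟨x/(2*A), by have := Int.mul_ediv_add_emod x (2*A); linarith⟩
  have hFex : ∀ u : ℕ, 2*A*(F u) = 2*(u:ℤ)*Q + B + A - gp u := by
    intro u
    have hdvd : 2*A ∣ (2*(u:ℤ)*Q + B + A - gp u) := by
      have h1 : 2*(u:ℤ)*Q + B + A - gp u
          = 2*A*(2*(u:ℤ)*K + u + AL + 1) + (M*(2*(u:ℤ)+1) - (M*(2*(u:ℤ)+1)) % (2*A)) := by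
        rw [hQ, hB, hgp]; ring
      rw [h1]; exact dvd_add (Dvd.intro _ rfl) (hdvd_sub_emod _)
    rw [hFdef]; exact Int.mul_ediv_cancel' hdvd
  have hGex : ∀ u : ℕ, 2*A*(G u) = 2*(u:ℤ)*Q - B + A - gm u := by
    intro u
    have hdvd : 2*A ∣ (2*(u:ℤ)*Q - B + A - gm u) := by
      have h1 : 2*(u:ℤ)*Q - B + A - gm u
          = 2*A*(2*(u:ℤ)*K + u - AL) + (M*(2*(u:ℤ)-1) - (M*(2*(u:ℤ)-1)) % (2*A)) := by
        rw [hQ, hB, hgm]; ring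
      rw [h1]; exact dvd_add (Dvd.intro _ rfl) (hdvd_sub_emod _)
    rw [hGdef]; exact Int.mul_ediv_cancel' hdvd
  -- M*B emod fact
  have hMB : M*B = 2*A*(AL*M+m') + (2*A-1) := by rw [hB, hA, hm']; ring
  have hgB : (M*B) % (2*A) = 2*A-1 := by
    rw [hMB]
    rw [show 2*A*(AL*M+m') + (2*A-1) = (2*A-1) + (AL*M+m')*(2*A) by ring,
        Int.add_mul_emod_self_right]
    exact Int.emod_eq_of_lt (by linarith) (by linarith)

  have hQpos : 0 < Q := by linarith
  -- bracketing for F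
  have hFiff : ∀ u : ℕ, (u:ℤ) ≤ U0 → ∀ j : ℤ,
      (Q*(2*j-1) ≤ 2*(u:ℤ)*Nn + (2*D-1) ↔ j ≤ F u) := by
    intro u hu j
    have hunn : (0:ℤ) ≤ (u:ℤ) := Int.natCast_nonneg u
    have hgp1 := (hgpb u).1
    have hgp2 := (hgpb u).2.1
    have e : A*(2*(u:ℤ)*Nn + (2*D-1) + Q) - Q*(2*(u:ℤ)*Q + B + A - gp u)
        = 2*(u:ℤ) + 1 - 2*A + Q*(gp u) := by
      linear_combination (2*(u:ℤ))*hAN + hD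
    have hQgp1 : Q*1 ≤ Q*(gp u) := mul_le_mul_of_nonneg_left hgp1 (le_of_lt hQpos)
    have hQgp2 : Q*(gp u) ≤ Q*(2*A-1) := mul_le_mul_of_nonneg_left hgp2 (le_of_lt hQpos)
    have hi : Q*(2*A*(F u)) ≤ A*(2*(u:ℤ)*Nn + (2*D-1) + Q) := by
      rw [hFex u]; linarith [e, hQgp1]
    have hii : A*(2*(u:ℤ)*Nn + (2*D-1) + Q) < Q*(2*A*(F u)) + 2*A*Q := by
      rw [hFex u]; linarith [e, hQgp2]
    constructor
    · intro h
      have h1 : A*(Q*(2*j-1)) ≤ A*(2*(u:ℤ)*Nn + (2*D-1)) :=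
        mul_le_mul_of_nonneg_left h (by linarith)
      have h3 : 2*A*Q*j < 2*A*Q*(F u + 1) := by linarith [h1, hii]
      have := lt_of_mul_lt_mul_left h3 (by positivity : (0:ℤ) ≤ 2*A*Q)
      omega
    · intro h
      have h3 : 2*A*Q*j ≤ 2*A*Q*(F u) :=
        mul_le_mul_of_nonneg_left h (by positivity)
      have h1 : A*(Q*(2*j-1)) ≤ A*(2*(u:ℤ)*Nn + (2*D-1)) := by linarith [h3, hi]
      exact le_of_mul_le_mul_left h1 (by linarith)
  -- bracketing for G
  have hGiff : ∀ u : ℕ, (u:ℤ) ≤ U0 → ∀ j : ℤ,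
      (2*(u:ℤ)*Nn - (2*D-1) ≤ Q*(2*j-1) ↔ G u + 1 ≤ j) := by
    intro u hu j
    have hunn : (0:ℤ) ≤ (u:ℤ) := Int.natCast_nonneg u
    have hgm1 := (hgmb u).1
    have hgm2 := (hgmb u).2.1
    have e : A*(2*(u:ℤ)*Nn - (2*D-1) + Q) - Q*(2*(u:ℤ)*Q - B + A - gm u)
        = 2*(u:ℤ) - 1 + 2*A + Q*(gm u) := by
      linear_combination (2*(u:ℤ))*hAN - hD
    have hQgm1 : Q*1 ≤ Q*(gm u) := mul_le_mul_of_nonneg_left hgm1 (le_of_lt hQpos)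
    have hi : Q*(2*A*(G u)) < A*(2*(u:ℤ)*Nn - (2*D-1) + Q) := by
      rw [hGex u]; linarith [e, hQgm1]
    have hkey : 2*(u:ℤ) + 2*A - 1 ≤ Q*(2*A - gm u) := by
      by_cases hc : gm u = 2*A - 1
      · have hcx : (M*(2*(u:ℤ)-1)) % (2*A) = 2*A - 1 := by
          rw [hgm] at hc; exact hc
        have hd1 : 2*A ∣ M*(2*(u:ℤ)-1) + 1 := by
          refine ⟨(M*(2*(u:ℤ)-1))/(2*A) + 1, ?_⟩
          have := Int.mul_ediv_add_emod (M*(2*(u:ℤ)-1)) (2*A)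
          rw [hcx] at this; linarith
        have hd2 : M*B + 1 = 2*A*(AL*M+m'+1) := by linarith [hMB]
        have hd3 : 2*A ∣ M*(B - (2*(u:ℤ)-1)) := by
          have hx : M*(B - (2*(u:ℤ)-1)) = (M*B + 1) - (M*(2*(u:ℤ)-1) + 1) := by ring
          rw [hx, hd2]; exact dvd_sub (Dvd.intro _ rfl) hd1
        have hd4 : 2*A ∣ (A-1)*(B - (2*(u:ℤ)-1)) := by
          have hx : (A-1)*(B - (2*(u:ℤ)-1)) = M*(M*(B - (2*(u:ℤ)-1))) := by rw [hA]; ring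
          rw [hx]; exact Dvd.dvd.mul_left hd3 M
        have hd5 : 2*A ∣ A*(B - (2*(u:ℤ)-1)) := by
          refine ⟨U0 - (u:ℤ) + 1, ?_⟩
          rw [hU]; ring
        have hd6 : 2*A ∣ (B - (2*(u:ℤ)-1)) := by
          have hx : B - (2*(u:ℤ)-1) = A*(B - (2*(u:ℤ)-1)) - (A-1)*(B - (2*(u:ℤ)-1)) := by ring
          rw [hx]; exact dvd_sub hd5 hd4
        have hwpos : 0 < B - (2*(u:ℤ)-1) := by rw [hU]; linarith
        have hwge : 2*A ≤ B - (2*(u:ℤ)-1) := Int.le_of_dvd hwpos hd6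
        rw [hc]
        have hq1 : Q*(2*A - (2*A-1)) = Q := by ring
        rw [hq1]; linarith
      · have hgm3 : gm u ≤ 2*A - 3 := by
          obtain ⟨c, hcc⟩ := (hgmb u).2.2
          omega
        have h3Q : Q*3 ≤ Q*(2*A - gm u) :=
          mul_le_mul_of_nonneg_left (by linarith) (le_of_lt hQpos)
        linarith
    have hii : A*(2*(u:ℤ)*Nn - (2*D-1) + Q) ≤ Q*(2*A*(G u)) + 2*A*Q := by
      rw [hGex u]
      have hexp : Q*(2*A - gm u) = 2*A*Q - Q*(gm u) := by ring
      linarith [e, hkey, hexp]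
    constructor
    · intro h
      have h1 : A*(2*(u:ℤ)*Nn - (2*D-1)) ≤ A*(Q*(2*j-1)) :=
        mul_le_mul_of_nonneg_left h (by linarith)
      have h3 : 2*A*Q*(G u) < 2*A*Q*j := by linarith [h1, hi]
      exact lt_of_mul_lt_mul_left h3 (by positivity : (0:ℤ) ≤ 2*A*Q)
    · intro h
      have h3 : 2*A*Q*(G u + 1) ≤ 2*A*Q*j :=
        mul_le_mul_of_nonneg_left h (by positivity)
      have h1 : A*(2*(u:ℤ)*Nn - (2*D-1)) ≤ A*(Q*(2*j-1)) := by linarith [h3, hii]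
      exact le_of_mul_le_mul_left h1 (by linarith)
  have hB3A : 3*A + M ≤ B := by nlinarith
  -- u-range lemma
  have hUrange : ∀ j : ℤ, 1 ≤ j → j ≤ D → ∀ u : ℤ,
      -(2*D-1) ≤ Q*(2*j-1) - 2*u*Nn → Q*(2*j-1) - 2*u*Nn ≤ 2*D-1 →
      0 ≤ u ∧ u ≤ U0 := by
    intro j h1 hjD u hl hr
    constructor
    · by_contra hneg
      push_neg at hneg
      have hu1 : u ≤ -1 := by omega
      have h2 : (2*u)*Nn ≤ (-2)*Nn :=
        mul_le_mul_of_nonneg_right (by linarith) (le_of_lt hNpos)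
      have h4 : Q*1 ≤ Q*(2*j-1) := mul_le_mul_of_nonneg_left (by linarith) (le_of_lt hQpos)
      linarith
    · have e1 : A*((Q+1)*(2*D-1)) = (Q+1)*(Q*B+1) - 2*A*(Q+1) := by
        linear_combination (Q+1)*hD
      have e2 : A*((B+1)*Nn) = (B+1)*(Q^2+1) := by
        linear_combination (B+1)*hAN
      have hQBQ : Q*B ≤ Q*Q := mul_le_mul_of_nonneg_left hBQ (le_of_lt hQpos)
      have hQ2A : Q*1 ≤ Q*(2*A) := mul_le_mul_of_nonneg_left (by linarith) (le_of_lt hQpos)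
      have hkey : A*((Q+1)*(2*D-1)) < A*((B+1)*Nn) := by
        rw [e1, e2]; linarith [hQBQ, hQ2A, hQpos, hBQ, hA2, hAB]
      have hkey' : (Q+1)*(2*D-1) < (B+1)*Nn :=
        lt_of_mul_lt_mul_left hkey (by linarith)
      have h6 : Q*(2*j-1) ≤ Q*(2*D-1) := mul_le_mul_of_nonneg_left (by linarith) (le_of_lt hQpos)
      have h8 : (2*u)*Nn < (B+1)*Nn := by linarith [h6, hkey', hr]
      have h9 : 2*u < B+1 := lt_of_mul_lt_mul_right h8 (le_of_lt hNpos)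
      omega
  -- F u ≤ D
  have hFD : ∀ u : ℕ, (u:ℤ) ≤ U0 → F u ≤ D := by
    intro u hu
    have h2AD : 2*A*D = Q*B + 1 - A := by linarith [hD]
    have hgp1 := (hgpb u).1
    have hmain : 2*A*(F u) ≤ 2*A*D := by
      rw [hFex u, h2AD]
      rcases eq_or_lt_of_le hu with heq | hlt
      · have hgpu : gp u = 2*A - 1 := by
          have hbu : M*(2*(u:ℤ)+1) = M*B := by rw [hU, ← heq]
          rw [hgp]; simp only; rw [hbu]; exact hgB
        have h2u : (2*(u:ℤ))*Q = (B-1)*Q := by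
          rw [show 2*(u:ℤ) = B-1 by rw [hU, ← heq]; ring]
        rw [hgpu]
        linarith only [h2u, hBQ]
      · have h2u : 2*(u:ℤ) ≤ B - 3 := by omega
        have h2uq : (2*(u:ℤ))*Q ≤ (B-3)*Q := mul_le_mul_of_nonneg_right h2u (le_of_lt hQpos)
        linarith only [h2uq, hgp1, hBQ, hQ3A, hM, hQpos]
    exact le_of_mul_le_mul_left hmain hApos
  -- G u ≤ F u
  have hGF : ∀ u : ℕ, G u ≤ F u := by
    intro u
    have hgp2 := (hgpb u).2.1
    have hgm1 := (hgmb u).1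
    have h : 2*A*(G u) ≤ 2*A*(F u) := by
      rw [hFex u, hGex u]; linarith
    exact le_of_mul_le_mul_left h hApos
  have hF0 : 1 ≤ F 0 := by
    have hgp2 := (hgpb 0).2.1
    have h : 2*A*1 ≤ 2*A*(F 0) := by
      rw [hFex 0]; push_cast; linarith
    linarith [le_of_mul_le_mul_left h hApos]
  -- chain
  have hGch : ∀ u : ℕ, G (u+1) = F u + 2*(K - AL) := by
    intro u
    have hgmeq : gm (u+1) = gp u := by
      rw [hgm, hgp]; simp only
      rw [show M*(2*(((u+1):ℕ):ℤ)-1) = M*(2*(u:ℤ)+1) by push_cast; ring]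
    have h1 := hGex (u+1)
    rw [hgmeq] at h1
    push_cast at h1
    have h2 := hFex u
    apply mul_left_cancel₀ (show (2*A:ℤ) ≠ 0 by linarith)
    linarith [h1, h2, hQB]
  have hGmono : ∀ u v : ℕ, u ≤ v → G u ≤ G v := by
    intro u v huv
    induction v with
    | zero => rw [Nat.le_zero.mp huv]
    | succ w ih =>
      rcases Nat.lt_or_ge u (w+1) with hlt | hge
      · have := ih (by omega)
        have h2 := hGch w
        have := hGF w
        linarith
      · rw [Nat.le_antisymm huv hge]
  have hGpos : ∀ u : ℕ, 1 ≤ u → 0 ≤ G u := by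
    intro u hu
    have h1 : 0 ≤ G 1 := by
      have hgm2 := (hgmb 1).2.1
      have h : 2*A*0 ≤ 2*A*(G 1) := by
        rw [hGex 1]; push_cast; linarith
      exact le_of_mul_le_mul_left h hApos
    linarith [hGmono 1 u hu]
  have hG0 : G 0 ≤ 0 := by
    have hgm1 := (hgmb 0).1
    have h : 2*A*(G 0) ≤ 2*A*0 := by
      rw [hGex 0]; push_cast; linarith
    exact le_of_mul_le_mul_left h hApos
  -- the finset
  set G' : ℕ → ℤ := fun u => if u = 0 then 0 else G u with hG'def
  have hG'0 : G' 0 = 0 := by simp [hG'def]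
  have hG'eq : ∀ u : ℕ, u ≠ 0 → G' u = G u := by
    intro u h0; rw [hG'def]; simp [h0]
  have hU'cast : ((U0.toNat : ℕ) : ℤ) = U0 := Int.toNat_of_nonneg hU0nn
  refine ⟨(Finset.range (U0.toNat+1)).biUnion (fun u => Finset.Icc (G' u + 1) (F u)), ?_, ?_⟩
  · intro j
    constructor
    · intro hj
      obtain ⟨u, hu, hjIcc⟩ := Finset.mem_biUnion.mp hj
      have huU : (u:ℤ) ≤ U0 := by
        have h := Finset.mem_range.mp hu
        have h2 : u ≤ U0.toNat := by omega
        calc (u:ℤ) ≤ (U0.toNat:ℤ) := by exact_mod_cast h2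
          _ = U0 := hU'cast
      obtain ⟨hjl, hjr⟩ := Finset.mem_Icc.mp hjIcc
      have h1j : 1 ≤ j := by
        by_cases h0 : u = 0
        · rw [h0, hG'0] at hjl; linarith
        · have hp := hGpos u (Nat.one_le_iff_ne_zero.mpr h0)
          rw [hG'eq u h0] at hjl; linarith
      have hjD : j ≤ D := le_trans hjr (hFD u huU)
      refine ⟨h1j, hjD, (u:ℤ), ?_, ?_⟩
      · have hGj : G u + 1 ≤ j := by
          by_cases h0 : u = 0
          · rw [h0] at hjl ⊢
            rw [hG'0] at hjl
            linarith [hG0]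
          · rw [hG'eq u h0] at hjl; exact hjl
        have := (hGiff u huU j).mpr hGj
        linarith
      · have := (hFiff u huU j).mpr hjr
        linarith
    · rintro ⟨h1j, hjD, u, hl, hr⟩
      obtain ⟨hu0, huU0⟩ := hUrange j h1j hjD u hl hr
      have hvcast : ((u.toNat : ℕ):ℤ) = u := Int.toNat_of_nonneg hu0
      have hvU : ((u.toNat : ℕ):ℤ) ≤ U0 := by rw [hvcast]; exact huU0
      have hvlt : u.toNat < U0.toNat + 1 := by
        have : ((u.toNat:ℕ):ℤ) ≤ ((U0.toNat:ℕ):ℤ) := by rw [hU'cast]; exact hvU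
        have := Int.ofNat_le.mp this
        omega
      refine Finset.mem_biUnion.mpr ⟨u.toNat, Finset.mem_range.mpr hvlt, Finset.mem_Icc.mpr ⟨?_, ?_⟩⟩
      · have hGj : G u.toNat + 1 ≤ j := by
          apply (hGiff u.toNat hvU j).mp
          rw [hvcast]; linarith
        by_cases h0 : u.toNat = 0
        · rw [h0, hG'0]; linarith
        · rw [hG'eq _ h0]; exact hGj
      · apply (hFiff u.toNat hvU j).mp
        rw [hvcast]; linarith
  · -- cardinality
    have hdisj : ∀ u ∈ Finset.range (U0.toNat+1), ∀ v ∈ Finset.range (U0.toNat+1), u ≠ v →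
        Disjoint (Finset.Icc (G' u + 1) (F u)) (Finset.Icc (G' v + 1) (F v)) := by
      have hsep : ∀ u v : ℕ, u < v → ∀ x : ℤ, x ∈ Finset.Icc (G' u+1) (F u) →
          x ∉ Finset.Icc (G' v+1) (F v) := by
        intro u v huv x hx hy
        obtain ⟨hx1, hx2⟩ := Finset.mem_Icc.mp hx
        obtain ⟨hy1, hy2⟩ := Finset.mem_Icc.mp hy
        have hv1 : v ≠ 0 := by omega
        have hGv : G' v = G v := hG'eq v hv1
        have hFuGv : F u ≤ G v := by
          have h1 := hGch u
          have h2 := hGmono (u+1) v (by omega)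
          linarith only [h1, h2, hK]
        rw [hGv] at hy1
        linarith only [hx2, hy1, hFuGv]
      intro u hu v hv huv
      rcases Nat.lt_or_ge u v with h | h
      · exact Finset.disjoint_left.mpr (fun {x} hx => hsep u v h x hx)
      · have hvu : v < u := by omega
        exact Finset.disjoint_right.mpr (fun {x} hx => hsep v u hvu x hx)
    rw [Finset.card_biUnion hdisj]
    have hG'F : ∀ u : ℕ, G' u ≤ F u := by
      intro u; by_cases h0 : u = 0
      · rw [h0, hG'0]; linarith [hF0]
      · rw [hG'eq u h0]; exact hGF u
    have hcardZ : ((∑ u ∈ Finset.range (U0.toNat+1), (Finset.Icc (G' u + 1) (F u)).card : ℕ) : ℤ)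
        = ∑ u ∈ Finset.range (U0.toNat+1), (F u - G' u) := by
      have hterm : ∀ u : ℕ, ((Finset.Icc (G' u + 1) (F u)).card : ℤ) = F u - G' u := by
        intro u
        rw [Int.card_Icc, Int.toNat_of_nonneg (by linarith only [hG'F u] : (0:ℤ) ≤ F u + 1 - (G' u + 1))]
        ring
      rw [Nat.cast_sum]
      exact Finset.sum_congr rfl (fun u _ => hterm u)
    rw [hcardZ]
    have htel : ∀ V : ℕ, ∑ u ∈ Finset.range (V+1), (F u - G' u) = F V - 2*(K-AL)*V := by
      intro V
      induction V with
      | zero => simp [hG'0]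
      | succ W ih =>
        rw [Finset.sum_range_succ, ih, hG'eq (W+1) (Nat.succ_ne_zero W), hGch W]
        push_cast; ring
    rw [htel U0.toNat, hU'cast]
    -- final identity
    have hgpU : gp U0.toNat = 2*A - 1 := by
      have hbu : M*(2*((U0.toNat:ℕ):ℤ)+1) = M*B := by rw [hU, hU'cast]
      rw [hgp]; simp only; rw [hbu]; exact hgB
    have hFU : 2*A*(F U0.toNat) = (B-1)*Q + B - A + 1 := by
      rw [hFex U0.toNat, hgpU, hU'cast]
      linear_combination (-Q)*hU
    refine mul_left_cancel₀ (show (A:ℤ) ≠ 0 by linarith) ?_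
    linear_combination hFU + (2*A*(K-AL))*hU + (B-1)*hQB + (B + 2*A*AL + A + M)*hB - hA

set_option maxHeartbeats 1000000 in
/-- Theorem 3.7, Case II `q = 2ak+a+m`: with
`Z = C_{s+1} ∪ ⋯ ∪ C_{s+δ}`, `δ = αq+(a+m)k+(a+2m)/2`, one has
`|Z ∩ (−qZ)| = 4α(aα+a+m)+a+2m`. -/
theorem card_Z1_case_II
    (m a k q n s α δ : ℕ)
    (hm1 : 1 ≤ m) (hmodd : Odd m)
    (ha : a = m ^ 2 + 1)
    (hk : 1 ≤ k)
    (hq : q = 2 * a * k + a + m)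
    (hqodd : Odd q) (hqpp : IsPrimePow q)
    (hn : n = (q ^ 2 + 1) / a)
    (hs : s = (n - 1) / 2)
    (hα1 : 1 ≤ α) (hαk : α ≤ k)
    (hδ : δ = α * q + (a + m) * k + (a + 2 * m) / 2)
    (Z : Set (ZMod n))
    (hZ : Z = {x : ZMod n | ∃ i : ℕ, 1 ≤ i ∧ i ≤ δ ∧
      (x = ((s + i : ℕ) : ZMod n) ∨ x = -((s + i : ℕ) : ZMod n))}) :
    (Z ∩ ((fun x : ZMod n => -(q : ZMod n) * x) '' Z)).ncard =
      4 * α * (a * α + a + m) + a + 2 * m := by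
  obtain ⟨m', hm'⟩ := hmodd
  obtain ⟨q', hq'⟩ := hqodd
  have hapos : 0 < a := by rw [ha]; positivity
  have hq2 : q^2+1 = a * (4*a*k^2 + 4*k*a + 4*k*m + a + 2*m + 1) := by
    rw [hq, ha, hm']; ring
  have hn' : n = 4*a*k^2 + 4*k*a + 4*k*m + a + 2*m + 1 := by
    rw [hn, hq2, Nat.mul_div_cancel_left _ hapos]
  have han : a * n = q^2+1 := by rw [hn']; exact hq2.symm
  have hnodd : n = 2*s + 1 := by
    have h2 : n = 2*(2*a*k^2 + 2*k*a + 2*k*m + 2*m'^2 + 2*m' + m + 1) + 1 := by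
      rw [hn', ha, hm']; ring
    omega
  have hhalf : (a + 2*m)/2 = 2*m'^2 + 2*m' + m + 1 := by
    have h3 : a + 2*m = 2*(2*m'^2 + 2*m' + m + 1) := by rw [ha, hm']; ring
    omega
  have hd' : δ = α*q + (a+m)*k + (2*m'^2 + 2*m' + m + 1) := by rw [hδ, hhalf]
  have hd2 : a*(2*δ+1) = q*(2*a*α + a + m) + 1 := by
    rw [hd', hq, ha, hm']; ring
  have hδ1 : 1 ≤ δ := by
    rw [hd']
    calc 1 ≤ 2*m'^2+2*m'+m + 1 := Nat.le_add_left 1 _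
      _ ≤ α*q + (a+m)*k + (2*m'^2+2*m'+m+1) := Nat.le_add_left _ _
  have hbq : 2*a*α + a + m ≤ q := by
    rw [hq]
    have h5 : 2*a*α ≤ 2*a*k := Nat.mul_le_mul_left (2*a) hαk
    linarith
  have h2dn : 2*δ+1 ≤ n := by
    have h4 : a*(2*δ+1) ≤ a*n := by
      rw [hd2, han]
      have h6 : q*(2*a*α+a+m) ≤ q*q := Nat.mul_le_mul_left q hbq
      have h7 : q*q = q^2 := by ring
      linarith
    exact Nat.le_of_mul_le_mul_left h4 hapos
  -- ℤ versions
  have hn2 : (n:ℤ) = 2*(s:ℤ)+1 := by exact_mod_cast hnodd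
  have hanZ : (a:ℤ)*(n:ℤ) = (q:ℤ)^2+1 := by exact_mod_cast han
  have hδZ : (1:ℤ) ≤ (δ:ℤ) := by exact_mod_cast hδ1
  have h2dnZ : 2*(δ:ℤ)+1 ≤ (n:ℤ) := by exact_mod_cast h2dn
  have hnpos : (0:ℤ) < (n:ℤ) := by linarith
  have hqZ : (q:ℤ) = 2*(q':ℤ)+1 := by exact_mod_cast hq'
  -- core counting
  obtain ⟨T, hT, hTcard⟩ := core_count (m:ℤ) (k:ℤ) (α:ℤ) (a:ℤ) (q:ℤ) (n:ℤ) (δ:ℤ)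
    (2*(a:ℤ)*(α:ℤ) + (a:ℤ) + (m:ℤ)) (m':ℤ)
    (by exact_mod_cast hm') (by exact_mod_cast hm1)
    (by exact_mod_cast ha) (by exact_mod_cast hα1) (by exact_mod_cast hαk)
    (by exact_mod_cast hq) hanZ rfl (by exact_mod_cast hd2)
  -- the parametrization map
  set σf : ℤ → ZMod n := fun j => (((s:ℤ) + j : ℤ) : ZMod n) with hσf
  have hPsym : ∀ j : ℤ,
      (∃ u:ℤ, -(2*(δ:ℤ)-1) ≤ (q:ℤ)*(2*j-1) - 2*u*(n:ℤ) ∧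
        (q:ℤ)*(2*j-1) - 2*u*(n:ℤ) ≤ 2*(δ:ℤ)-1) →
      (∃ u:ℤ, -(2*(δ:ℤ)-1) ≤ (q:ℤ)*(2*(1-j)-1) - 2*u*(n:ℤ) ∧
        (q:ℤ)*(2*(1-j)-1) - 2*u*(n:ℤ) ≤ 2*(δ:ℤ)-1) := by
    rintro j ⟨u, h1, h2⟩
    refine ⟨-u, by linarith, by linarith⟩
  -- Z as an image
  have hZ_eq : Z = σf '' (Set.Icc (1-(δ:ℤ)) (δ:ℤ)) := by
    rw [hZ]
    ext x
    simp only [Set.mem_setOf_eq, Set.mem_image, Set.mem_Icc]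
    constructor
    · rintro ⟨i, hi1, hi2, hx | hx⟩
      · refine ⟨(i:ℤ), ⟨by omega, by omega⟩, ?_⟩
        rw [hx, hσf]
        push_cast
        ring
      · refine ⟨1-(i:ℤ), ⟨by omega, by omega⟩, ?_⟩
        have hkey : (((s:ℤ)+(1-(i:ℤ))) + ((s:ℤ)+(i:ℤ)) : ℤ) = (n:ℤ) := by rw [hn2]; ring
        have h0 : ((((s:ℤ)+(1-(i:ℤ))) + ((s:ℤ)+(i:ℤ)) : ℤ) : ZMod n) = 0 := by
          rw [hkey]; exact_mod_cast ZMod.natCast_self n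
        rw [hx, hσf]
        push_cast at h0 ⊢
        linear_combination h0
    · rintro ⟨j, ⟨hj1, hj2⟩, rfl⟩
      by_cases hjp : 1 ≤ j
      · refine ⟨j.toNat, by omega, by omega, Or.inl ?_⟩
        have hjt : ((j.toNat : ℕ) : ℤ) = j := Int.toNat_of_nonneg (by linarith)
        have h1 : ((s + j.toNat : ℕ) : ℤ) = ((s:ℤ) + j : ℤ) := by push_cast [hjt]; ring
        rw [hσf]
        calc (((s:ℤ) + j : ℤ) : ZMod n) = (((s + j.toNat : ℕ) : ℤ) : ZMod n) := by rw [h1]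
          _ = ((s + j.toNat : ℕ) : ZMod n) := by push_cast; ring
      · push_neg at hjp
        refine ⟨(1-j).toNat, by omega, by omega, Or.inr ?_⟩
        have hcast : (((1-j).toNat : ℕ) : ℤ) = 1 - j := Int.toNat_of_nonneg (by linarith)
        have hkey : (((s:ℤ)+j) + ((s:ℤ)+(((1-j).toNat : ℕ):ℤ)) : ℤ) = (n:ℤ) := by
          rw [hcast, hn2]; ring
        have h0 : ((((s:ℤ)+j) + ((s:ℤ)+(((1-j).toNat : ℕ):ℤ)) : ℤ) : ZMod n) = 0 := by
          rw [hkey]; exact_mod_cast ZMod.natCast_self n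
        rw [hσf]
        push_cast at h0 ⊢
        linear_combination h0
  -- injectivity
  have hinj : Set.InjOn σf (Set.Icc (1-(δ:ℤ)) (δ:ℤ)) := by
    intro j hj j' hj' h
    simp only [Set.mem_Icc] at hj hj'
    have h' : (((s:ℤ)+j : ℤ) : ZMod n) = (((s:ℤ)+j' : ℤ) : ZMod n) := h
    have h0 : ((j - j' : ℤ) : ZMod n) = 0 := by
      push_cast at h' ⊢
      linear_combination h'
    have hdvd := (ZMod.intCast_zmod_eq_zero_iff_dvd _ n).mp h0
    have hz : j - j' = 0 := Int.eq_zero_of_abs_lt_dvd hdvd (by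
      rw [abs_lt]
      constructor <;> linarith [hj.1, hj.2, hj'.1, hj'.2])
    linarith
  -- the divisibility characterization
  have hσ_iff : ∀ j j' : ℤ, (σf j = -(q:ZMod n) * σf j') ↔
      (n:ℤ) ∣ ((s:ℤ)+j) + (q:ℤ)*((s:ℤ)+j') := by
    intro j j'
    rw [hσf]
    simp only
    rw [← ZMod.intCast_zmod_eq_zero_iff_dvd]
    constructor
    · intro h
      push_cast at h ⊢
      linear_combination h
    · intro h
      push_cast at h ⊢
      linear_combination h
  -- Z₁ as an image
  have hZ1 : Z ∩ ((fun x : ZMod n => -(q:ZMod n) * x) '' Z)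
      = σf '' {j : ℤ | (1-(δ:ℤ) ≤ j ∧ j ≤ (δ:ℤ)) ∧ ∃ u:ℤ,
          -(2*(δ:ℤ)-1) ≤ (q:ℤ)*(2*j-1) - 2*u*(n:ℤ) ∧
          (q:ℤ)*(2*j-1) - 2*u*(n:ℤ) ≤ 2*(δ:ℤ)-1} := by
    rw [hZ_eq]
    ext x
    simp only [Set.mem_inter_iff, Set.mem_image, Set.mem_Icc, Set.mem_setOf_eq]
    constructor
    · rintro ⟨⟨j, hj, rfl⟩, ⟨y, ⟨j', hj', rfl⟩, hxy⟩⟩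
      have hdd : (n:ℤ) ∣ ((s:ℤ)+j) + (q:ℤ)*((s:ℤ)+j') := (hσ_iff j j').mp hxy.symm
      obtain ⟨c0, hc0⟩ := hdd
      have hc : (q:ℤ)*(2*j-1) - (2*j'-1)
          = (n:ℤ)*((q:ℤ)*(2*c0 - 1 - (q:ℤ)) - (a:ℤ)*(2*j'-1)) := by
        linear_combination 2*(q:ℤ)*hc0 + (2*j'-1)*hanZ + ((q:ℤ)+(q:ℤ)^2)*hn2
      set c : ℤ := (q:ℤ)*(2*c0 - 1 - (q:ℤ)) - (a:ℤ)*(2*j'-1) with hcdef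
      have hw : (n:ℤ)*c = 2*(2*(q':ℤ)*j - (q':ℤ) + j - j') := by
        rw [← hc, hqZ]; ring
      have hcev : c = 2*((2*(q':ℤ)*j - (q':ℤ) + j - j') - (s:ℤ)*c) := by
        have h9 : (2*(s:ℤ)+1)*c = 2*(2*(q':ℤ)*j - (q':ℤ) + j - j') := by
          rw [← hn2]; exact hw
        linarith
      refine ⟨j, ⟨hj, ⟨(2*(q':ℤ)*j - (q':ℤ) + j - j') - (s:ℤ)*c, ?_, ?_⟩⟩, rfl⟩
      · have h10 : (q:ℤ)*(2*j-1) - 2*((2*(q':ℤ)*j - (q':ℤ) + j - j') - (s:ℤ)*c)*(n:ℤ)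
            = 2*j'-1 := by
          have h11 : 2*((2*(q':ℤ)*j - (q':ℤ) + j - j') - (s:ℤ)*c)*(n:ℤ) = (n:ℤ)*c := by
            linear_combination (n:ℤ)*hcev.symm
          linarith [hc]
        rw [h10]; linarith [hj'.1]
      · have h10 : (q:ℤ)*(2*j-1) - 2*((2*(q':ℤ)*j - (q':ℤ) + j - j') - (s:ℤ)*c)*(n:ℤ)
            = 2*j'-1 := by
          have h11 : 2*((2*(q':ℤ)*j - (q':ℤ) + j - j') - (s:ℤ)*c)*(n:ℤ) = (n:ℤ)*c := by
            linear_combination (n:ℤ)*hcev.symm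
          linarith [hc]
        rw [h10]; linarith [hj'.2]
    · rintro ⟨j, ⟨⟨hj1, hj2⟩, u, hu1, hu2⟩, rfl⟩
      refine ⟨⟨j, ⟨hj1, hj2⟩, rfl⟩, ?_⟩
      set j' : ℤ := (q:ℤ)*j - (q':ℤ) - u*(n:ℤ) with hj'def
      have ht' : 2*j' - 1 = (q:ℤ)*(2*j-1) - 2*u*(n:ℤ) := by
        rw [hj'def, hqZ]; ring
      refine ⟨σf j', ⟨j', ⟨by linarith, by linarith⟩, rfl⟩, ?_⟩
      have h2X : 2*(((s:ℤ)+j) + (q:ℤ)*((s:ℤ)+j'))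
          = (n:ℤ)*(1 + (q:ℤ) + (2*j-1)*(a:ℤ) - 2*u*(q:ℤ)) := by
        rw [hj'def]
        linear_combination (-(2*j-1))*hanZ - (1+(q:ℤ))*hn2 + (q:ℤ)*hqZ
      have hdvd : (n:ℤ) ∣ ((s:ℤ)+j) + (q:ℤ)*((s:ℤ)+j') := by
        refine ⟨((s:ℤ)+1)*(1 + (q:ℤ) + (2*j-1)*(a:ℤ) - 2*u*(q:ℤ))
          - (((s:ℤ)+j) + (q:ℤ)*((s:ℤ)+j')), ?_⟩
        linear_combination (((s:ℤ)+j) + (q:ℤ)*((s:ℤ)+j'))*hn2 + ((s:ℤ)+1)*h2X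
      exact ((hσ_iff j j').mpr hdvd).symm
  -- the index set equals the coerced finset
  have hsetT : {j : ℤ | (1-(δ:ℤ) ≤ j ∧ j ≤ (δ:ℤ)) ∧ ∃ u:ℤ,
          -(2*(δ:ℤ)-1) ≤ (q:ℤ)*(2*j-1) - 2*u*(n:ℤ) ∧
          (q:ℤ)*(2*j-1) - 2*u*(n:ℤ) ≤ 2*(δ:ℤ)-1}
      = ↑(T ∪ T.image (fun j => 1 - j)) := by
    ext j
    simp only [Set.mem_setOf_eq, Finset.coe_union, Set.mem_union, Finset.mem_coe,
      Finset.mem_image]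
    constructor
    · rintro ⟨⟨hj1, hj2⟩, hu⟩
      by_cases hp : 1 ≤ j
      · exact Or.inl ((hT j).mpr ⟨hp, hj2, hu⟩)
      · push_neg at hp
        refine Or.inr ⟨1-j, (hT (1-j)).mpr ⟨by linarith, by linarith, hPsym j hu⟩, by ring⟩
    · rintro (hj | ⟨j0, hj0, rfl⟩)
      · obtain ⟨h1, h2, hu⟩ := (hT j).mp hj
        exact ⟨⟨by linarith, h2⟩, hu⟩
      · obtain ⟨h1, h2, hu⟩ := (hT j0).mp hj0
        exact ⟨⟨by linarith, by linarith⟩, hPsym j0 hu⟩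
  -- compute the cardinality
  rw [hZ1, hsetT]
  have hsub : ↑(T ∪ T.image (fun j => 1-j)) ⊆ Set.Icc (1-(δ:ℤ)) (δ:ℤ) := by
    intro j hj
    simp only [Finset.coe_union, Set.mem_union, Finset.mem_coe, Finset.mem_image] at hj
    simp only [Set.mem_Icc]
    rcases hj with hj | ⟨j0, hj0, rfl⟩
    · obtain ⟨h1, h2, -⟩ := (hT j).mp hj
      exact ⟨by linarith, h2⟩
    · obtain ⟨h1, h2, -⟩ := (hT j0).mp hj0
      exact ⟨by linarith, by linarith⟩
  rw [Set.ncard_image_of_injOn (hinj.mono hsub), Set.ncard_coe_finset]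
  have hdisjTT : Disjoint T (T.image (fun j => 1-j)) := by
    rw [Finset.disjoint_left]
    intro j hjT hjI
    obtain ⟨j0, hj0, hj0e⟩ := Finset.mem_image.mp hjI
    have h1 := ((hT j).mp hjT).1
    have h2 := ((hT j0).mp hj0).1
    omega
  rw [Finset.card_union_of_disjoint hdisjTT,
    Finset.card_image_of_injective _ (sub_right_injective : Function.Injective (fun j : ℤ => 1-j))]
  have hfin : ((T.card + T.card : ℕ) : ℤ) = ((4*α*(a*α+a+m)+a+2*m : ℕ) : ℤ) := by
    push_cast
    push_cast at hTcard
    linarith [hTcard]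
  exact_mod_cast hfin
end
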